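/- arXiv:2009.04036 — 12 statements merged into one kernel-verified Lean document; each statement's English description precedes it below -/
import Mathlib

section
/- The velocities of any solution remain uniformly bounded: max_i |v_i(t)|^p ≤ max( max_i |v_i(0)|^p , max_i θ_i(0) ) for all t ≥ 0. In particular there is a constant C, depending only on the initial data and the parameters of the system, such that max_i |v_i(t)| ≤ C for all t ≥ 0. -/
/-!
A maximum principle for finite families: if `F i` can only decrease at an index where it is
maximal and above `c`, then `max_i F i` never rises above `c`. It follows from the fencing
theorem `image_le_of_liminf_slope_right_lt_deriv_boundary` applied to `max_i F i`, whose right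
slopes are controlled by the derivatives of the maximising `F i`.

For the parameters, the consensus term `∑ m_j φ (θ_j - θ_i)` is nonpositive at a maximal `θ_i`,
so `θ_i(t) ≤ max_j θ_j(0)`. For the velocities, at an agent of maximal speed the alignment term
satisfies `⟪v_i, v_j - v_i⟫ ≤ |v_i| |v_j| - |v_i|² ≤ 0`, and once `|v_i|^p` exceeds
`max_j θ_j(0) ≥ θ_i` the Rayleigh friction is dissipative too.
-/

open Filter Topology Finset Real

section MaxPrinciple

variable {ι : Type*} [Fintype ι]

theorem eventually_slope_sup'_lt [Nonempty ι] {F : ι → ℝ → ℝ} {F' : ι → ℝ} {x r : ℝ}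
    (hF : ∀ i, HasDerivAt (F i) (F' i) x)
    (hr : ∀ i, F i x = univ.sup' univ_nonempty (F · x) → F' i < r) :
    ∀ᶠ z in 𝓝[>] x, slope (fun t ↦ univ.sup' univ_nonempty (F · t)) x z < r := by
  set g : ℝ → ℝ := fun t ↦ univ.sup' univ_nonempty (F · t)
  have below : ∀ i, ∀ᶠ z in 𝓝[>] x, F i z < g x + r * (z - x) := by
    intro i
    rcases (le_sup' (F · x) (mem_univ i)).eq_or_lt with hmax | hlt
    · filter_upwards [(hF i).hasDerivWithinAt.limsup_slope_le' (s := Set.Ioi x) (lt_irrefl x)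
        (hr i hmax), self_mem_nhdsWithin] with z hz hxz
      rw [slope_def_field, div_lt_iff₀ (sub_pos.2 hxz)] at hz
      change F i x = g x at hmax
      linarith
    · have hlim : Tendsto (fun z ↦ g x + r * (z - x)) (𝓝[>] x) (𝓝 (g x + r * (x - x))) :=
        (Continuous.tendsto (by fun_prop) x).mono_left nhdsWithin_le_nhds
      rw [sub_self, mul_zero, add_zero] at hlim
      exact ((hF i).continuousAt.tendsto.mono_left nhdsWithin_le_nhds).eventually_lt hlim hlt
  filter_upwards [eventually_all.2 below, self_mem_nhdsWithin] with z hz hxz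
  rw [slope_def_field, div_lt_iff₀ (sub_pos.2 hxz)]
  have : g z < g x + r * (z - x) := (sup'_lt_iff _).2 fun i _ ↦ hz i
  linarith

theorem le_of_hasDerivAt_nonpos_at_max {F F' : ι → ℝ → ℝ} {a c : ℝ}
    (hF : ∀ i t, a ≤ t → HasDerivAt (F i) (F' i t) t) (ha : ∀ i, F i a ≤ c)
    (hmax : ∀ i t, a ≤ t → (∀ j, F j t ≤ F i t) → c < F i t → F' i t ≤ 0) :
    ∀ i t, a ≤ t → F i t ≤ c := by
  intro i t ht
  have : Nonempty ι := ⟨i⟩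
  set g : ℝ → ℝ := fun t ↦ univ.sup' univ_nonempty (F · t)
  have fence : ∀ ε > 0, g t ≤ c + ε * (t - a + 1) := by
    intro ε hε
    -- `f'` bounds the lower right Dini derivative of `g`; above `c` it may be taken to be `0`.
    refine image_le_of_liminf_slope_right_lt_deriv_boundary (f := g)
      (B := fun x ↦ c + ε * (x - a + 1)) (B' := fun _ ↦ ε)
      (f' := fun x ↦ if c < g x then 0 else univ.sup' univ_nonempty (F' · x))
      (ContinuousOn.finset_sup'_apply _ fun i _ x hx ↦
        (hF i x hx.1).continuousAt.continuousWithinAt) ?_ ?_ ?_ ?_ ⟨ht, le_rfl⟩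
    · intro x hx r hr
      refine (eventually_slope_sup'_lt (fun i ↦ hF i x hx.1) fun j hj ↦ ?_).frequently
      split_ifs at hr with hcx
      · exact (hmax j x hx.1 (fun k ↦ hj ▸ le_sup' (F · x) (mem_univ k)) (hj ▸ hcx)).trans_lt hr
      · exact (le_sup' (F' · x) (mem_univ j)).trans_lt hr
    · simp only [sub_self, zero_add, mul_one]
      exact (sup'_le _ _ fun i _ ↦ ha i).trans (le_add_of_nonneg_right hε.le)
    · intro x
      simpa using (((hasDerivAt_id x).sub_const a).add_const 1).const_mul ε |>.const_add c
    · intro x hx hgx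
      have : c < g x := by rw [hgx]; nlinarith [hx.1]
      simpa [this] using hε
  refine (le_sup' (F · t) (mem_univ i)).trans (le_of_forall_pos_le_add fun δ hδ ↦ ?_)
  have hK : 0 < t - a + 1 := by linarith
  simpa [div_mul_cancel₀ _ hK.ne'] using fence (δ / (t - a + 1)) (div_pos hδ hK)

end MaxPrinciple

section Dissipation

open scoped InnerProductSpace

variable {E : Type*} [NormedAddCommGroup E] [InnerProductSpace ℝ E] {ι : Type*}

theorem inner_sum_smul_sub_nonpos (s : Finset ι) {w : ι → ℝ} {u : ι → E} {a : E}
    (hw : ∀ j ∈ s, 0 ≤ w j) (hu : ∀ j ∈ s, ‖u j‖ ≤ ‖a‖) :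
    ⟪a, ∑ j ∈ s, w j • (u j - a)⟫_ℝ ≤ 0 := by
  rw [inner_sum]
  refine sum_nonpos fun j hj ↦ ?_
  rw [real_inner_smul_right, inner_sub_right, real_inner_self_eq_norm_sq]
  refine mul_nonpos_of_nonneg_of_nonpos (hw j hj) (sub_nonpos.2 ?_)
  calc ⟪a, u j⟫_ℝ ≤ ‖a‖ * ‖u j‖ := real_inner_le_norm a (u j)
    _ ≤ ‖a‖ ^ 2 := by rw [sq]; exact mul_le_mul_of_nonneg_left (hu j hj) (norm_nonneg a)

theorem inner_alignment_add_friction_nonpos (s : Finset ι) {w : ι → ℝ} {u : ι → E} {a : E}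
    {σ θ p : ℝ} (hw : ∀ j ∈ s, 0 ≤ w j) (hu : ∀ j ∈ s, ‖u j‖ ≤ ‖a‖) (hσ : 0 ≤ σ)
    (hθ : θ ≤ ‖a‖ ^ p) :
    ⟪a, ∑ j ∈ s, w j • (u j - a) + (σ * (θ - ‖a‖ ^ p)) • a⟫_ℝ ≤ 0 := by
  rw [inner_add_right, real_inner_smul_right, real_inner_self_eq_norm_sq]
  exact add_nonpos (inner_sum_smul_sub_nonpos s hw hu)
    (mul_nonpos_of_nonpos_of_nonneg (mul_nonpos_of_nonneg_of_nonpos hσ (sub_nonpos.2 hθ))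
      (sq_nonneg _))

end Dissipation

theorem velocity_upper_bound_general
    {n N : ℕ}
    (m : Fin N → ℝ) (hm : ∀ j, 0 < m j)
    (φ : ℝ → ℝ)
    (hφpos : ∀ r, 0 ≤ r → 0 < φ r)
    {σ p κ : ℝ} (hσ : 0 < σ) (hp : 0 < p) (hκ : 0 ≤ κ)
    (x v : Fin N → ℝ → EuclideanSpace ℝ (Fin (n + 1)))
    (θ : Fin N → ℝ → ℝ)
    (hv : ∀ i t, 0 ≤ t → HasDerivAt (v i)
      ((∑ j, (m j * φ ‖x i t - x j t‖) • (v j t - v i t))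
        + (σ * (θ i t - ‖v i t‖ ^ p)) • v i t) t)
    (hθode : ∀ i t, 0 ≤ t → HasDerivAt (θ i)
      (κ * ∑ j, m j * φ ‖x i t - x j t‖ * (θ j t - θ i t)) t) :
    (∀ i, ∀ t, 0 ≤ t →
      ‖v i t‖ ^ p ≤ max (⨆ j, ‖v j 0‖ ^ p) (⨆ j, θ j 0)) ∧
    ∃ C : ℝ, ∀ i, ∀ t, 0 ≤ t → ‖v i t‖ ≤ C := by
  set Ms := max (⨆ j, ‖v j 0‖ ^ p) (⨆ j, θ j 0)
  have hMs : 0 ≤ Ms := (Real.iSup_nonneg fun j ↦ by positivity).trans (le_max_left _ _)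
  have hweight : ∀ i t j, 0 ≤ m j * φ ‖x i t - x j t‖ :=
    fun i t j ↦ mul_nonneg (hm j).le (hφpos _ (norm_nonneg _)).le
  have hθ : ∀ i t, 0 ≤ t → θ i t ≤ ⨆ j, θ j 0 :=
    le_of_hasDerivAt_nonpos_at_max hθode (le_ciSup (Finite.bddAbove_range _))
      fun i t _ hmax _ ↦ mul_nonpos_of_nonneg_of_nonpos hκ <| sum_nonpos fun j _ ↦
        mul_nonpos_of_nonneg_of_nonpos (hweight i t j) (sub_nonpos.2 (hmax j))
  -- The maximum principle is run on `‖v i‖ ^ 2`, which is differentiable even where `v i = 0`.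
  have hsq : ∀ r : ℝ, 0 ≤ r → (r ^ 2 ≤ (Ms ^ p⁻¹) ^ 2 ↔ r ^ p ≤ Ms) := fun r hr ↦
    (pow_le_pow_iff_left₀ hr (by positivity) two_ne_zero).trans
      (Real.le_rpow_inv_iff_of_pos hr hMs hp)
  have hbound : ∀ i t, 0 ≤ t → ‖v i t‖ ^ p ≤ Ms := by
    refine fun i t ht ↦ (hsq _ (norm_nonneg _)).1 <|
      le_of_hasDerivAt_nonpos_at_max (fun i t ht ↦ (hv i t ht).norm_sq)
        (fun i ↦ (hsq _ (norm_nonneg _)).2 ((le_ciSup (f := fun j ↦ ‖v j 0‖ ^ p)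
          (Finite.bddAbove_range _) i).trans
          (le_max_left _ _))) (fun i t ht hmax hc ↦ ?_) i t ht
    have hθv : θ i t ≤ ‖v i t‖ ^ p :=
      ((hθ i t ht).trans (le_max_right _ _)).trans
        (not_le.1 fun h ↦ hc.not_ge ((hsq _ (norm_nonneg _)).2 h)).le
    exact mul_nonpos_of_nonneg_of_nonpos two_pos.le <| inner_alignment_add_friction_nonpos _
      (fun j _ ↦ hweight i t j)
      (fun j _ ↦ (pow_le_pow_iff_left₀ (norm_nonneg _) (norm_nonneg _) two_ne_zero).1 (hmax j))
      hσ.le hθv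
  exact ⟨hbound, Ms ^ p⁻¹, fun i t ht ↦
    (Real.le_rpow_inv_iff_of_pos (norm_nonneg _) hMs hp).2 (hbound i t ht)⟩

/-- Velocities of any solution remain uniformly bounded:
`max_i |v_i(t)|^p ≤ max(max_i |v_i(0)|^p, max_i θ_i(0))` for all `t ≥ 0`; in particular
there is a constant `C` with `max_i |v_i(t)| ≤ C` for all `t ≥ 0`. -/
theorem velocity_upper_bound
    {n N : ℕ}
    (m : Fin N → ℝ) (hm : ∀ j, 0 < m j)
    (φ : ℝ → ℝ) (hφc : Continuous φ)
    (hφpos : ∀ r, 0 ≤ r → 0 < φ r)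
    (hφanti : AntitoneOn φ (Set.Ici 0))
    (hφbdd : ∃ Cφ : ℝ, ∀ r, 0 ≤ r → φ r ≤ Cφ)
    {σ p κ : ℝ} (hσ : 0 < σ) (hp : 0 < p) (hκ : 0 ≤ κ)
    (x v : Fin N → ℝ → EuclideanSpace ℝ (Fin (n + 1)))
    (θ : Fin N → ℝ → ℝ)
    (hθpos : ∀ i t, 0 ≤ t → 0 < θ i t)
    (hx : ∀ i t, 0 ≤ t → HasDerivAt (x i) (v i t) t)
    (hv : ∀ i t, 0 ≤ t → HasDerivAt (v i)
      ((∑ j, (m j * φ ‖x i t - x j t‖) • (v j t - v i t))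
        + (σ * (θ i t - ‖v i t‖ ^ p)) • v i t) t)
    (hθode : ∀ i t, 0 ≤ t → HasDerivAt (θ i)
      (κ * ∑ j, m j * φ ‖x i t - x j t‖ * (θ j t - θ i t)) t) :
    (∀ i, ∀ t, 0 ≤ t →
      ‖v i t‖ ^ p ≤ max (⨆ j, ‖v j 0‖ ^ p) (⨆ j, θ j 0)) ∧
    ∃ C : ℝ, ∀ i, ∀ t, 0 ≤ t → ‖v i t‖ ≤ C :=
  velocity_upper_bound_general m hm φ hφpos hσ hp hκ x v θ hv hθode
end

section
/- (Sectorial Maximum Principle) Let F be a family of linear functionals on ℝⁿ and let Σ_F = ∩_{ℓ∈F} { v ∈ ℝⁿ : ℓ(v) ≥ 0 } be the corresponding closed sector. If the initial velocities satisfy v_i(0) ∈ Σ_F for every i = 1,…,N, then v_i(t) ∈ Σ_F for every i and every t ≥ 0. -/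
/-!
Fix `ℓ` and put `u i = ℓ (v i)`. Then `u i' = ∑ j, m j φ(|x i - x j|) (u j - u i) + c i u i` with
friction coefficient `c i = σ (θ i - |v i|^p) ≤ σ Θ`, where `Θ` bounds the continuous `θ` on `[0, T]`.
At an index realising `min_j u j ≤ 0` the alignment sum is nonnegative, so `u i' ≥ σ Θ u i`. Hence
`f = max (0, -min_i u i)` has upper right Dini derivative at most `σ Θ f`, and Grönwall's
inequality with `f 0 = 0` gives `f = 0` on `[0, T]`.
-/

open Filter Topology Finset Real

theorem slope_lt_iff_lt_add_mul {g : ℝ → ℝ} {t z r : ℝ} (hz : t < z) :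
    slope g t z < r ↔ g z < g t + (z - t) * r := by
  rw [slope_def_field, div_lt_iff₀ (sub_pos.2 hz)]
  constructor <;> intro h <;> linarith

theorem Finset.eventually_slope_sup'_lt {ι : Type*} {s : Finset ι} (hs : s.Nonempty)
    {g : ι → ℝ → ℝ} {g' : ι → ℝ} {t r : ℝ}
    (hg : ∀ i ∈ s, HasDerivWithinAt (g i) (g' i) (Set.Ici t) t)
    (hr : ∀ i ∈ s, g i t = s.sup' hs (g · t) → g' i < r) :
    ∀ᶠ z in 𝓝[>] t, slope (fun z => s.sup' hs (g · z)) t z < r := by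
  have key : ∀ i ∈ s, ∀ᶠ z in 𝓝[>] t, g i z < s.sup' hs (g · t) + (z - t) * r := by
    intro i hi
    rcases (s.le_sup' (g · t) hi).lt_or_eq with hlt | heq
    · have hcont : ContinuousWithinAt (fun z => g i z - (z - t) * r) (Set.Ioi t) t :=
        (hg i hi).Ioi_of_Ici.continuousWithinAt.sub (by fun_prop)
      filter_upwards [hcont.eventually (eventually_lt_nhds (by simpa using hlt))] with z hz
      linarith
    · filter_upwards [(hg i hi).Ioi_of_Ici.limsup_slope_le' (lt_irrefl t) (hr i hi heq),
        self_mem_nhdsWithin] with z hz hzt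
      rwa [slope_lt_iff_lt_add_mul hzt, heq] at hz
  filter_upwards [(s.eventually_all).2 key, self_mem_nhdsWithin] with z hz hzt
  exact (slope_lt_iff_lt_add_mul hzt).2 ((s.sup'_lt_iff hs).2 hz)

theorem nonneg_of_mul_le_deriv_at_min {ι : Type*} [Fintype ι] {u u' : ι → ℝ → ℝ} {K a b : ℝ}
    (hu : ∀ i, ∀ t ∈ Set.Ico a b, HasDerivWithinAt (u i) (u' i t) (Set.Ici t) t)
    (hcont : ∀ i, ContinuousOn (u i) (Set.Icc a b))
    (ha : ∀ i, 0 ≤ u i a)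
    (hmin : ∀ i, ∀ t ∈ Set.Ico a b, (∀ j, u i t ≤ u j t) → u i t ≤ 0 → K * u i t ≤ u' i t) :
    ∀ i, ∀ t ∈ Set.Icc a b, 0 ≤ u i t := by
  -- `f t = max (0, -min_i u i t)`, written as a maximum over `Option ι` with `none ↦ 0`
  let g : Option ι → ℝ → ℝ := fun o t => o.elim 0 (fun i => -u i t)
  let f : ℝ → ℝ := fun t => univ.sup' univ_nonempty (g · t)
  have hg_le : ∀ o t, g o t ≤ f t := fun o t => univ.le_sup' (g · t) (mem_univ o)
  have hf_nonneg : ∀ t, 0 ≤ f t := fun t => hg_le none t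
  have hneg_le : ∀ i t, -u i t ≤ f t := fun i t => hg_le (some i) t
  have hf_cont : ContinuousOn f (Set.Icc a b) :=
    ContinuousOn.finset_sup'_apply univ_nonempty fun o _ => by
      cases o with
      | none => exact continuousOn_const
      | some i => exact (hcont i).neg
  have hf_a : f a ≤ 0 := by
    refine Finset.sup'_le _ _ fun o _ => ?_
    cases o with
    | none => exact le_rfl
    | some i => exact neg_nonpos.2 (ha i)
  have hf_dini : ∀ t ∈ Set.Ico a b, ∀ r, K * f t < r →
      ∃ᶠ z in 𝓝[>] t, (z - t)⁻¹ * (f z - f t) < r := by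
    intro t ht r hr
    refine (univ.eventually_slope_sup'_lt univ_nonempty (g' := fun o => o.elim 0 (-u' · t))
      (fun o _ => ?_) (fun o _ hact => ?_)).frequently
    · cases o with
      | none => exact hasDerivWithinAt_const _ _ _
      | some i => exact (hu i t ht).neg
    · cases o with
      | none =>
        change 0 = f t at hact
        simpa [← hact] using hr
      | some i =>
        change -u i t = f t at hact
        have hmin_i : ∀ j, u i t ≤ u j t := fun j => by linarith [hneg_le j t]
        have hneg : u i t ≤ 0 := by linarith [hf_nonneg t]
        have hderiv := hmin i t ht hmin_i hneg
        change -u' i t < r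
        rw [← hact] at hr
        linarith
  have hf_nonpos := le_gronwallBound_of_liminf_deriv_right_le hf_cont hf_dini hf_a
    (fun t _ => (add_zero _).ge)
  intro i t ht
  have hft := hf_nonpos t ht
  rw [gronwallBound_ε0_δ0] at hft
  linarith [hneg_le i t]

theorem mul_le_sum_mul_sub_add_mul {ι : Type*} {s : Finset ι} {a u : ι → ℝ} {i : ι} {c K : ℝ}
    (ha : ∀ j ∈ s, 0 ≤ a j) (hmin : ∀ j ∈ s, u i ≤ u j) (hu : u i ≤ 0) (hc : c ≤ K) :
    K * u i ≤ ∑ j ∈ s, a j * (u j - u i) + c * u i := by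
  have hsum : 0 ≤ ∑ j ∈ s, a j * (u j - u i) :=
    sum_nonneg fun j hj => mul_nonneg (ha j hj) (sub_nonneg.2 (hmin j hj))
  linarith [mul_le_mul_of_nonpos_right hc hu]

theorem IsCompact.exists_forall_le_of_continuousOn {ι X : Type*} [Fintype ι]
    [TopologicalSpace X] {s : Set X} (hs : IsCompact s) {f : ι → X → ℝ}
    (hf : ∀ i, ContinuousOn (f i) s) : ∃ C, ∀ i, ∀ x ∈ s, f i x ≤ C := by
  obtain ⟨C, hC⟩ := hs.exists_bound_of_continuousOn (continuousOn_pi.2 hf)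
  exact ⟨C, fun i x hx =>
    (le_abs_self _).trans ((norm_le_pi_norm (fun j => f j x) i).trans (hC x hx))⟩

theorem HasDerivAt.linearMap_comp {E F : Type*} [NormedAddCommGroup E] [NormedSpace ℝ E]
    [FiniteDimensional ℝ E] [NormedAddCommGroup F] [NormedSpace ℝ F] (ℓ : E →ₗ[ℝ] F)
    {f : ℝ → E} {f' : E} {t : ℝ} (hf : HasDerivAt f f' t) :
    HasDerivAt (fun s => ℓ (f s)) (ℓ f') t :=
  (LinearMap.toContinuousLinearMap ℓ).hasFDerivAt.comp_hasDerivAt t hf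

theorem sectorial_maximum_principle_general
    {n N : ℕ}
    (m : Fin N → ℝ) (hm : ∀ j, 0 < m j)
    (φ : ℝ → ℝ)
    (hφpos : ∀ r, 0 ≤ r → 0 < φ r)
    {σ p κ : ℝ} (hσ : 0 < σ)
    (x v : Fin N → ℝ → EuclideanSpace ℝ (Fin (n + 1)))
    (θ : Fin N → ℝ → ℝ)
    (hv : ∀ i t, 0 ≤ t → HasDerivAt (v i)
      ((∑ j, (m j * φ ‖x i t - x j t‖) • (v j t - v i t))
        + (σ * (θ i t - ‖v i t‖ ^ p)) • v i t) t)
    (hθode : ∀ i t, 0 ≤ t → HasDerivAt (θ i)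
      (κ * ∑ j, m j * φ ‖x i t - x j t‖ * (θ j t - θ i t)) t)
    (F : Set (EuclideanSpace ℝ (Fin (n + 1)) →ₗ[ℝ] ℝ))
    (h0 : ∀ i, ∀ ℓ ∈ F, 0 ≤ ℓ (v i 0)) :
    ∀ i, ∀ t, 0 ≤ t → ∀ ℓ ∈ F, 0 ≤ ℓ (v i t) := by
  intro i T hT ℓ hℓ
  obtain ⟨Θ, hΘ⟩ := isCompact_Icc.exists_forall_le_of_continuousOn (s := Set.Icc 0 T)
    fun j t ht => (hθode j t ht.1).continuousAt.continuousWithinAt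
  have hu : ∀ j t, 0 ≤ t → HasDerivAt (fun s => ℓ (v j s))
      (∑ k, (m k * φ ‖x j t - x k t‖) * (ℓ (v k t) - ℓ (v j t))
        + σ * (θ j t - ‖v j t‖ ^ p) * ℓ (v j t)) t := fun j t ht => by
    simpa only [map_add, map_sum, map_smul, map_sub, smul_eq_mul]
      using (hv j t ht).linearMap_comp ℓ
  have hfriction : ∀ j, ∀ t ∈ Set.Icc 0 T, σ * (θ j t - ‖v j t‖ ^ p) ≤ σ * Θ := fun j t ht =>
    mul_le_mul_of_nonneg_left ((sub_le_self _ (by positivity)).trans (hΘ j t ht)) hσ.le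
  refine nonneg_of_mul_le_deriv_at_min (K := σ * Θ)
    (fun j t ht => (hu j t ht.1).hasDerivWithinAt)
    (fun j t ht => (hu j t ht.1).continuousAt.continuousWithinAt) (fun j => h0 j ℓ hℓ)
    (fun j t ht hmin hneg => mul_le_sum_mul_sub_add_mul (u := fun k => ℓ (v k t))
      (fun k _ => (mul_pos (hm k) (hφpos _ (norm_nonneg _))).le) (fun k _ => hmin k) hneg
      (hfriction j t (Set.Ico_subset_Icc_self ht))) i T ⟨hT, le_rfl⟩

/-- Sectorial Maximum Principle: if all initial velocities lie in the closed sector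
`Σ_F = ∩_{ℓ ∈ F} {v : ℓ(v) ≥ 0}` determined by a family `F` of linear functionals, then
the velocities remain in `Σ_F` for all times. -/
theorem sectorial_maximum_principle
    {n N : ℕ}
    (m : Fin N → ℝ) (hm : ∀ j, 0 < m j)
    (φ : ℝ → ℝ) (hφc : Continuous φ)
    (hφpos : ∀ r, 0 ≤ r → 0 < φ r)
    (hφanti : AntitoneOn φ (Set.Ici 0))
    (hφbdd : ∃ Cφ : ℝ, ∀ r, 0 ≤ r → φ r ≤ Cφ)
    {σ p κ : ℝ} (hσ : 0 < σ) (hp : 0 < p) (hκ : 0 ≤ κ)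
    (x v : Fin N → ℝ → EuclideanSpace ℝ (Fin (n + 1)))
    (θ : Fin N → ℝ → ℝ)
    (hθpos : ∀ i t, 0 ≤ t → 0 < θ i t)
    (hx : ∀ i t, 0 ≤ t → HasDerivAt (x i) (v i t) t)
    (hv : ∀ i t, 0 ≤ t → HasDerivAt (v i)
      ((∑ j, (m j * φ ‖x i t - x j t‖) • (v j t - v i t))
        + (σ * (θ i t - ‖v i t‖ ^ p)) • v i t) t)
    (hθode : ∀ i t, 0 ≤ t → HasDerivAt (θ i)
      (κ * ∑ j, m j * φ ‖x i t - x j t‖ * (θ j t - θ i t)) t)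
    (F : Set (EuclideanSpace ℝ (Fin (n + 1)) →ₗ[ℝ] ℝ))
    (h0 : ∀ i, ∀ ℓ ∈ F, 0 ≤ ℓ (v i 0)) :
    ∀ i, ∀ t, 0 ≤ t → ∀ ℓ ∈ F, 0 ≤ ℓ (v i t) :=
  sectorial_maximum_principle_general m hm φ hφpos hσ x v θ hv hθode F h0
end

section
/- (Grassmannian projection inequality) Suppose u·e_n > 0 and w·e_n > 0. Then P u ≠ 0, P w ≠ 0, |P u| = |P w| ≤ 1, and |u − w|² = 2 |P u|² ( 1 − (P u · P w)/(|P u| |P w|) ). Consequently the full angle is dominated by the projected angle: 1 − u·w ≤ 1 − (P u · P w)/(|P u| |P w|). -/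
/-!
Since `u - w ∈ Π`, the projection fixes it: `P u - P w = u - w`, so `u` and `w` have the same
component orthogonal to `Π`, and Pythagoras turns `|u| = |w|` into `|P u| = |P w|`. Expanding
`|P u - P w|²` for two vectors of equal length gives the identity, and comparing it with
`|u - w|² = 2 (1 - u·w)` and `|P u| ≤ 1` gives the inequality. Finally `P u ≠ 0` because
`e_n ∈ Π` forces `⟪e_n, P u⟫ = ⟪e_n, u⟫ > 0`.
-/

open scoped InnerProductSpace

namespace Submodule

variable {𝕜 E : Type*} [RCLike 𝕜] [NormedAddCommGroup E] [InnerProductSpace 𝕜 E]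
  {K : Submodule 𝕜 E} [K.HasOrthogonalProjection]

theorem starProjection_ne_zero_of_inner_ne_zero {e v : E} (he : e ∈ K) (hv : ⟪e, v⟫_𝕜 ≠ 0) :
    K.starProjection v ≠ 0 := fun h =>
  hv (inner_right_of_mem_orthogonal he ((K.starProjection_apply_eq_zero_iff).mp h))

theorem starProjection_sub_eq_of_sub_mem {u w : E} (h : u - w ∈ K) :
    K.starProjection u - K.starProjection w = u - w := by
  rw [← map_sub, starProjection_eq_self_iff.mpr h]

theorem norm_starProjection_eq_of_sub_mem {u w : E} (h : u - w ∈ K) (huw : ‖u‖ = ‖w‖) :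
    ‖K.starProjection u‖ = ‖K.starProjection w‖ := by
  have hperp : u - K.starProjection u = w - K.starProjection w := by
    rw [sub_eq_sub_iff_sub_eq_sub, starProjection_sub_eq_of_sub_mem h]
  have hu := K.norm_sq_eq_add_norm_sq_starProjection u
  have hw := K.norm_sq_eq_add_norm_sq_starProjection w
  rw [starProjection_orthogonal_val, hperp, ← starProjection_orthogonal_val, huw, hw] at hu
  exact (pow_left_inj₀ (norm_nonneg _) (norm_nonneg _) two_ne_zero).mp (add_right_cancel hu).symm

end Submodule

theorem norm_sub_sq_eq_of_norm_eq {E : Type*} [NormedAddCommGroup E] [InnerProductSpace ℝ E]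
    {x y : E} (h : ‖x‖ = ‖y‖) :
    ‖x - y‖ ^ 2 = 2 * ‖x‖ ^ 2 * (1 - ⟪x, y⟫_ℝ / (‖x‖ * ‖y‖)) := by
  rcases eq_or_ne x 0 with rfl | hx
  · rw [norm_zero, eq_comm, norm_eq_zero] at h
    simp [h]
  · rw [norm_sub_sq_real, ← h]
    field_simp
    ring

theorem one_sub_inner_le_of_sub_eq {E : Type*} [NormedAddCommGroup E] [InnerProductSpace ℝ E]
    {u w x y : E} (hu : ‖u‖ = 1) (hw : ‖w‖ = 1) (hxy : ‖x‖ = ‖y‖) (hx : ‖x‖ ≤ 1)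
    (h : x - y = u - w) :
    1 - ⟪u, w⟫_ℝ ≤ 1 - ⟪x, y⟫_ℝ / (‖x‖ * ‖y‖) := by
  have hcos : ⟪x, y⟫_ℝ / (‖x‖ * ‖y‖) ≤ 1 :=
    (abs_le.mp (abs_real_inner_div_norm_mul_norm_le_one x y)).2
  have hx_sq : ‖x‖ ^ 2 ≤ 1 := pow_le_one₀ (norm_nonneg x) hx
  have key : 1 - ⟪u, w⟫_ℝ = ‖x‖ ^ 2 * (1 - ⟪x, y⟫_ℝ / (‖x‖ * ‖y‖)) := by
    have := norm_sub_sq_eq_of_norm_eq hxy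
    rw [h, norm_sub_sq_real, hu, hw] at this
    linarith
  rw [key]
  exact mul_le_of_le_one_left (sub_nonneg.mpr hcos) hx_sq

theorem grassmannian_projection_inequality_general
    {n : ℕ}
    (u w : EuclideanSpace ℝ (Fin (n + 2)))
    (hu : ‖u‖ = 1) (hw : ‖w‖ = 1)
    (hu_n : 0 < u (Fin.last (n + 1))) (hw_n : 0 < w (Fin.last (n + 1)))
    (P : EuclideanSpace ℝ (Fin (n + 2)) →ₗ[ℝ] EuclideanSpace ℝ (Fin (n + 2)))
    (hPmem : ∀ z, P z ∈ Submodule.span ℝ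
      ({EuclideanSpace.single (Fin.last (n + 1)) 1, u - w} : Set (EuclideanSpace ℝ (Fin (n + 2)))))
    (hPorth : ∀ z, z - P z ∈ (Submodule.span ℝ
      ({EuclideanSpace.single (Fin.last (n + 1)) 1, u - w} : Set (EuclideanSpace ℝ (Fin (n + 2)))))ᗮ) :
    P u ≠ 0 ∧ P w ≠ 0 ∧ ‖P u‖ = ‖P w‖ ∧ ‖P u‖ ≤ 1 ∧
    ‖u - w‖ ^ 2 = 2 * ‖P u‖ ^ 2 * (1 - (inner ℝ (P u) (P w) : ℝ) / (‖P u‖ * ‖P w‖)) ∧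
    1 - (inner ℝ u w : ℝ) ≤ 1 - (inner ℝ (P u) (P w) : ℝ) / (‖P u‖ * ‖P w‖) := by
  set e : EuclideanSpace ℝ (Fin (n + 2)) := EuclideanSpace.single (Fin.last (n + 1)) 1
  set K := Submodule.span ℝ ({e, u - w} : Set (EuclideanSpace ℝ (Fin (n + 2))))
  have hP : ∀ z, P z = K.starProjection z := fun z =>
    (Submodule.eq_starProjection_of_mem_orthogonal (hPmem z) (hPorth z)).symm
  have he : e ∈ K := Submodule.subset_span (by simp)
  have hd : u - w ∈ K := Submodule.subset_span (by simp)
  have he_inner (z : EuclideanSpace ℝ (Fin (n + 2))) : ⟪e, z⟫_ℝ = z (Fin.last (n + 1)) := by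
    simp [e, EuclideanSpace.inner_single_left]
  have hsub := Submodule.starProjection_sub_eq_of_sub_mem hd
  have hnorm := Submodule.norm_starProjection_eq_of_sub_mem hd (hu.trans hw.symm)
  have hle : ‖K.starProjection u‖ ≤ 1 := (K.norm_starProjection_apply_le u).trans hu.le
  simp only [hP]
  refine ⟨Submodule.starProjection_ne_zero_of_inner_ne_zero he (he_inner u ▸ hu_n.ne'),
    Submodule.starProjection_ne_zero_of_inner_ne_zero he (he_inner w ▸ hw_n.ne'),
    hnorm, hle, ?_, one_sub_inner_le_of_sub_eq hu hw hnorm hle hsub⟩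
  rw [← hsub]
  exact norm_sub_sq_eq_of_norm_eq hnorm

/-- Grassmannian projection inequality: for unit vectors `u ≠ w` with positive last
coordinate, and `P` the orthogonal projection onto `Π = span{e_n, u - w}`, one has
`P u ≠ 0`, `P w ≠ 0`, `|P u| = |P w| ≤ 1`,
`|u - w|² = 2|P u|²(1 - ⟪P u, P w⟫/(|P u||P w|))`, and consequently
`1 - ⟪u, w⟫ ≤ 1 - ⟪P u, P w⟫/(|P u||P w|)`. -/
theorem grassmannian_projection_inequality
    {n : ℕ}
    (u w : EuclideanSpace ℝ (Fin (n + 2)))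
    (hu : ‖u‖ = 1) (hw : ‖w‖ = 1) (huw : u ≠ w)
    (hu_n : 0 < u (Fin.last (n + 1))) (hw_n : 0 < w (Fin.last (n + 1)))
    (P : EuclideanSpace ℝ (Fin (n + 2)) →ₗ[ℝ] EuclideanSpace ℝ (Fin (n + 2)))
    (hPmem : ∀ z, P z ∈ Submodule.span ℝ
      ({EuclideanSpace.single (Fin.last (n + 1)) 1, u - w} : Set (EuclideanSpace ℝ (Fin (n + 2)))))
    (hPorth : ∀ z, z - P z ∈ (Submodule.span ℝ
      ({EuclideanSpace.single (Fin.last (n + 1)) 1, u - w} : Set (EuclideanSpace ℝ (Fin (n + 2)))))ᗮ) :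
    P u ≠ 0 ∧ P w ≠ 0 ∧ ‖P u‖ = ‖P w‖ ∧ ‖P u‖ ≤ 1 ∧
    ‖u - w‖ ^ 2 = 2 * ‖P u‖ ^ 2 * (1 - (inner ℝ (P u) (P w) : ℝ) / (‖P u‖ * ‖P w‖)) ∧
    1 - (inner ℝ u w : ℝ) ≤ 1 - (inner ℝ (P u) (P w) : ℝ) / (‖P u‖ * ‖P w‖) :=
  grassmannian_projection_inequality_general u w hu hw hu_n hw_n P hPmem hPorth
end

section
/- For every choice of positive parameters (θ, m, σ) and every p > 0 there exists a unique Nash equilibrium: a unique vector y* ∈ ℝᴺ with all components positive satisfying Σ_{k=1}^N m_k (y*_k − y*_i) + σ (θ_i − (y*_i)^p) y*_i = 0 for every i = 1,…,N. -/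
/-!
Writing `S = ∑ k, m k * y k` and `M = ∑ k, m k`, the equation at `i` says that `y i` solves
`t * (M - σ θ i + σ t ^ p) = S`. For `S > 0` this scalar equation has exactly one positive root
`t_i(S)`, increasing in `S`, so equilibria correspond to fixed points of the monotone map
`S ↦ ∑ k, m k * t_k(S)`. The constant profiles `min θ ^ (1/p)` and `max θ ^ (1/p)` are a sub- and a
supersolution, so Knaster–Tarski gives a fixed point between them. For uniqueness, compare two
equilibria `u, v` at an index maximising `u i / v i = r`: if `r > 1` then `u i > v i`, and the
equation at `i` forces `∑ k, m k * u k > r * ∑ k, m k * v k`, contradicting `u ≤ r v`.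
-/

open Filter Topology Finset Real

theorem exists_fixedPt_of_monotoneOn_Icc {α : Type*} [ConditionallyCompleteLattice α]
    {f : α → α} {a b : α} (hab : a ≤ b) (hf : MonotoneOn f (Set.Icc a b)) (ha : a ≤ f a)
    (hb : f b ≤ b) : ∃ x ∈ Set.Icc a b, f x = x := by
  have : Fact (a ≤ b) := ⟨hab⟩
  have hmaps : Set.MapsTo f (Set.Icc a b) (Set.Icc a b) := fun x hx =>
    ⟨ha.trans (hf ⟨le_rfl, hab⟩ hx hx.1), (hf hx ⟨hab, le_rfl⟩ hx.2).trans hb⟩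
  let F : Set.Icc a b →o Set.Icc a b := ⟨hmaps.restrict, fun x y hxy => hf x.2 y.2 hxy⟩
  exact ⟨F.lfp, F.lfp.2, congrArg Subtype.val F.map_lfp⟩

namespace OpinionGame

/-- The equation of an equilibrium `y` at `i` reads
`balance (∑ k, m k - σ * θ i) σ p (y i) = ∑ k, m k * y k`. -/
noncomputable def balance (a c p t : ℝ) : ℝ := t * (a + c * t ^ p)

section Balance

variable {a c p : ℝ}

theorem continuous_balance (hp : 0 < p) : Continuous (balance a c p) :=
  continuous_id.mul (continuous_const.add (continuous_const.mul (continuous_rpow_const hp.le)))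

theorem tendsto_balance_atTop (hc : 0 < c) (hp : 0 < p) :
    Tendsto (balance a c p) atTop atTop :=
  tendsto_id.atTop_mul_atTop₀
    (tendsto_atTop_add_const_left _ a ((tendsto_rpow_atTop hp).const_mul_atTop hc))

theorem exists_pos_balance_eq (hc : 0 < c) (hp : 0 < p) {S : ℝ} (hS : 0 < S) :
    ∃ t, 0 < t ∧ balance a c p t = S := by
  have hS' : S ∈ Set.Ioi (balance a c p 0) := by simpa [balance] using hS
  exact intermediate_value_Ioi (continuous_balance hp).continuousOn
    (tendsto_balance_atTop hc hp) hS'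

theorem balance_lt_balance (hc : 0 < c) (hp : 0 < p) {s t : ℝ} (hs : 0 < s) (hst : s < t)
    (hgs : 0 ≤ balance a c p s) : balance a c p s < balance a c p t := by
  have hpow : c * s ^ p < c * t ^ p := mul_lt_mul_of_pos_left (rpow_lt_rpow hs.le hst hp) hc
  have hfac : 0 ≤ a + c * s ^ p := nonneg_of_mul_nonneg_right hgs hs
  unfold balance
  nlinarith [mul_pos hs (sub_pos.2 hpow), mul_nonneg (sub_pos.2 hst).le hfac]

theorem le_of_balance_le (hc : 0 < c) (hp : 0 < p) {s t : ℝ} (ht : 0 < t)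
    (hgt : 0 ≤ balance a c p t) (h : balance a c p s ≤ balance a c p t) : s ≤ t :=
  le_of_not_gt fun hts => (balance_lt_balance hc hp ht hts hgt).not_ge h

open Classical in
/-- Junk value `0` when `S ≤ 0`. -/
noncomputable def balanceRoot (a c p S : ℝ) : ℝ :=
  if h : ∃ t, 0 < t ∧ balance a c p t = S then h.choose else 0

theorem balanceRoot_spec (hc : 0 < c) (hp : 0 < p) {S : ℝ} (hS : 0 < S) :
    0 < balanceRoot a c p S ∧ balance a c p (balanceRoot a c p S) = S := by
  have h := exists_pos_balance_eq (a := a) hc hp hS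
  rw [balanceRoot, dif_pos h]
  exact h.choose_spec

theorem le_balanceRoot (hc : 0 < c) (hp : 0 < p) {s S : ℝ} (hS : 0 < S)
    (h : balance a c p s ≤ S) : s ≤ balanceRoot a c p S := by
  obtain ⟨hpos, hroot⟩ := balanceRoot_spec (a := a) hc hp hS
  exact le_of_balance_le hc hp hpos (hS.le.trans hroot.ge) (h.trans hroot.ge)

theorem balanceRoot_le (hc : 0 < c) (hp : 0 < p) {t S : ℝ} (ht : 0 < t) (hS : 0 < S)
    (h : S ≤ balance a c p t) : balanceRoot a c p S ≤ t := by
  obtain ⟨-, hroot⟩ := balanceRoot_spec (a := a) hc hp hS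
  exact le_of_balance_le hc hp ht (hS.le.trans h) (hroot.le.trans h)

theorem monotoneOn_balanceRoot (hc : 0 < c) (hp : 0 < p) :
    MonotoneOn (balanceRoot a c p) (Set.Ioi 0) := fun _ hS _ hT hST =>
  le_balanceRoot hc hp hT (((balanceRoot_spec hc hp hS).2).trans_le hST)

end Balance

section Equilibrium

variable {ι : Type*} [Fintype ι] (m θ : ι → ℝ) (σ p : ℝ)

def IsNashEquilibrium (y : ι → ℝ) : Prop :=
  (∀ i, 0 < y i) ∧ ∀ i, ∑ k, m k * (y k - y i) + σ * (θ i - y i ^ p) * y i = 0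

variable {m θ σ p}

theorem equation_iff_balance_eq (y : ι → ℝ) (i : ι) :
    ∑ k, m k * (y k - y i) + σ * (θ i - y i ^ p) * y i = 0 ↔
      balance (∑ k, m k - σ * θ i) σ p (y i) = ∑ k, m k * y k := by
  simp only [balance, mul_sub, sum_sub_distrib, ← sum_mul]
  constructor <;> intro h <;> linarith

theorem IsNashEquilibrium.le (hm : ∀ i, 0 ≤ m i) (hσ : 0 < σ) (hp : 0 < p) {u v : ι → ℝ}
    (hu : IsNashEquilibrium m θ σ p u) (hv : IsNashEquilibrium m θ σ p v) : u ≤ v := by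
  by_contra h
  obtain ⟨j, hj⟩ : ∃ j, v j < u j := by simpa [Pi.le_def] using h
  have : Nonempty ι := ⟨j⟩
  obtain ⟨i, hi⟩ := Finite.exists_max fun k => u k / v k
  set r := u i / v i
  have hr : 1 < r := ((one_lt_div (hv.1 j)).2 hj).trans_le (hi j)
  have hvu : v i < u i := (one_lt_div (hv.1 i)).1 hr
  have hui : u i = r * v i := (div_mul_cancel₀ _ (hv.1 i).ne').symm
  have hsum : ∑ k, m k * u k ≤ r * ∑ k, m k * v k := by
    rw [mul_sum]
    refine sum_le_sum fun k _ => ?_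
    have := mul_le_mul_of_nonneg_left ((div_le_iff₀ (hv.1 k)).1 (hi k)) (hm k)
    linarith
  have hu' := (equation_iff_balance_eq u i).1 (hu.2 i)
  have hv' := (equation_iff_balance_eq v i).1 (hv.2 i)
  unfold balance at hu' hv'
  have key : ∑ k, m k * u k - r * ∑ k, m k * v k = σ * u i * (u i ^ p - v i ^ p) := by
    linear_combination -hu' + r * hv' + (∑ k, m k - σ * θ i + σ * v i ^ p) * hui
  have hpos : 0 < σ * u i * (u i ^ p - v i ^ p) :=
    mul_pos (mul_pos hσ (hu.1 i)) (sub_pos.2 (rpow_lt_rpow (hv.1 i).le hvu hp))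
  linarith

theorem le_balanceRoot_mul (hσ : 0 < σ) (hp : 0 < p) {M t θ₀ : ℝ} (hM : 0 < M) (ht : 0 < t)
    (h : t ^ p ≤ θ₀) : t ≤ balanceRoot (M - σ * θ₀) σ p (M * t) := by
  refine le_balanceRoot hσ hp (mul_pos hM ht) ?_
  unfold balance
  nlinarith [mul_nonneg (mul_pos hσ ht).le (sub_nonneg.2 h)]

theorem balanceRoot_mul_le (hσ : 0 < σ) (hp : 0 < p) {M t θ₀ : ℝ} (hM : 0 < M) (ht : 0 < t)
    (h : θ₀ ≤ t ^ p) : balanceRoot (M - σ * θ₀) σ p (M * t) ≤ t := by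
  refine balanceRoot_le hσ hp ht (mul_pos hM ht) ?_
  unfold balance
  nlinarith [mul_nonneg (mul_pos hσ ht).le (sub_nonneg.2 h)]

theorem exists_isNashEquilibrium [Nonempty ι] (hm : ∀ i, 0 < m i) (hθ : ∀ i, 0 < θ i)
    (hσ : 0 < σ) (hp : 0 < p) : ∃ y, IsNashEquilibrium m θ σ p y := by
  set M := ∑ k, m k
  have hM : 0 < M := sum_pos (fun i _ => hm i) univ_nonempty
  let y (S : ℝ) (k : ι) : ℝ := balanceRoot (M - σ * θ k) σ p S
  have hy (S : ℝ) (hS : 0 < S) (k : ι) := balanceRoot_spec (a := M - σ * θ k) hσ hp hS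
  obtain ⟨kmin, hkmin⟩ := Finite.exists_min θ
  obtain ⟨kmax, hkmax⟩ := Finite.exists_max θ
  have hpow (k : ι) : (θ k ^ p⁻¹) ^ p = θ k := rpow_inv_rpow (hθ k).le hp.ne'
  set lo := θ kmin ^ p⁻¹
  set hi := θ kmax ^ p⁻¹
  have hlo : 0 < lo := rpow_pos_of_pos (hθ kmin) _
  have hhi : 0 < hi := rpow_pos_of_pos (hθ kmax) _
  have hlohi : M * lo ≤ M * hi := mul_le_mul_of_nonneg_left
    (rpow_le_rpow (hθ kmin).le (hkmin kmax) (inv_nonneg.2 hp.le)) hM.le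
  have hmono : MonotoneOn (fun S => ∑ k, m k * y S k) (Set.Icc (M * lo) (M * hi)) :=
    fun S hS T hT hST => sum_le_sum fun k _ => mul_le_mul_of_nonneg_left
      (monotoneOn_balanceRoot hσ hp (mul_pos hM hlo |>.trans_le hS.1)
        (mul_pos hM hlo |>.trans_le hT.1) hST) (hm k).le
  have hsub : M * lo ≤ ∑ k, m k * y (M * lo) k :=
    (sum_mul _ _ _).le.trans <| sum_le_sum fun k _ => mul_le_mul_of_nonneg_left
      (le_balanceRoot_mul hσ hp hM hlo (hpow kmin ▸ hkmin k)) (hm k).le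
  have hsup : ∑ k, m k * y (M * hi) k ≤ M * hi :=
    (sum_le_sum fun k _ => mul_le_mul_of_nonneg_left
      (balanceRoot_mul_le hσ hp hM hhi (hpow kmax ▸ hkmax k)) (hm k).le).trans
      (sum_mul _ _ _).ge
  obtain ⟨S, hS, hfix⟩ := exists_fixedPt_of_monotoneOn_Icc hlohi hmono hsub hsup
  have hSpos : 0 < S := mul_pos hM hlo |>.trans_le hS.1
  refine ⟨y S, fun k => (hy S hSpos k).1, fun i => (equation_iff_balance_eq _ i).2 ?_⟩
  rw [hfix]
  exact (hy S hSpos i).2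

end Equilibrium

end OpinionGame

open OpinionGame

/-- Existence and uniqueness of the Nash equilibrium of the opinion game: for any positive
parameters `(θ, m, σ)` and `p > 0` there is a unique positive vector `y*` satisfying
`Σ_k m_k (y*_k - y*_i) + σ (θ_i - (y*_i)^p) y*_i = 0` for all `i`. -/
theorem nash_equilibrium_exists_unique
    {N : ℕ} (hN : 0 < N)
    (m θ : Fin N → ℝ) (hm : ∀ i, 0 < m i) (hθ : ∀ i, 0 < θ i)
    {σ p : ℝ} (hσ : 0 < σ) (hp : 0 < p) :
    ∃! y : Fin N → ℝ, (∀ i, 0 < y i) ∧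
      (∀ i, ∑ k, m k * (y k - y i) + σ * (θ i - y i ^ p) * y i = 0) := by
  have : Nonempty (Fin N) := ⟨⟨0, hN⟩⟩
  have hm' : ∀ i, 0 ≤ m i := fun i => (hm i).le
  obtain ⟨y, hy⟩ := exists_isNashEquilibrium hm hθ hσ hp
  exact ⟨y, hy, fun z hz =>
    (IsNashEquilibrium.le hm' hσ hp hz hy).antisymm (IsNashEquilibrium.le hm' hσ hp hy hz)⟩
end

section
/- The unique Nash equilibrium y* is a locally exponentially stable equilibrium of the opinion system: there exist constants r > 0, C ≥ 1 and λ > 0 such that every solution y : [0,∞) → ℝᴺ of ẏ_i = Σ_{k=1}^N m_k (y_k − y_i) + σ (θ_i − y_i^p) y_i with ‖y(0) − y*‖ ≤ r satisfies ‖y(t) − y*‖ ≤ C e^(−λ t) ‖y(0) − y*‖ for all t ≥ 0. -/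
open Filter Topology Finset Real

/-!
The Lyapunov function is the relative sup-distance `V(y) = maxᵢ |yᵢ - y*ᵢ| / y*ᵢ`. Let `j` be an
index realising the maximum and `e = y - y*`. Thanks to the weights, the coupling term
`∑ₖ mₖ (eₖ - eⱼ)` pushes `eⱼ` back at rate at least `M - ∑ₖ mₖ y*ₖ / y*ⱼ`, which by the equilibrium
equation is `σ (θⱼ - y*ⱼ ^ p)`, the secant slope of the reaction `u ↦ σ (θⱼ - u ^ p) u` from `0` to
`y*ⱼ`. Near `y*` the reaction grows at about its derivative `σ (θⱼ - (p + 1) y*ⱼ ^ p)`, which is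
smaller by `σ p y*ⱼ ^ p`. So near `y*` the upper right Dini derivative of `V` along solutions is at
most `-λ V` with `λ = (σ p / 2) minⱼ y*ⱼ ^ p`, a comparison argument gives
`V(y(t)) ≤ e^{-λ t} V(y(0))`, and `V` is equivalent to the Euclidean distance to `y*`.
-/

def UpperDiniDerivLE (f : ℝ → ℝ) (x c : ℝ) : Prop :=
  ∀ r, c < r → ∀ᶠ z in 𝓝[>] x, f z < f x + r * (z - x)

namespace UpperDiniDerivLE

variable {f : ℝ → ℝ} {x c : ℝ}

theorem frequently_slope_lt (hf : UpperDiniDerivLE f x c) {r : ℝ} (hr : c < r) :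
    ∃ᶠ z in 𝓝[>] x, slope f x z < r := by
  refine ((hf r hr).and self_mem_nhdsWithin).frequently.mono fun z ⟨hz, hxz⟩ => ?_
  rw [slope_def_field, div_lt_iff₀ (sub_pos.2 hxz)]
  linarith

theorem of_eventuallyEq {g : ℝ → ℝ} (hf : UpperDiniDerivLE f x c) (hfg : g =ᶠ[𝓝[>] x] f)
    (hx : g x = f x) : UpperDiniDerivLE g x c := fun r hr => by
  filter_upwards [hf r hr, hfg] with z hz hgz
  rwa [hgz, hx]

theorem eventually_lt_add_mul_sub (hcont : ContinuousWithinAt f (Set.Ioi x) x) {M : ℝ}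
    (hle : f x ≤ M) (hf : f x = M → UpperDiniDerivLE f x c) {r : ℝ} (hr : c < r) :
    ∀ᶠ z in 𝓝[>] x, f z < M + r * (z - x) := by
  rcases hle.lt_or_eq with hlt | rfl
  · have hlim : Tendsto (fun z => M + r * (z - x)) (𝓝[>] x) (𝓝 M) := by
      simpa using ((Continuous.tendsto (by fun_prop) x).mono_left nhdsWithin_le_nhds :
        Tendsto (fun z => M + r * (z - x)) (𝓝[>] x) (𝓝 (M + r * (x - x))))
    exact hcont.eventually_lt hlim hlt
  · exact hf rfl r hr

theorem max {g : ℝ → ℝ} (hf : ContinuousWithinAt f (Set.Ioi x) x)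
    (hg : ContinuousWithinAt g (Set.Ioi x) x) (hf' : g x ≤ f x → UpperDiniDerivLE f x c)
    (hg' : f x ≤ g x → UpperDiniDerivLE g x c) :
    UpperDiniDerivLE (fun z => max (f z) (g z)) x c := fun r hr => by
  filter_upwards [eventually_lt_add_mul_sub hf (le_max_left _ (g x))
      (fun h => hf' (h ▸ le_max_right _ _)) hr,
    eventually_lt_add_mul_sub hg (le_max_right (f x) _)
      (fun h => hg' (h ▸ le_max_left _ _)) hr] with z hfz hgz
  exact max_lt hfz hgz

theorem finset_sup' {ι : Type*} {s : Finset ι} (hs : s.Nonempty) {f : ι → ℝ → ℝ}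
    (hcont : ∀ i ∈ s, ContinuousWithinAt (f i) (Set.Ioi x) x)
    (hf : ∀ i ∈ s, f i x = s.sup' hs (fun j => f j x) → UpperDiniDerivLE (f i) x c) :
    UpperDiniDerivLE (fun z => s.sup' hs (fun i => f i z)) x c := fun r hr => by
  have h : ∀ i ∈ s, ∀ᶠ z in 𝓝[>] x, f i z < s.sup' hs (fun j => f j x) + r * (z - x) :=
    fun i hi => eventually_lt_add_mul_sub (hcont i hi) (le_sup' (fun j => f j x) hi) (hf i hi) hr
  filter_upwards [(eventually_all_finset s).2 h] with z hz
  exact (sup'_lt_iff hs).2 hz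

end UpperDiniDerivLE

theorem HasDerivAt.upperDiniDerivLE {f : ℝ → ℝ} {f' x c : ℝ} (hf : HasDerivAt f f' x)
    (hc : f' ≤ c) : UpperDiniDerivLE f x c := fun r hr => by
  have hslope : Tendsto (slope f x) (𝓝[>] x) (𝓝 f') :=
    (hasDerivAt_iff_tendsto_slope.1 hf).mono_left (nhdsWithin_mono x fun z hz => ne_of_gt hz)
  filter_upwards [hslope.eventually_lt_const (hc.trans_lt hr), self_mem_nhdsWithin] with z hz hxz
  rw [slope_def_field, div_lt_iff₀ (sub_pos.2 hxz)] at hz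
  linarith

theorem HasDerivAt.upperDiniDerivLE_abs {g : ℝ → ℝ} {g' x c : ℝ} (hg : HasDerivAt g g' x)
    (hc : ∀ s : ℝ, |s| = 1 → s * g x = |g x| → s * g' ≤ c) :
    UpperDiniDerivLE (fun z => |g z|) x c := by
  simp_rw [abs_eq_max_neg]
  refine UpperDiniDerivLE.max hg.continuousAt.continuousWithinAt
    hg.neg.continuousAt.continuousWithinAt (fun h => hg.upperDiniDerivLE ?_)
    (fun h => hg.neg.upperDiniDerivLE ?_)
  · simpa using hc 1 abs_one (by simp [abs_of_nonneg (by linarith : 0 ≤ g x)])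
  · simpa using hc (-1) (by simp) (by simp [abs_of_nonpos (by linarith : g x ≤ 0)])

section Comparison

variable {f : ℝ → ℝ} {lam δ t : ℝ}

/- `image_le_of_liminf_slope_right_lt_deriv_boundary` wants a slope bound at every point:
truncating `f` at `δ` provides one where `hD` says nothing, and the term `ε * (1 + x)` makes the
barrier strict. -/
theorem min_le_mul_exp_add_of_upperDiniDerivLE (hlam : 0 ≤ lam)
    (hf : ContinuousOn f (Set.Ici 0)) (hf0 : 0 ≤ f 0)
    (hD : ∀ x, 0 ≤ x → f x < δ → UpperDiniDerivLE f x (-lam * f x)) (ht : 0 ≤ t)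
    {ε : ℝ} (hε : 0 < ε) (hεδ : f 0 + ε * (1 + t) < δ) :
    min (f t) δ ≤ f 0 * exp (-lam * t) + ε * (1 + t) := by
  refine image_le_of_liminf_slope_right_lt_deriv_boundary
    (f' := fun x => if f x < δ then -lam * f x else 0)
    (B := fun x => f 0 * exp (-lam * x) + ε * (1 + x))
    (B' := fun x => f 0 * (exp (-lam * x) * (-lam * 1)) + ε * (0 + 1))
    ((hf.inf continuousOn_const).mono Set.Icc_subset_Ici_self) ?_ ?_ ?_ ?_ ⟨ht, le_rfl⟩
  · intro x hx r hr
    split_ifs at hr with hfx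
    · have hcont : ContinuousWithinAt f (Set.Ioi x) x :=
        (hf x hx.1).mono fun z hz => hx.1.trans (le_of_lt hz)
      have htrunc : (fun z => min (f z) δ) =ᶠ[𝓝[>] x] f :=
        (hcont.eventually_lt continuousWithinAt_const hfx).mono fun z hz => min_eq_left hz.le
      exact ((hD x hx.1 hfx).of_eventuallyEq htrunc (min_eq_left hfx.le)).frequently_slope_lt hr
    · refine ((eventually_mem_nhdsWithin (s := Set.Ioi x)).mono fun z hz => ?_).frequently
      rw [slope_def_field, min_eq_right (not_lt.1 hfx)]
      exact (div_nonpos_of_nonpos_of_nonneg (sub_nonpos.2 (min_le_right _ _))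
        (sub_pos.2 hz).le).trans_lt hr
  · simp only [mul_zero, exp_zero]
    linarith [min_le_left (f 0) δ]
  · intro x
    exact (((hasDerivAt_id x).const_mul (-lam)).exp.const_mul (f 0)).add
      (((hasDerivAt_const x 1).add (hasDerivAt_id x)).const_mul ε)
  · intro x hx hfB
    have hBδ : f 0 * exp (-lam * x) + ε * (1 + x) < δ := by
      have : exp (-lam * x) ≤ 1 := exp_le_one_iff.2 (by nlinarith [hx.1])
      nlinarith [hx.2]
    have hfx : f x < δ := (min_lt_iff.1 (hfB.trans_lt hBδ)).resolve_right (lt_irrefl δ)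
    rw [if_pos hfx, ← min_eq_left hfx.le, hfB]
    nlinarith [mul_nonneg hlam (mul_nonneg hε.le (by linarith [hx.1] : (0 : ℝ) ≤ 1 + x))]

theorem le_mul_exp_of_upperDiniDerivLE (hlam : 0 ≤ lam) (hf : ContinuousOn f (Set.Ici 0))
    (hf0 : 0 ≤ f 0) (hδ : f 0 < δ)
    (hD : ∀ x, 0 ≤ x → f x < δ → UpperDiniDerivLE f x (-lam * f x)) (ht : 0 ≤ t) :
    f t ≤ f 0 * exp (-lam * t) := by
  have hε : Tendsto (fun ε : ℝ => ε * (1 + t)) (𝓝[>] 0) (𝓝 0) := by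
    simpa using ((continuous_id.mul continuous_const).tendsto (0 : ℝ)).mono_left
      (nhdsWithin_le_nhds (s := Set.Ioi 0)) (f := fun ε : ℝ => ε * (1 + t))
  have hmin : min (f t) δ ≤ f 0 * exp (-lam * t) := by
    refine ge_of_tendsto (by simpa only [add_zero] using hε.const_add (f 0 * exp (-lam * t))) ?_
    filter_upwards [self_mem_nhdsWithin, (by simpa only [add_zero] using hε.const_add (f 0) :
      Tendsto _ _ (𝓝 (f 0))).eventually_lt_const hδ] with ε hε hεδ
    exact min_le_mul_exp_add_of_upperDiniDerivLE hlam hf hf0 hD ht hε hεδ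
  have hminδ : min (f t) δ < δ := hmin.trans_lt <|
    (mul_le_of_le_one_right hf0 (exp_le_one_iff.2 (by nlinarith))).trans_lt hδ
  rwa [min_eq_left ((min_lt_iff.1 hminδ).resolve_right (lt_irrefl δ)).le] at hmin

end Comparison

theorem HasDerivAt.eventually_sign_mul_sub_le {f : ℝ → ℝ} {f' κ a : ℝ} (hf : HasDerivAt f f' a)
    (hκ : f' < κ) :
    ∀ᶠ u in 𝓝 a, ∀ s : ℝ, |s| = 1 → s * (u - a) = |u - a| → s * (f u - f a) ≤ κ * |u - a| := by
  filter_upwards [(hasDerivAt_iff_isLittleO.1 hf).def (sub_pos.2 hκ)] with u hu s hs hse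
  rw [Real.norm_eq_abs, Real.norm_eq_abs, smul_eq_mul] at hu
  have hrem : s * (f u - f a - (u - a) * f') ≤ (κ - f') * |u - a| :=
    (le_abs_self _).trans (by rwa [abs_mul, hs, one_mul])
  linear_combination hrem + f' * hse

theorem exists_pos_forall_abs_sub_le_mul {ι : Type*} [Finite ι] {a c : ι → ℝ}
    {P : ι → ℝ → Prop} (h : ∀ i, ∀ᶠ u in 𝓝 (a i), P i u) :
    ∃ δ > 0, ∀ i u, |u - a i| ≤ δ * c i → P i u := by
  have hsmall : ∀ i, ∀ᶠ δ in 𝓝 (0 : ℝ), ∀ u, |u - a i| ≤ δ * c i → P i u := by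
    intro i
    obtain ⟨ε, hε, hP⟩ := Metric.eventually_nhds_iff.1 (h i)
    have hc : Tendsto (fun δ : ℝ => δ * c i) (𝓝 0) (𝓝 0) := by
      simpa using (continuous_id.mul continuous_const).tendsto (0 : ℝ) (f := fun δ => δ * c i)
    filter_upwards [hc.eventually_lt_const hε] with δ hδ u hu
    exact hP (by rw [Real.dist_eq]; linarith)
  obtain ⟨δ, hδ, hδ0⟩ := (((eventually_all.2 hsmall).filter_mono nhdsWithin_le_nhds).and
    (self_mem_nhdsWithin (s := Set.Ioi (0 : ℝ)))).exists
  exact ⟨δ, hδ0, hδ⟩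

theorem hasDerivAt_opinionReaction (σ θ p : ℝ) {a : ℝ} (ha : 0 < a) :
    HasDerivAt (fun u => σ * (θ - u ^ p) * u) (σ * (θ - (p + 1) * a ^ p)) a := by
  refine ((((hasDerivAt_rpow_const (p := p) (Or.inl ha.ne')).const_sub θ).const_mul σ).mul
    (hasDerivAt_id a)).congr_deriv ?_
  rw [id, rpow_sub_one ha.ne']
  field_simp
  ring

section WeightedSupDist

variable {ι : Type*} [Fintype ι]

noncomputable def weightedSupDist [Nonempty ι] (w x : ι → ℝ) : ℝ :=
  univ.sup' univ_nonempty fun i => |(x i - w i) / w i|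

/- At a coordinate `j` where the relative deviation `|x j - w j| / w j` is maximal, `F` pulls
`x j` towards `w j` at rate `lam`; `s` is the sign of `x j - w j`, either sign if `x j = w j`. -/
def WeightedSupDissipative (F : (ι → ℝ) → ι → ℝ) (w : ι → ℝ) (δ lam : ℝ) : Prop :=
  ∀ x j s, |x j - w j| ≤ δ * w j → (∀ k, |x k - w k| * w j ≤ |x j - w j| * w k) →
    |s| = 1 → s * (x j - w j) = |x j - w j| → s * F x j ≤ -lam * |x j - w j|

def consensusField (m : ι → ℝ) (φ : ι → ℝ → ℝ) (x : ι → ℝ) (i : ι) : ℝ :=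
  ∑ k, m k * (x k - x i) + φ i (x i)

variable {w : ι → ℝ}

theorem weightedSupDist_nonneg [Nonempty ι] (x : ι → ℝ) : 0 ≤ weightedSupDist w x :=
  (abs_nonneg _).trans (le_sup' (fun i => |(x i - w i) / w i|) (mem_univ (Classical.arbitrary ι)))

theorem abs_sub_le_mul_weightedSupDist [Nonempty ι] (x : ι → ℝ) {i : ι} (hw : 0 < w i) :
    |x i - w i| ≤ w i * weightedSupDist w x := by
  have := le_sup' (fun i => |(x i - w i) / w i|) (mem_univ i)
  rwa [abs_div, abs_of_pos hw, div_le_iff₀ hw, mul_comm] at this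

theorem upperDiniDerivLE_weightedSupDist [Nonempty ι] {F : (ι → ℝ) → ι → ℝ} {δ lam : ℝ}
    (hw : ∀ i, 0 < w i) (hF : WeightedSupDissipative F w δ lam) {y : ℝ → ι → ℝ} {t : ℝ}
    (hy : ∀ i, HasDerivAt (fun τ => y τ i) (F (y t) i) t) (hδ : weightedSupDist w (y t) ≤ δ) :
    UpperDiniDerivLE (fun τ => weightedSupDist w (y τ)) t (-lam * weightedSupDist w (y t)) := by
  have hg : ∀ i, HasDerivAt (fun τ => (y τ i - w i) / w i) (F (y t) i / w i) t :=
    fun i => ((hy i).sub_const (w i)).div_const (w i)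
  refine UpperDiniDerivLE.finset_sup' univ_nonempty
    (fun i _ => (hg i).continuousAt.abs.continuousWithinAt) fun j _ hj => ?_
  change |(y t j - w j) / w j| = weightedSupDist w (y t) at hj
  rw [abs_div, abs_of_pos (hw j)] at hj
  have hej : |y t j - w j| = w j * weightedSupDist w (y t) := by
    rw [← hj, mul_div_cancel₀ _ (hw j).ne']
  refine (hg j).upperDiniDerivLE_abs fun s hs hse => ?_
  rw [abs_div, abs_of_pos (hw j), mul_div_assoc', div_left_inj' (hw j).ne'] at hse
  have hmax : ∀ k, |y t k - w k| * w j ≤ |y t j - w j| * w k := fun k => by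
    rw [hej]
    nlinarith [abs_sub_le_mul_weightedSupDist (y t) (hw k), hw j,
      weightedSupDist_nonneg (w := w) (y t)]
  have hrow := hF (y t) j s (by rw [hej, mul_comm]; gcongr; exact (hw j).le) hmax hs hse
  rw [← hj, mul_div_assoc', mul_div_assoc']
  exact div_le_div_of_nonneg_right hrow (hw j).le

theorem weightedSupDist_le_mul_exp [Nonempty ι] {F : (ι → ℝ) → ι → ℝ} {δ lam : ℝ}
    (hw : ∀ i, 0 < w i) (hF : WeightedSupDissipative F w δ lam) (hlam : 0 ≤ lam)
    {y : ℝ → ι → ℝ} (hy : ∀ i t, 0 ≤ t → HasDerivAt (fun τ => y τ i) (F (y t) i) t)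
    (h0 : weightedSupDist w (y 0) < δ) {t : ℝ} (ht : 0 ≤ t) :
    weightedSupDist w (y t) ≤ weightedSupDist w (y 0) * exp (-lam * t) :=
  le_mul_exp_of_upperDiniDerivLE hlam
    (fun τ hτ => (ContinuousAt.finset_sup'_apply univ_nonempty fun i _ =>
      (((hy i τ hτ).continuousAt.sub continuousAt_const).div_const (w i)).abs).continuousWithinAt)
    (weightedSupDist_nonneg _) h0
    (fun τ hτ hτδ => upperDiniDerivLE_weightedSupDist hw hF (fun i => hy i τ hτ) hτδ.le) ht

theorem sign_mul_consensusField_mul_le {m x : ι → ℝ} {φ : ι → ℝ → ℝ} {j : ι} {s κ : ℝ}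
    (hm : ∀ k, 0 ≤ m k) (hwj : 0 ≤ w j) (heq : consensusField m φ w j = 0)
    (hmax : ∀ k, |x k - w k| * w j ≤ |x j - w j| * w k) (hs : |s| = 1)
    (hse : s * (x j - w j) = |x j - w j|)
    (hφ : s * (φ j (x j) - φ j (w j)) ≤ κ * |x j - w j|) :
    s * consensusField m φ x j * w j ≤ (κ * w j - φ j (w j)) * |x j - w j| := by
  have hsplit : ∑ k, m k * (x k - x j) =
      ∑ k, m k * ((x k - w k) - (x j - w j)) + ∑ k, m k * (w k - w j) := by
    rw [← sum_add_distrib]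
    exact sum_congr rfl fun k _ => by ring
  have hcoupling : s * (∑ k, m k * ((x k - w k) - (x j - w j))) * w j ≤
      (∑ k, m k * (w k - w j)) * |x j - w j| := by
    rw [mul_sum, sum_mul, sum_mul]
    refine sum_le_sum fun k _ => ?_
    have hk : s * (x k - w k) ≤ |x k - w k| :=
      (le_abs_self _).trans (by rw [abs_mul, hs, one_mul])
    linear_combination mul_le_mul_of_nonneg_left
      ((mul_le_mul_of_nonneg_right hk hwj).trans (hmax k)) (hm k) - (m k * w j) * hse
  have hreaction := mul_le_mul_of_nonneg_right hφ hwj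
  unfold consensusField at heq ⊢
  rw [hsplit]
  linear_combination hcoupling + hreaction + (|x j - w j| + s * w j) * heq

theorem exists_weightedSupDissipative_opinion [Nonempty ι] {m θ : ι → ℝ} {σ p : ℝ}
    (hm : ∀ i, 0 ≤ m i) (hσ : 0 < σ) (hp : 0 < p) (hw : ∀ i, 0 < w i)
    (heq : ∀ i, consensusField m (fun i u => σ * (θ i - u ^ p) * u) w i = 0) :
    ∃ δ > 0, ∃ lam > 0,
      WeightedSupDissipative (consensusField m fun i u => σ * (θ i - u ^ p) * u) w δ lam := by
  obtain ⟨δ, hδ, hlocal⟩ := exists_pos_forall_abs_sub_le_mul (c := w) fun i =>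
    (hasDerivAt_opinionReaction σ (θ i) p (hw i)).eventually_sign_mul_sub_le
      (κ := σ * (θ i - (1 + p / 2) * w i ^ p))
      (by linear_combination (1 / 2) * mul_pos hσ (mul_pos hp (rpow_pos_of_pos (hw i) p)))
  refine ⟨δ, hδ, univ.inf' univ_nonempty fun i => σ * p / 2 * w i ^ p,
    (lt_inf'_iff _).2 fun i _ => by have := rpow_pos_of_pos (hw i) p; positivity,
    fun x j s hδj hmax hs hse => ?_⟩
  have hrow := sign_mul_consensusField_mul_le hm (hw j).le (heq j) hmax hs hse
    (hlocal j (x j) hδj s hs hse)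
  have hlam := inf'_le (fun i => σ * p / 2 * w i ^ p) (mem_univ j)
  refine le_of_mul_le_mul_right ?_ (hw j)
  nlinarith [mul_le_mul_of_nonneg_right hlam (mul_nonneg (abs_nonneg (x j - w j)) (hw j).le)]

end WeightedSupDist

section EuclideanSpace

variable {ι : Type*} [Fintype ι] [Nonempty ι] {x a : EuclideanSpace ℝ ι}

theorem weightedSupDist_le_norm_sub_div (ha : ∀ i, 0 < a i) :
    weightedSupDist a.ofLp x.ofLp ≤ ‖x - a‖ / univ.inf' univ_nonempty a.ofLp :=
  sup'_le _ _ fun i _ => by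
    rw [abs_div, abs_of_pos (ha i)]
    exact div_le_div₀ (norm_nonneg _) (by simpa using PiLp.norm_apply_le (x - a) i)
      ((lt_inf'_iff _).2 fun j _ => ha j) (inf'_le _ (mem_univ i))

theorem norm_sub_le_sqrt_card_mul_weightedSupDist (ha : ∀ i, 0 < a i) :
    ‖x - a‖ ≤ √(Fintype.card ι) *
      (univ.sup' univ_nonempty a.ofLp * weightedSupDist a.ofLp x.ofLp) := by
  set B := univ.sup' univ_nonempty a.ofLp * weightedSupDist a.ofLp x.ofLp
  have hB : ∀ i, |x i - a i| ≤ B := fun i =>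
    (abs_sub_le_mul_weightedSupDist x.ofLp (ha i)).trans <|
      mul_le_mul_of_nonneg_right (le_sup' _ (mem_univ i)) (weightedSupDist_nonneg _)
  have hB0 : 0 ≤ B := (abs_nonneg _).trans (hB (Classical.arbitrary ι))
  rw [EuclideanSpace.norm_eq, ← sqrt_sq hB0, ← sqrt_mul (Nat.cast_nonneg _)]
  refine sqrt_le_sqrt ?_
  calc ∑ i, ‖(x - a).ofLp i‖ ^ 2 ≤ ∑ _i : ι, B ^ 2 :=
        sum_le_sum fun i _ => by simpa [sq_abs] using pow_le_pow_left₀ (abs_nonneg _) (hB i) 2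
    _ = Fintype.card ι * B ^ 2 := by simp

end EuclideanSpace

theorem nash_equilibrium_locally_exponentially_stable_general
    {N : ℕ} (hN : 0 < N)
    (m θ : Fin N → ℝ) (hm : ∀ i, 0 < m i)
    {σ p : ℝ} (hσ : 0 < σ) (hp : 0 < p)
    (ystar : EuclideanSpace ℝ (Fin N)) (hpos : ∀ i, 0 < ystar i)
    (heq : ∀ i, ∑ k, m k * (ystar k - ystar i) + σ * (θ i - ystar i ^ p) * ystar i = 0) :
    ∃ r C lam : ℝ, 0 < r ∧ 1 ≤ C ∧ 0 < lam ∧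
      ∀ y : ℝ → EuclideanSpace ℝ (Fin N),
        (∀ i, ∀ t, 0 ≤ t → HasDerivAt (fun s => y s i)
          (∑ k, m k * (y t k - y t i) + σ * (θ i - y t i ^ p) * y t i) t) →
        ‖y 0 - ystar‖ ≤ r →
        ∀ t, 0 ≤ t → ‖y t - ystar‖ ≤ C * Real.exp (-lam * t) * ‖y 0 - ystar‖ := by
  have : Nonempty (Fin N) := Fin.pos_iff_nonempty.1 hN
  obtain ⟨δ, hδ, lam, hlam, hF⟩ :=
    exists_weightedSupDissipative_opinion (fun i => (hm i).le) hσ hp hpos heq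
  set wmin := univ.inf' univ_nonempty ystar.ofLp
  set wmax := univ.sup' univ_nonempty ystar.ofLp
  have hwmin : 0 < wmin := (lt_inf'_iff _).2 fun i _ => hpos i
  have hwmax : 0 < wmax := (hpos ⟨0, hN⟩).trans_le (le_sup' _ (mem_univ _))
  refine ⟨δ * wmin / 2, max 1 (√(Fintype.card (Fin N)) * wmax / wmin), lam, by positivity,
    le_max_left _ _, hlam, fun y hy hy0 t ht => ?_⟩
  have hV0 := weightedSupDist_le_norm_sub_div (x := y 0) hpos
  have hdecay := weightedSupDist_le_mul_exp (y := fun t => (y t).ofLp) hpos hF hlam.le hy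
    (hV0.trans_lt (by rw [div_lt_iff₀ hwmin]; linarith [mul_pos hδ hwmin])) ht
  calc ‖y t - ystar‖
      ≤ √(Fintype.card (Fin N)) * (wmax * weightedSupDist ystar.ofLp (y t).ofLp) :=
        norm_sub_le_sqrt_card_mul_weightedSupDist hpos
    _ ≤ √(Fintype.card (Fin N)) * (wmax * (‖y 0 - ystar‖ / wmin * exp (-lam * t))) := by
        gcongr
        exact hdecay.trans (by gcongr)
    _ = √(Fintype.card (Fin N)) * wmax / wmin * exp (-lam * t) * ‖y 0 - ystar‖ := by ring
    _ ≤ max 1 (√(Fintype.card (Fin N)) * wmax / wmin) * exp (-lam * t) * ‖y 0 - ystar‖ := by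
        gcongr
        exact le_max_right _ _

/-- The Nash equilibrium `y*` is a locally exponentially stable equilibrium of the opinion
system: there are `r > 0`, `C ≥ 1`, `λ > 0` such that any solution starting within distance
`r` of `y*` satisfies `‖y(t) - y*‖ ≤ C e^{-λ t} ‖y(0) - y*‖` for all `t ≥ 0`. -/
theorem nash_equilibrium_locally_exponentially_stable
    {N : ℕ} (hN : 0 < N)
    (m θ : Fin N → ℝ) (hm : ∀ i, 0 < m i) (hθ : ∀ i, 0 < θ i)
    {σ p : ℝ} (hσ : 0 < σ) (hp : 0 < p)
    (ystar : EuclideanSpace ℝ (Fin N)) (hpos : ∀ i, 0 < ystar i)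
    (heq : ∀ i, ∑ k, m k * (ystar k - ystar i) + σ * (θ i - ystar i ^ p) * ystar i = 0) :
    ∃ r C lam : ℝ, 0 < r ∧ 1 ≤ C ∧ 0 < lam ∧
      ∀ y : ℝ → EuclideanSpace ℝ (Fin N),
        (∀ i, ∀ t, 0 ≤ t → HasDerivAt (fun s => y s i)
          (∑ k, m k * (y t k - y t i) + σ * (θ i - y t i ^ p) * y t i) t) →
        ‖y 0 - ystar‖ ≤ r →
        ∀ t, 0 ≤ t → ‖y t - ystar‖ ≤ C * Real.exp (-lam * t) * ‖y 0 - ystar‖ :=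
  nash_equilibrium_locally_exponentially_stable_general hN m θ hm hσ hp ystar hpos heq
end

section
/- Fix p > 0. The map (θ, m, σ) ↦ y*(θ, m, σ), assigning to each parameter set (θ, m, σ) ∈ ℝᴺ₊ × ℝᴺ₊ × ℝ₊ its unique Nash equilibrium, is infinitely differentiable (C^∞) on ℝᴺ₊ × ℝᴺ₊ × ℝ₊. -/
open Filter Topology Finset Real

namespace NashAux

/-- The auxiliary strictly monotone function whose inverse builds the scalar root. -/
noncomputable def tau (p u : ℝ) : ℝ := u ^ p - u⁻¹

lemma tau_lt_tau {p : ℝ} (hp : 0 < p) {u v : ℝ} (hu : 0 < u) (huv : u < v) :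
    tau p u < tau p v := by
  have hv : 0 < v := hu.trans huv
  have h1 : u ^ p < v ^ p := Real.rpow_lt_rpow hu.le huv hp
  have h2 : v⁻¹ < u⁻¹ := by
    rw [inv_lt_inv₀ hv hu]; exact huv
  unfold tau; linarith

lemma tau_exists {p : ℝ} (hp : 0 < p) (t : ℝ) : ∃ u, 0 < u ∧ tau p u = t := by
  set u1 : ℝ := min 1 (1 + |t|)⁻¹ with hu1def
  set u2 : ℝ := max 1 ((1 + |t|) ^ p⁻¹) with hu2def
  have habs : (0:ℝ) < 1 + |t| := by positivity
  have hu1pos : 0 < u1 := lt_min one_pos (by positivity)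
  have hu1le1 : u1 ≤ 1 := min_le_left _ _
  have hu2ge1 : 1 ≤ u2 := le_max_left _ _
  have hu2pos : 0 < u2 := lt_of_lt_of_le one_pos hu2ge1
  have h12 : u1 ≤ u2 := le_trans hu1le1 hu2ge1
  have htau1 : tau p u1 ≤ t := by
    have h1 : u1 ^ p ≤ 1 := Real.rpow_le_one hu1pos.le hu1le1 hp.le
    have h2 : (1 + |t|) ≤ u1⁻¹ := by
      rw [le_inv_comm₀ habs hu1pos]
      exact min_le_right _ _
    have : tau p u1 ≤ 1 - (1 + |t|) := by unfold tau; linarith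
    have h3 : -|t| ≤ t := neg_abs_le t
    linarith
  have htau2 : t ≤ tau p u2 := by
    have h1 : (1 + |t|) ≤ u2 ^ p := by
      calc (1 + |t|) = ((1 + |t|) ^ p⁻¹) ^ p := (Real.rpow_inv_rpow habs.le hp.ne').symm
        _ ≤ u2 ^ p := Real.rpow_le_rpow (by positivity) (le_max_right _ _) hp.le
    have h2 : u2⁻¹ ≤ 1 := inv_le_one_of_one_le₀ hu2ge1
    have h3 : t ≤ |t| := le_abs_self t
    unfold tau; linarith
  have hcont : ContinuousOn (tau p) (Set.Icc u1 u2) := by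
    intro u hu
    have hupos : 0 < u := lt_of_lt_of_le hu1pos hu.1
    exact (((Real.continuousAt_rpow_const u p (Or.inl hupos.ne')).sub
      (continuousAt_inv₀ hupos.ne'))).continuousWithinAt
  have := intermediate_value_Icc h12 hcont
  obtain ⟨u, hu, hut⟩ := this ⟨htau1, htau2⟩
  exact ⟨u, lt_of_lt_of_le hu1pos hu.1, hut⟩

open Classical in
noncomputable def gfun (p t : ℝ) : ℝ :=
  if h : ∃ u, 0 < u ∧ tau p u = t then h.choose else 1

lemma gfun_spec {p : ℝ} (hp : 0 < p) (t : ℝ) :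
    0 < gfun p t ∧ tau p (gfun p t) = t := by
  classical
  rw [gfun, dif_pos (tau_exists hp t)]
  exact (tau_exists hp t).choose_spec

lemma gfun_pos {p : ℝ} (hp : 0 < p) (t : ℝ) : 0 < gfun p t := (gfun_spec hp t).1

lemma tau_gfun {p : ℝ} (hp : 0 < p) (t : ℝ) : tau p (gfun p t) = t := (gfun_spec hp t).2

lemma eq_gfun {p : ℝ} (hp : 0 < p) {u t : ℝ} (hu : 0 < u) (ht : tau p u = t) :
    u = gfun p t := by
  rcases lt_trichotomy u (gfun p t) with h | h | h
  · have := tau_lt_tau hp hu h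
    rw [ht, tau_gfun hp t] at this; exact absurd this (lt_irrefl t)
  · exact h
  · have := tau_lt_tau hp (gfun_pos hp t) h
    rw [ht, tau_gfun hp t] at this; exact absurd this (lt_irrefl t)


/-- One-dimensional implicit function theorem with parameters. -/
lemma implicit_param {E : Type*} [NormedAddCommGroup E] [NormedSpace ℝ E] [CompleteSpace E]
    {G : E × ℝ → ℝ} {q0 : E} {S0 c : ℝ}
    (hG : ContDiffAt ℝ (⊤ : ℕ∞) G (q0, S0)) (hG0 : G (q0, S0) = 0)
    (hc : HasDerivAt (fun S => G (q0, S)) c S0) (hc0 : c ≠ 0) :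
    ∃ φ : E → ℝ, ContDiffAt ℝ (⊤ : ℕ∞) φ q0 ∧ φ q0 = S0 ∧ ∀ᶠ q in 𝓝 q0, G (q, φ q) = 0 := by
  set x0 : E × ℝ := (q0, S0) with hx0
  have hdiff : DifferentiableAt ℝ G x0 := hG.differentiableAt (by simp)
  set L : E × ℝ →L[ℝ] ℝ := fderiv ℝ G x0 with hLdef
  have hL : HasFDerivAt G L x0 := hdiff.hasFDerivAt
  -- identify c with L (0, 1)
  have hinner : HasDerivAt (fun S : ℝ => ((q0, S) : E × ℝ)) ((0 : E), (1 : ℝ)) S0 :=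
    HasDerivAt.prodMk (hasDerivAt_const S0 q0) (hasDerivAt_id S0)
  have hcomp : HasDerivAt (fun S => G (q0, S)) (L ((0 : E), (1 : ℝ))) S0 :=
    hL.comp_hasDerivAt S0 hinner
  have hceq : L ((0 : E), (1 : ℝ)) = c := hcomp.unique hc
  -- the derivative of Φ as a continuous linear equiv
  set f₁ : E × ℝ →L[ℝ] E × ℝ := (ContinuousLinearMap.fst ℝ E ℝ).prod L with hf₁def
  set f₂ : E × ℝ →L[ℝ] E × ℝ := (ContinuousLinearMap.fst ℝ E ℝ).prod
      (c⁻¹ • ((ContinuousLinearMap.snd ℝ E ℝ) -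
        L.comp ((ContinuousLinearMap.fst ℝ E ℝ).prod 0))) with hf₂def
  have hLsplit : ∀ u : E, ∀ s : ℝ, L (u, s) = L (u, 0) + s * c := by
    intro u s
    have : ((u, s) : E × ℝ) = (u, 0) + s • ((0 : E), (1 : ℝ)) := by
      simp [Prod.ext_iff]
    rw [this, map_add, map_smul, hceq]
    simp [smul_eq_mul]
  have h₁ : Function.LeftInverse f₂ f₁ := by
    intro x
    obtain ⟨u, s⟩ := x
    simp only [hf₁def, hf₂def, ContinuousLinearMap.prod_apply, ContinuousLinearMap.coe_fst',
      ContinuousLinearMap.smul_apply, ContinuousLinearMap.sub_apply,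
      ContinuousLinearMap.coe_snd', ContinuousLinearMap.comp_apply,
      ContinuousLinearMap.zero_apply, Prod.mk.injEq]
    refine ⟨trivial, ?_⟩
    rw [hLsplit u s]
    field_simp
    rw [smul_eq_mul, add_sub_cancel_left, one_div, inv_mul_cancel_left₀ hc0]
  have h₂ : Function.RightInverse f₂ f₁ := by
    intro x
    obtain ⟨u, v⟩ := x
    simp only [hf₁def, hf₂def, ContinuousLinearMap.prod_apply, ContinuousLinearMap.coe_fst',
      ContinuousLinearMap.smul_apply, ContinuousLinearMap.sub_apply,
      ContinuousLinearMap.coe_snd', ContinuousLinearMap.comp_apply,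
      ContinuousLinearMap.zero_apply, Prod.mk.injEq]
    refine ⟨trivial, ?_⟩
    rw [hLsplit u _]
    field_simp
    rw [smul_eq_mul, one_div, mul_inv_cancel_left₀ hc0, add_sub_cancel]
  set A : (E × ℝ) ≃L[ℝ] E × ℝ := ContinuousLinearEquiv.equivOfInverse f₁ f₂ h₁ h₂ with hAdef
  set Φ : E × ℝ → E × ℝ := fun x => (x.1, G x) with hΦdef
  have hΦcd : ContDiffAt ℝ (⊤ : ℕ∞) Φ x0 := ContDiffAt.prodMk contDiffAt_fst hG
  have hΦfd : HasFDerivAt Φ (A : E × ℝ →L[ℝ] E × ℝ) x0 := by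
    have : HasFDerivAt Φ f₁ x0 := HasFDerivAt.prodMk (hasFDerivAt_fst) hL
    exact this
  have hinv := hΦcd.to_localInverse hΦfd (by simp)
  set Ψ := hΦcd.localInverse hΦfd (by simp) with hΨdef
  have hΦx0 : Φ x0 = (q0, 0) := by simp [hΦdef, hx0, hG0, show G (q0, S0) = 0 from hG0]
  refine ⟨fun q => (Ψ (q, 0)).2, ?_, ?_, ?_⟩
  · have hq0 : ((q0, 0) : E × ℝ) = Φ x0 := hΦx0.symm
    have hcomp : ContDiffAt ℝ (⊤ : ℕ∞) (fun q : E => Ψ (q, 0)) q0 := by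
      refine ContDiffAt.comp q0 ?_ (ContDiffAt.prodMk contDiffAt_id contDiffAt_const)
      rw [hq0]; exact hinv
    exact contDiffAt_snd.comp q0 hcomp
  · have h : Ψ (q0, 0) = x0 := by
      rw [hΦx0.symm]
      exact hΦcd.localInverse_apply_image hΦfd (by simp)
    show (Ψ (q0, 0)).2 = S0
    rw [h]
  · have hsf := hΦcd.hasStrictFDerivAt' hΦfd (by simp)
    have hri : ∀ᶠ y in 𝓝 (Φ x0), Φ (Ψ y) = y := hsf.eventually_right_inverse
    rw [hΦx0] at hri
    have hmap : ContinuousAt (fun q : E => ((q, 0) : E × ℝ)) q0 :=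
      (continuous_id.prodMk continuous_const).continuousAt
    have hev : ∀ᶠ q in 𝓝 q0, Φ (Ψ (q, 0)) = (q, 0) := hmap.eventually hri
    filter_upwards [hev] with q hq
    have h1 : (Ψ (q, 0)).1 = q := congrArg Prod.fst hq
    have h2 : G (Ψ (q, 0)) = 0 := congrArg Prod.snd hq
    have h3 : ((q, (Ψ (q, 0)).2) : E × ℝ) = Ψ (q, 0) := Prod.ext h1.symm rfl
    rw [h3]
    exact h2
  
lemma contDiffAt_gfun {p : ℝ} (hp : 0 < p) (t0 : ℝ) : ContDiffAt ℝ (⊤ : ℕ∞) (gfun p) t0 := by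
  set u0 := gfun p t0 with hu0def
  have hu0 : 0 < u0 := gfun_pos hp t0
  set G : ℝ × ℝ → ℝ := fun x => tau p x.2 - x.1 with hGdef
  have hGcd : ContDiffAt ℝ (⊤ : ℕ∞) G (t0, u0) := by
    have h1 : ContDiffAt ℝ (⊤ : ℕ∞) (fun x : ℝ × ℝ => x.2 ^ p) (t0, u0) :=
      ContDiffAt.comp ((t0, u0) : ℝ × ℝ) (Real.contDiffAt_rpow_const_of_ne hu0.ne') contDiffAt_snd
    have h2 : ContDiffAt ℝ (⊤ : ℕ∞) (fun x : ℝ × ℝ => (x.2)⁻¹) (t0, u0) :=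
      ContDiffAt.comp ((t0, u0) : ℝ × ℝ) (contDiffAt_inv ℝ hu0.ne') contDiffAt_snd
    exact (h1.sub h2).sub contDiffAt_fst
  set d : ℝ := p * u0 ^ (p - 1) - -(u0 ^ 2)⁻¹ with hddef
  have hdG : HasDerivAt (fun u => G (t0, u)) d u0 :=
    ((Real.hasDerivAt_rpow_const (Or.inl hu0.ne')).sub (hasDerivAt_inv hu0.ne')).sub_const t0
  have hdne : d ≠ 0 := by
    have h1 : 0 < p * u0 ^ (p - 1) := mul_pos hp (Real.rpow_pos_of_pos hu0 _)
    have h2 : 0 < (u0 ^ 2)⁻¹ := by positivity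
    rw [hddef]; nlinarith
  have hG0 : G (t0, u0) = 0 := by
    simp [hGdef, hu0def, tau_gfun hp t0]
  obtain ⟨φ, hφcd, hφ0, hφev⟩ := implicit_param hGcd hG0 hdG hdne
  have hpos : ∀ᶠ t in 𝓝 t0, 0 < φ t := by
    have h := hφcd.continuousAt
    exact h.eventually (by rw [hφ0]; exact eventually_gt_nhds hu0)
  refine hφcd.congr_of_eventuallyEq ?_
  filter_upwards [hφev, hpos] with t h1 h2
  have htau : tau p (φ t) = t := by
    have : tau p (φ t) - t = 0 := h1
    linarith
  exact (eq_gfun hp h2 htau).symm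

/-- The unique positive root `y` of `b * y ^ (p+1) - k * y = a`. -/
noncomputable def phi (p b k a : ℝ) : ℝ :=
  (a / b) ^ (p + 1)⁻¹ * gfun p (k * (a / b) ^ (p + 1)⁻¹ / a)

lemma phi_pos {p b k a : ℝ} (hp : 0 < p) (hb : 0 < b) (ha : 0 < a) : 0 < phi p b k a :=
  mul_pos (Real.rpow_pos_of_pos (div_pos ha hb) _) (gfun_pos hp _)

lemma phi_root {p b k a : ℝ} (hp : 0 < p) (hb : 0 < b) (ha : 0 < a) :
    b * (phi p b k a) ^ (p + 1) - k * phi p b k a = a := by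
  set r : ℝ := (a / b) ^ (p + 1)⁻¹ with hrdef
  have hr : 0 < r := Real.rpow_pos_of_pos (div_pos ha hb) _
  set t : ℝ := k * r / a with htdef
  set u : ℝ := gfun p t with hudef
  have hu : 0 < u := gfun_pos hp t
  have htau : u ^ p - u⁻¹ = t := tau_gfun hp t
  have hup : u ^ (p + 1) = t * u + 1 := by
    rw [Real.rpow_add hu, Real.rpow_one, ← htau]
    field_simp
    ring
  have hrp : r ^ (p + 1) = a / b := by
    rw [hrdef]
    exact Real.rpow_inv_rpow (div_pos ha hb).le (by positivity)
  have hmul : (r * u) ^ (p + 1) = (a / b) * (t * u + 1) := by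
    rw [Real.mul_rpow hr.le hu.le, hrp, hup]
  show b * (r * u) ^ (p + 1) - k * (r * u) = a
  rw [hmul, htdef]
  field_simp
  ring

lemma chi_key {p b : ℝ} (hp : 0 < p) (hb : 0 < b) (k : ℝ) {u v : ℝ} (hu : 0 < u) (huv : u < v) :
    v * (b * u ^ (p + 1) - k * u) < u * (b * v ^ (p + 1) - k * v) := by
  have hv : 0 < v := hu.trans huv
  have h1 : u ^ (p + 1) = u ^ p * u := by rw [Real.rpow_add hu, Real.rpow_one]
  have h2 : v ^ (p + 1) = v ^ p * v := by rw [Real.rpow_add hv, Real.rpow_one]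
  have h3 : u ^ p < v ^ p := Real.rpow_lt_rpow hu.le huv hp
  rw [h1, h2]
  nlinarith [mul_pos hu hv, mul_pos (mul_pos hb (mul_pos hu hv)) (sub_pos.2 h3)]

lemma phi_unique {p b k a : ℝ} (hp : 0 < p) (hb : 0 < b) (ha : 0 < a) {y : ℝ}
    (hy : 0 < y) (hroot : b * y ^ (p + 1) - k * y = a) : y = phi p b k a := by
  have hφ : 0 < phi p b k a := phi_pos hp hb ha
  rcases lt_trichotomy y (phi p b k a) with h | h | h
  · have := chi_key hp hb k hy h
    rw [hroot, phi_root hp hb ha] at this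
    nlinarith
  · exact h
  · have := chi_key hp hb k hφ h
    rw [hroot, phi_root hp hb ha] at this
    nlinarith

lemma lt_phi {p b k a : ℝ} (hp : 0 < p) (hb : 0 < b) (ha : 0 < a) {y : ℝ}
    (hy : 0 < y) (h : b * y ^ (p + 1) - k * y < a) : y < phi p b k a := by
  have hφ : 0 < phi p b k a := phi_pos hp hb ha
  rcases lt_trichotomy y (phi p b k a) with h' | h' | h'
  · exact h'
  · exfalso; rw [h', phi_root hp hb ha] at h; exact lt_irrefl a h
  · exfalso
    have := chi_key hp hb k hφ h'
    rw [phi_root hp hb ha] at this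
    nlinarith
lemma phi_lt {p b k a : ℝ} (hp : 0 < p) (hb : 0 < b) (ha : 0 < a) {y : ℝ}
    (hy : 0 < y) (h : a < b * y ^ (p + 1) - k * y) : phi p b k a < y := by
  have hφ : 0 < phi p b k a := phi_pos hp hb ha
  rcases lt_trichotomy (phi p b k a) y with h' | h' | h'
  · exact h'
  · exfalso; rw [← h', phi_root hp hb ha] at h; exact lt_irrefl a h
  · exfalso
    have := chi_key hp hb k hy h'
    rw [phi_root hp hb ha] at this
    nlinarith

lemma phi_contDiffAt {p : ℝ} (hp : 0 < p) {E : Type*} [NormedAddCommGroup E]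
    [NormedSpace ℝ E] {f1 f2 f3 : E → ℝ} {x : E}
    (h1 : ContDiffAt ℝ (⊤ : ℕ∞) f1 x) (h2 : ContDiffAt ℝ (⊤ : ℕ∞) f2 x) (h3 : ContDiffAt ℝ (⊤ : ℕ∞) f3 x)
    (hb : 0 < f1 x) (ha : 0 < f3 x) :
    ContDiffAt ℝ (⊤ : ℕ∞) (fun x => phi p (f1 x) (f2 x) (f3 x)) x := by
  have hdiv : ContDiffAt ℝ (⊤ : ℕ∞) (fun x => f3 x / f1 x) x := h3.div h1 hb.ne'
  have hr : ContDiffAt ℝ (⊤ : ℕ∞) (fun x => (f3 x / f1 x) ^ (p + 1)⁻¹) x :=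
    hdiv.rpow_const_of_ne (div_pos ha hb).ne'
  exact hr.mul ((contDiffAt_gfun hp _).comp x ((h2.mul hr).div h3 ha.ne'))

lemma phi_hasDerivAt {p b : ℝ} (hp : 0 < p) (hb : 0 < b) (k : ℝ) {a0 : ℝ} (ha : 0 < a0) :
    ∃ D, HasDerivAt (fun a => phi p b k a) D a0 ∧
      (b * (p + 1) * (phi p b k a0) ^ p - k) * D = 1 := by
  have hcd : ContDiffAt ℝ (⊤ : ℕ∞) (fun a => phi p b k a) a0 :=
    phi_contDiffAt hp contDiffAt_const contDiffAt_const contDiffAt_id hb ha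
  have hdiff := hcd.differentiableAt (by simp)
  set D := deriv (fun a => phi p b k a) a0 with hDdef
  have hD : HasDerivAt (fun a => phi p b k a) D a0 := hdiff.hasDerivAt
  set φ0 := phi p b k a0 with hφ0def
  have hF : HasDerivAt (fun a => b * (phi p b k a) ^ (p + 1) - k * phi p b k a)
      (D * (p + 1) * φ0 ^ ((p + 1) - 1) * b - k * D) a0 := by
    have h1 : HasDerivAt (fun a => (phi p b k a) ^ (p + 1))
        (D * (p + 1) * φ0 ^ ((p + 1) - 1)) a0 :=
      hD.rpow_const (Or.inr (by linarith))
    have h2 := (h1.const_mul b).fun_sub (hD.const_mul k)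
    rw [show D * (p + 1) * φ0 ^ ((p + 1) - 1) * b - k * D
        = b * (D * (p + 1) * φ0 ^ ((p + 1) - 1)) - k * D by ring]
    exact h2
  have hFa : (fun a => b * (phi p b k a) ^ (p + 1) - k * phi p b k a) =ᶠ[𝓝 a0] id := by
    filter_upwards [Ioi_mem_nhds ha] with a haa
    exact phi_root hp hb haa
  have hone : HasDerivAt (fun a => b * (phi p b k a) ^ (p + 1) - k * phi p b k a) 1 a0 :=
    (hasDerivAt_id a0).congr_of_eventuallyEq hFa
  have heq := hone.unique hF
  refine ⟨D, hD, ?_⟩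
  rw [show (p + 1) - 1 = p by ring] at heq
  linear_combination -1 * heq

/-- The aggregate fixed-point function whose root is the equilibrium mean-mass value. -/
noncomputable def Hsum {N : ℕ} (p : ℝ) (θ m : Fin N → ℝ) (σ S : ℝ) : ℝ :=
  (∑ i, m i * phi p σ (σ * θ i - ∑ k, m k) S) - S

lemma slice_contDiffAt {N : ℕ} {p : ℝ} (hp : 0 < p) {θ m : Fin N → ℝ} {σ : ℝ}
    (hσ : 0 < σ) {S0 : ℝ} (hS0 : 0 < S0) :
    ContDiffAt ℝ (⊤ : ℕ∞) (fun S => Hsum p θ m σ S) S0 := by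
  unfold Hsum
  refine ContDiffAt.sub ?_ contDiffAt_id
  refine ContDiffAt.sum fun i _ => ?_
  exact contDiffAt_const.mul
    (phi_contDiffAt hp contDiffAt_const contDiffAt_const contDiffAt_id hσ hS0)

lemma exists_root {N : ℕ} (hN : 0 < N) {p : ℝ} (hp : 0 < p) {θ m : Fin N → ℝ} {σ : ℝ}
    (hθ : ∀ i, 0 < θ i) (hm : ∀ i, 0 < m i) (hσ : 0 < σ) :
    ∃ S, 0 < S ∧ Hsum p θ m σ S = 0 := by
  haveI : Nonempty (Fin N) := ⟨⟨0, hN⟩⟩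
  set M := ∑ k, m k with hM
  have hMpos : 0 < M := Finset.sum_pos (fun i _ => hm i) Finset.univ_nonempty
  set t0 : ℝ := Finset.univ.inf' Finset.univ_nonempty (fun i => θ i ^ p⁻¹) with ht0
  set s0 : ℝ := Finset.univ.sup' Finset.univ_nonempty (fun i => θ i ^ p⁻¹) with hs0
  have ht0pos : 0 < t0 := by
    rw [ht0, Finset.lt_inf'_iff]
    exact fun i _ => Real.rpow_pos_of_pos (hθ i) _
  have hts : t0 ≤ s0 := by
    have i0 : Fin N := ⟨0, hN⟩
    exact le_trans (Finset.inf'_le (fun i => θ i ^ p⁻¹) (Finset.mem_univ i0)) (Finset.le_sup' (fun i => θ i ^ p⁻¹) (Finset.mem_univ i0))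
  have hs0pos : 0 < s0 := lt_of_lt_of_le ht0pos hts
  set Slow := M * t0 / 2 with hSlow
  set Shigh := 2 * M * s0 with hShigh
  have hSlowpos : 0 < Slow := by positivity
  have hShighpos : 0 < Shigh := by positivity
  have hle : Slow ≤ Shigh := by
    rw [hSlow, hShigh]; nlinarith
  -- value at Slow is positive
  have hlow : 0 < Hsum p θ m σ Slow := by
    have hkey : ∀ i : Fin N, Slow / M < phi p σ (σ * θ i - M) Slow := by
      intro i
      have hy : 0 < Slow / M := div_pos hSlowpos hMpos
      refine lt_phi hp hσ hSlowpos hy ?_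
      have hyp : (Slow / M) ^ p < θ i := by
        have h1 : Slow / M = t0 / 2 := by rw [hSlow]; field_simp
        have h2 : t0 / 2 < θ i ^ p⁻¹ :=
          lt_of_lt_of_le (by linarith) (Finset.inf'_le (fun j => θ j ^ p⁻¹) (Finset.mem_univ i))
        calc (Slow / M) ^ p < (θ i ^ p⁻¹) ^ p :=
              Real.rpow_lt_rpow hy.le (h1 ▸ h2) hp
          _ = θ i := Real.rpow_inv_rpow (hθ i).le hp.ne'
      have hsplit : (Slow / M) ^ (p + 1) = (Slow / M) ^ p * (Slow / M) := by
        rw [Real.rpow_add hy, Real.rpow_one]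
      rw [hsplit]
      have hMS : M * (Slow / M) = Slow := by field_simp
      nlinarith [mul_pos hσ hy]
    have hsum : ∑ i, m i * (Slow / M) < ∑ i, m i * phi p σ (σ * θ i - M) Slow :=
      Finset.sum_lt_sum_of_nonempty Finset.univ_nonempty
        (fun i _ => by exact mul_lt_mul_of_pos_left (hkey i) (hm i))
    have heq : ∑ i, m i * (Slow / M) = Slow := by
      rw [← Finset.sum_mul, ← hM]; field_simp
    unfold Hsum
    rw [← hM]
    linarith [heq ▸ hsum]
  -- value at Shigh is negative
  have hhigh : Hsum p θ m σ Shigh < 0 := by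
    have hkey : ∀ i : Fin N, phi p σ (σ * θ i - M) Shigh < Shigh / M := by
      intro i
      have hy : 0 < Shigh / M := div_pos hShighpos hMpos
      refine phi_lt hp hσ hShighpos hy ?_
      have hyp : θ i < (Shigh / M) ^ p := by
        have h1 : Shigh / M = 2 * s0 := by rw [hShigh]; field_simp
        have h2 : θ i ^ p⁻¹ < 2 * s0 :=
          lt_of_le_of_lt (Finset.le_sup' (fun j => θ j ^ p⁻¹) (Finset.mem_univ i)) (by linarith)
        calc θ i = (θ i ^ p⁻¹) ^ p := (Real.rpow_inv_rpow (hθ i).le hp.ne').symm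
          _ < (Shigh / M) ^ p :=
              Real.rpow_lt_rpow (Real.rpow_pos_of_pos (hθ i) _).le (h1 ▸ h2) hp
      have hsplit : (Shigh / M) ^ (p + 1) = (Shigh / M) ^ p * (Shigh / M) := by
        rw [Real.rpow_add hy, Real.rpow_one]
      rw [hsplit]
      have hMS : M * (Shigh / M) = Shigh := by field_simp
      nlinarith [mul_pos hσ hy]
    have hsum : ∑ i, m i * phi p σ (σ * θ i - M) Shigh < ∑ i, m i * (Shigh / M) :=
      Finset.sum_lt_sum_of_nonempty Finset.univ_nonempty
        (fun i _ => by exact mul_lt_mul_of_pos_left (hkey i) (hm i))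
    have heq : ∑ i, m i * (Shigh / M) = Shigh := by
      rw [← Finset.sum_mul, ← hM]; field_simp
    unfold Hsum
    rw [← hM]
    linarith [heq ▸ hsum]
  have hcont : ContinuousOn (fun S => Hsum p θ m σ S) (Set.Icc Slow Shigh) := by
    intro S hS
    exact (slice_contDiffAt hp hσ (lt_of_lt_of_le hSlowpos hS.1)).continuousAt.continuousWithinAt
  have := intermediate_value_Icc' hle hcont
  obtain ⟨S, hSmem, hSval⟩ := this ⟨hhigh.le, hlow.le⟩
  exact ⟨S, lt_of_lt_of_le hSlowpos hSmem.1, hSval⟩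

lemma root_unique {N : ℕ} (hN : 0 < N) {p : ℝ} (hp : 0 < p) {θ m : Fin N → ℝ} {σ : ℝ}
    (hθ : ∀ i, 0 < θ i) (hm : ∀ i, 0 < m i) (hσ : 0 < σ) {S1 S2 : ℝ}
    (h1 : 0 < S1) (e1 : Hsum p θ m σ S1 = 0) (h2 : 0 < S2) (e2 : Hsum p θ m σ S2 = 0) :
    S1 = S2 := by
  haveI : Nonempty (Fin N) := ⟨⟨0, hN⟩⟩
  have key : ∀ T1 T2 : ℝ, 0 < T1 → 0 < T2 → T1 < T2 →
      Hsum p θ m σ T1 = 0 → Hsum p θ m σ T2 = 0 → False := by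
    intro T1 T2 hT1 hT2 hlt r1 r2
    set M := ∑ k, m k with hM
    have hr1 : ∑ i, m i * phi p σ (σ * θ i - M) T1 = T1 := by
      unfold Hsum at r1; rw [← hM] at r1; linarith
    have hr2 : ∑ i, m i * phi p σ (σ * θ i - M) T2 = T2 := by
      unfold Hsum at r2; rw [← hM] at r2; linarith
    set lam := T2 / T1 with hlam
    have hlam1 : 1 < lam := (one_lt_div hT1).2 hlt
    have hkey : ∀ i : Fin N, phi p σ (σ * θ i - M) T2 < lam * phi p σ (σ * θ i - M) T1 := by
      intro i
      set k := σ * θ i - M with hk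
      set φ1 := phi p σ k T1 with hφ1
      have hφ1pos : 0 < φ1 := phi_pos hp hσ hT1
      have hvpos : 0 < lam * φ1 := by positivity
      have hlt' : φ1 < lam * φ1 := by nlinarith
      have hchi := chi_key hp hσ k hφ1pos hlt'
      rw [phi_root hp hσ hT1] at hchi
      -- hchi : lam * φ1 * T1 < φ1 * (σ * (lam * φ1) ^ (p+1) - k * (lam * φ1))
      refine phi_lt hp hσ hT2 hvpos ?_
      have hT2eq : lam * T1 = T2 := by rw [hlam]; field_simp
      nlinarith [hφ1pos]
    have hsum : ∑ i, m i * phi p σ (σ * θ i - M) T2 <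
        ∑ i, lam * (m i * phi p σ (σ * θ i - M) T1) :=
      Finset.sum_lt_sum_of_nonempty Finset.univ_nonempty (fun i _ => by
        have := hkey i
        nlinarith [hm i])
    rw [← Finset.mul_sum, hr1, hr2, hlam] at hsum
    rw [div_mul_cancel₀ T2 hT1.ne'] at hsum
    exact lt_irrefl T2 hsum
  rcases lt_trichotomy S1 S2 with h | h | h
  · exact absurd (key S1 S2 h1 h2 h e1 e2) (fun x => x)
  · exact h
  · exact absurd (key S2 S1 h2 h1 h e2 e1) (fun x => x)

lemma hsum_deriv_neg {N : ℕ} (hN : 0 < N) {p : ℝ} (hp : 0 < p) {θ m : Fin N → ℝ} {σ : ℝ}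
    (hθ : ∀ i, 0 < θ i) (hm : ∀ i, 0 < m i) (hσ : 0 < σ) {S0 : ℝ}
    (hS0 : 0 < S0) (e : Hsum p θ m σ S0 = 0) :
    ∃ c, HasDerivAt (fun S => Hsum p θ m σ S) c S0 ∧ c < 0 := by
  haveI : Nonempty (Fin N) := ⟨⟨0, hN⟩⟩
  set M := ∑ k, m k with hM
  have hroot : ∑ i, m i * phi p σ (σ * θ i - M) S0 = S0 := by
    unfold Hsum at e; rw [← hM] at e; linarith
  choose D hD hDeq using fun i : Fin N => phi_hasDerivAt hp hσ (σ * θ i - M) hS0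
  have hDS : ∀ i, 0 < D i ∧ D i * S0 < phi p σ (σ * θ i - M) S0 := by
    intro i
    set k := σ * θ i - M with hk
    set φ := phi p σ k S0 with hφ
    have hφpos : 0 < φ := phi_pos hp hσ hS0
    have hφp : (0:ℝ) < φ ^ p := Real.rpow_pos_of_pos hφpos p
    have hφp1 : φ ^ (p + 1) = φ ^ p * φ := by rw [Real.rpow_add hφpos, Real.rpow_one]
    have hrootφ : σ * φ ^ (p + 1) - k * φ = S0 := phi_root hp hσ hS0
    set den := σ * (p + 1) * φ ^ p - k with hden
    have hdenφ : den * φ = p * σ * (φ ^ p * φ) + S0 := by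
      rw [hden]
      nlinarith [hrootφ, hφp1]
    have hdenpos : 0 < den := by nlinarith [mul_pos (mul_pos (mul_pos hp hσ) hφp) hφpos]
    have hEq : den * D i = 1 := hDeq i
    have hDpos : 0 < D i := by nlinarith
    constructor
    · exact hDpos
    · have h2 : D i * (den * φ) = φ := by
        calc D i * (den * φ) = (den * D i) * φ := by ring
          _ = φ := by rw [hEq]; ring
      rw [hdenφ] at h2
      nlinarith [mul_pos (mul_pos (mul_pos hp hσ) hφp) hφpos]
  set c := (∑ i, m i * D i) - 1 with hc
  refine ⟨c, ?_, ?_⟩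
  · have : HasDerivAt (fun S => ∑ i, m i * phi p σ (σ * θ i - M) S) (∑ i, m i * D i) S0 :=
      HasDerivAt.fun_sum fun i _ => (hD i).const_mul (m i)
    have h2 := this.sub (hasDerivAt_id S0)
    unfold Hsum
    rw [← hM]
    exact h2
  · have hlt : S0 * ∑ i, m i * D i < S0 := by
      calc S0 * ∑ i, m i * D i = ∑ i, m i * (D i * S0) := by
            rw [Finset.mul_sum]; exact Finset.sum_congr rfl fun i _ => by ring
        _ < ∑ i, m i * phi p σ (σ * θ i - M) S0 :=
            Finset.sum_lt_sum_of_nonempty Finset.univ_nonempty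
              (fun i _ => mul_lt_mul_of_pos_left (hDS i).2 (hm i))
        _ = S0 := hroot
    have h2 : (∑ i, m i * D i) < 1 := by nlinarith [hlt]
    rw [hc]; linarith

lemma hsum_joint_contDiffAt {N : ℕ} {p : ℝ} (hp : 0 < p)
    {x0 : ((Fin N → ℝ) × (Fin N → ℝ) × ℝ) × ℝ}
    (hσ : 0 < x0.1.2.2) (hS : 0 < x0.2) :
    ContDiffAt ℝ (⊤ : ℕ∞) (fun x : ((Fin N → ℝ) × (Fin N → ℝ) × ℝ) × ℝ =>
      Hsum p x.1.1 x.1.2.1 x.1.2.2 x.2) x0 := by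
  have hσc : ContDiff ℝ (⊤ : ℕ∞) (fun x : ((Fin N → ℝ) × (Fin N → ℝ) × ℝ) × ℝ => x.1.2.2) :=
    (contDiff_snd.comp contDiff_snd).comp contDiff_fst
  have hθc : ∀ i, ContDiff ℝ (⊤ : ℕ∞) (fun x : ((Fin N → ℝ) × (Fin N → ℝ) × ℝ) × ℝ => x.1.1 i) :=
    fun i => (ContinuousLinearMap.proj (R := ℝ) (φ := fun _ : Fin N => ℝ) i).contDiff.comp
      (contDiff_fst.comp contDiff_fst)
  have hmc : ∀ i, ContDiff ℝ (⊤ : ℕ∞) (fun x : ((Fin N → ℝ) × (Fin N → ℝ) × ℝ) × ℝ => x.1.2.1 i) :=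
    fun i => (ContinuousLinearMap.proj (R := ℝ) (φ := fun _ : Fin N => ℝ) i).contDiff.comp
      ((contDiff_fst.comp contDiff_snd).comp contDiff_fst)
  have hMc : ContDiff ℝ (⊤ : ℕ∞) (fun x : ((Fin N → ℝ) × (Fin N → ℝ) × ℝ) × ℝ => ∑ k, x.1.2.1 k) :=
    ContDiff.sum fun i _ => hmc i
  unfold Hsum
  refine ContDiffAt.sub ?_ contDiff_snd.contDiffAt
  refine ContDiffAt.sum fun i _ => ?_
  refine (hmc i).contDiffAt.mul ?_
  exact phi_contDiffAt hp hσc.contDiffAt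
    ((hσc.contDiffAt.mul (hθc i).contDiffAt).sub hMc.contDiffAt)
    contDiff_snd.contDiffAt hσ hS

open Classical in
noncomputable def Sstar {N : ℕ} (p : ℝ) (q : (Fin N → ℝ) × (Fin N → ℝ) × ℝ) : ℝ :=
  if h : ∃ S, 0 < S ∧ Hsum p q.1 q.2.1 q.2.2 S = 0 then h.choose else 1

lemma Sstar_spec {N : ℕ} (hN : 0 < N) {p : ℝ} (hp : 0 < p)
    {q : (Fin N → ℝ) × (Fin N → ℝ) × ℝ}
    (hθ : ∀ i, 0 < q.1 i) (hm : ∀ i, 0 < q.2.1 i) (hσ : 0 < q.2.2) :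
    0 < Sstar p q ∧ Hsum p q.1 q.2.1 q.2.2 (Sstar p q) = 0 := by
  classical
  have hex := exists_root hN hp hθ hm hσ
  rw [Sstar, dif_pos hex]
  exact hex.choose_spec

lemma Sstar_eq {N : ℕ} (hN : 0 < N) {p : ℝ} (hp : 0 < p)
    {q : (Fin N → ℝ) × (Fin N → ℝ) × ℝ}
    (hθ : ∀ i, 0 < q.1 i) (hm : ∀ i, 0 < q.2.1 i) (hσ : 0 < q.2.2) {S : ℝ}
    (hS : 0 < S) (hroot : Hsum p q.1 q.2.1 q.2.2 S = 0) : S = Sstar p q := by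
  obtain ⟨h1, h2⟩ := Sstar_spec hN hp hθ hm hσ
  exact root_unique hN hp hθ hm hσ hS hroot h1 h2

lemma region_isOpen (N : ℕ) :
    IsOpen {q : (Fin N → ℝ) × (Fin N → ℝ) × ℝ |
      (∀ i, 0 < q.1 i) ∧ (∀ i, 0 < q.2.1 i) ∧ 0 < q.2.2} := by
  have h1 : IsOpen {q : (Fin N → ℝ) × (Fin N → ℝ) × ℝ | ∀ i, 0 < q.1 i} := by
    rw [Set.setOf_forall]
    exact isOpen_iInter_of_finite fun i =>
      isOpen_Ioi.preimage ((continuous_apply i).comp continuous_fst)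
  have h2 : IsOpen {q : (Fin N → ℝ) × (Fin N → ℝ) × ℝ | ∀ i, 0 < q.2.1 i} := by
    rw [Set.setOf_forall]
    exact isOpen_iInter_of_finite fun i =>
      isOpen_Ioi.preimage ((continuous_apply i).comp (continuous_fst.comp continuous_snd))
  have h3 : IsOpen {q : (Fin N → ℝ) × (Fin N → ℝ) × ℝ | 0 < q.2.2} :=
    isOpen_Ioi.preimage (continuous_snd.comp continuous_snd)
  exact h1.and (h2.and h3)

lemma sstar_contDiffAt {N : ℕ} (hN : 0 < N) {p : ℝ} (hp : 0 < p)
    {q0 : (Fin N → ℝ) × (Fin N → ℝ) × ℝ}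
    (hθ : ∀ i, 0 < q0.1 i) (hm : ∀ i, 0 < q0.2.1 i) (hσ : 0 < q0.2.2) :
    ContDiffAt ℝ (⊤ : ℕ∞) (Sstar p) q0 := by
  obtain ⟨hS0pos, hS0root⟩ := Sstar_spec hN hp hθ hm hσ
  set S0 := Sstar p q0 with hS0def
  obtain ⟨c, hc, hcneg⟩ := hsum_deriv_neg hN hp hθ hm hσ hS0pos hS0root
  have hG : ContDiffAt ℝ (⊤ : ℕ∞) (fun x : ((Fin N → ℝ) × (Fin N → ℝ) × ℝ) × ℝ =>
      Hsum p x.1.1 x.1.2.1 x.1.2.2 x.2) (q0, S0) :=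
    hsum_joint_contDiffAt hp hσ hS0pos
  obtain ⟨φ, hφcd, hφ0, hφev⟩ := implicit_param hG hS0root hc hcneg.ne
  have hφpos : ∀ᶠ q in 𝓝 q0, 0 < φ q :=
    hφcd.continuousAt.eventually (by rw [hφ0]; exact eventually_gt_nhds hS0pos)
  have hreg : ∀ᶠ q in 𝓝 q0, (∀ i, 0 < q.1 i) ∧ (∀ i, 0 < q.2.1 i) ∧ 0 < q.2.2 :=
    (region_isOpen N).eventually_mem ⟨hθ, hm, hσ⟩
  refine hφcd.congr_of_eventuallyEq ?_
  filter_upwards [hφev, hφpos, hreg] with q h1 h2 h3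
  exact (Sstar_eq hN hp h3.1 h3.2.1 h3.2.2 h2 h1).symm

end NashAux

/-- Smooth dependence of the Nash equilibrium on the parameters: for fixed `p > 0`, there
is a map `Y : (θ, m, σ) ↦ y*` on the positive parameter region which selects the unique
Nash equilibrium at each parameter set and which is `C^∞` there. -/
theorem nash_equilibrium_smooth_dependence
    {N : ℕ} (hN : 0 < N) {p : ℝ} (hp : 0 < p) :
    ∃ Y : (Fin N → ℝ) × (Fin N → ℝ) × ℝ → (Fin N → ℝ),
      (∀ q : (Fin N → ℝ) × (Fin N → ℝ) × ℝ,
        (∀ i, 0 < q.1 i) → (∀ i, 0 < q.2.1 i) → 0 < q.2.2 →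
        ∀ z : Fin N → ℝ,
          (((∀ i, 0 < z i) ∧
            ∀ i, ∑ k, q.2.1 k * (z k - z i) + q.2.2 * (q.1 i - z i ^ p) * z i = 0)
            ↔ z = Y q)) ∧
      ContDiffOn ℝ (⊤ : ℕ∞) Y
        {q : (Fin N → ℝ) × (Fin N → ℝ) × ℝ |
          (∀ i, 0 < q.1 i) ∧ (∀ i, 0 < q.2.1 i) ∧ 0 < q.2.2} := by
  classical
  haveI : Nonempty (Fin N) := ⟨⟨0, hN⟩⟩
  refine ⟨fun q i => NashAux.phi p q.2.2 (q.2.2 * q.1 i - ∑ k, q.2.1 k) (NashAux.Sstar p q),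
    ?_, ?_⟩
  · intro q hθ hm hσ z
    obtain ⟨hSpos, hSroot⟩ := NashAux.Sstar_spec hN hp hθ hm hσ
    constructor
    · rintro ⟨hzpos, hzeq⟩
      have hSzpos : 0 < ∑ k, q.2.1 k * z k :=
        Finset.sum_pos (fun i _ => mul_pos (hm i) (hzpos i)) Finset.univ_nonempty
      have hsumsplit : ∀ i, ∑ k, q.2.1 k * (z k - z i)
          = (∑ k, q.2.1 k * z k) - (∑ k, q.2.1 k) * z i := by
        intro i
        simp only [mul_sub]
        rw [Finset.sum_sub_distrib, ← Finset.sum_mul]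
      have hroot_i : ∀ i, q.2.2 * z i ^ (p + 1)
          - (q.2.2 * q.1 i - ∑ k, q.2.1 k) * z i = ∑ k, q.2.1 k * z k := by
        intro i
        have he := hzeq i
        rw [hsumsplit i] at he
        have hsplit : z i ^ (p + 1) = z i ^ p * z i := by
          rw [Real.rpow_add (hzpos i), Real.rpow_one]
        rw [hsplit]
        linear_combination (-1 : ℝ) * he
      have hzphi : ∀ i, z i
          = NashAux.phi p q.2.2 (q.2.2 * q.1 i - ∑ k, q.2.1 k) (∑ k, q.2.1 k * z k) :=
        fun i => NashAux.phi_unique hp hσ hSzpos (hzpos i) (hroot_i i)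
      have hHz : NashAux.Hsum p q.1 q.2.1 q.2.2 (∑ k, q.2.1 k * z k) = 0 := by
        unfold NashAux.Hsum
        have hcong : ∑ i, q.2.1 i *
            NashAux.phi p q.2.2 (q.2.2 * q.1 i - ∑ k, q.2.1 k) (∑ k, q.2.1 k * z k)
            = ∑ i, q.2.1 i * z i :=
          Finset.sum_congr rfl fun i _ => by rw [← hzphi i]
        rw [hcong, sub_self]
      have hSzstar : (∑ k, q.2.1 k * z k) = NashAux.Sstar p q :=
        NashAux.Sstar_eq hN hp hθ hm hσ hSzpos hHz
      funext i
      rw [hzphi i, hSzstar]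
    · intro h
      subst h
      refine ⟨fun i => NashAux.phi_pos hp hσ hSpos, fun i => ?_⟩
      beta_reduce
      have hYsum : ∑ k, q.2.1 k *
          NashAux.phi p q.2.2 (q.2.2 * q.1 k - ∑ j, q.2.1 j) (NashAux.Sstar p q)
          = NashAux.Sstar p q := by
        have h0 := hSroot
        unfold NashAux.Hsum at h0
        linarith
      have hsum1 : ∑ k, q.2.1 k *
            (NashAux.phi p q.2.2 (q.2.2 * q.1 k - ∑ j, q.2.1 j) (NashAux.Sstar p q)
              - NashAux.phi p q.2.2 (q.2.2 * q.1 i - ∑ j, q.2.1 j) (NashAux.Sstar p q))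
          = (∑ k, q.2.1 k *
              NashAux.phi p q.2.2 (q.2.2 * q.1 k - ∑ j, q.2.1 j) (NashAux.Sstar p q))
            - (∑ k, q.2.1 k) *
              NashAux.phi p q.2.2 (q.2.2 * q.1 i - ∑ j, q.2.1 j) (NashAux.Sstar p q) := by
        simp only [mul_sub]
        rw [Finset.sum_sub_distrib, ← Finset.sum_mul]
      have hr := NashAux.phi_root (p := p) (b := q.2.2)
        (k := q.2.2 * q.1 i - ∑ j, q.2.1 j) (a := NashAux.Sstar p q) hp hσ hSpos
      have hφpos : 0 < NashAux.phi p q.2.2 (q.2.2 * q.1 i - ∑ j, q.2.1 j)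
          (NashAux.Sstar p q) := NashAux.phi_pos hp hσ hSpos
      have hsplit : NashAux.phi p q.2.2 (q.2.2 * q.1 i - ∑ j, q.2.1 j)
            (NashAux.Sstar p q) ^ (p + 1)
          = NashAux.phi p q.2.2 (q.2.2 * q.1 i - ∑ j, q.2.1 j)
            (NashAux.Sstar p q) ^ p *
            NashAux.phi p q.2.2 (q.2.2 * q.1 i - ∑ j, q.2.1 j) (NashAux.Sstar p q) := by
        rw [Real.rpow_add hφpos, Real.rpow_one]
      rw [hsplit] at hr
      rw [hsum1, hYsum]
      linear_combination (-1 : ℝ) * hr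
  · intro q hq
    refine ContDiffAt.contDiffWithinAt ?_
    rw [contDiffAt_pi]
    intro i
    refine NashAux.phi_contDiffAt hp ?_ ?_ ?_ hq.2.2 (NashAux.Sstar_spec hN hp hq.1 hq.2.1 hq.2.2).1
    · exact (contDiff_snd.comp contDiff_snd).contDiffAt
    · refine ContDiffAt.sub ?_ ?_
      · exact ((contDiff_snd.comp contDiff_snd).contDiffAt).mul
          ((ContinuousLinearMap.proj (R := ℝ) (φ := fun _ : Fin N => ℝ) i).contDiff.comp
            contDiff_fst).contDiffAt
      · exact (ContDiff.sum fun k _ =>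
          (ContinuousLinearMap.proj (R := ℝ) (φ := fun _ : Fin N => ℝ) k).contDiff.comp
            (contDiff_fst.comp contDiff_snd)).contDiffAt
    · exact NashAux.sstar_contDiffAt hN hp hq.1 hq.2.1 hq.2.2
end

section
/- Every positive solution of the opinion dynamics converges to the unique Nash equilibrium: if y : [0,∞) → ℝᴺ is differentiable with y_i(t) > 0 for all i and t ≥ 0 and satisfies ẏ_i = Σ_{k=1}^N m_k (y_k − y_i) + σ (θ_i − y_i^p) y_i for all i, then y(t) → y* as t → ∞, where y* is the unique Nash equilibrium. -/
open Filter Topology Finset Real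

set_option maxHeartbeats 1000000

lemma odgc_comparison {N : ℕ} (g d : Fin N → ℝ → ℝ)
    (hderiv : ∀ i t, 0 ≤ t → HasDerivAt (g i) (d i t) t)
    (h0 : ∀ i, 0 < g i 0)
    (hkey : ∀ i t, 0 ≤ t → (∀ k, 0 ≤ g k t) → g i t ≤ 0 → 0 < d i t) :
    ∀ t, 0 ≤ t → ∀ i, 0 < g i t := by
  intro t0 ht0 i0
  by_contra hcon
  push_neg at hcon
  set S : Set ℝ := ⋃ i, (Set.Icc 0 t0 ∩ (g i) ⁻¹' Set.Iic 0) with hSdef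
  have hScl : IsClosed S := by
    apply isClosed_iUnion_of_finite
    intro i
    refine ContinuousOn.preimage_isClosed_of_isClosed ?_ isClosed_Icc isClosed_Iic
    intro x hx
    exact ((hderiv i x hx.1).continuousAt).continuousWithinAt
  have hSne : S.Nonempty := ⟨t0, Set.mem_iUnion.2 ⟨i0, ⟨⟨ht0, le_rfl⟩, hcon⟩⟩⟩
  have hSbdd : BddBelow S := ⟨0, by rintro x hx; rw [Set.mem_iUnion] at hx; obtain ⟨i, hi⟩ := hx; exact hi.1.1⟩
  set T := sInf S with hTdef
  have hTmem : T ∈ S := hScl.csInf_mem hSne hSbdd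
  rw [Set.mem_iUnion] at hTmem
  obtain ⟨i, ⟨⟨hT0, hTle⟩, hTi⟩⟩ := hTmem
  simp only [Set.mem_preimage, Set.mem_Iic] at hTi
  have hTpos : 0 < T := by
    rcases lt_or_eq_of_le hT0 with h | h
    · exact h
    · exact absurd hTi (not_le.2 (h ▸ h0 i))
  have hbefore : ∀ t, 0 ≤ t → t < T → ∀ k, 0 < g k t := by
    intro t h1 h2 k
    by_contra hc
    push_neg at hc
    have : t ∈ S := Set.mem_iUnion.2 ⟨k, ⟨⟨h1, h2.le.trans hTle⟩, hc⟩⟩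
    exact absurd (csInf_le hSbdd this) (not_le.2 h2)
  have hev : ∀ᶠ t in 𝓝[<] T, 0 < t ∧ t < T := by
    filter_upwards [self_mem_nhdsWithin,
      eventually_nhdsWithin_of_eventually_nhds (eventually_gt_nhds hTpos)] with t h1 h2
    exact ⟨h2, h1⟩
  have hge : ∀ k, 0 ≤ g k T := by
    intro k
    have htend : Tendsto (g k) (𝓝[<] T) (𝓝 (g k T)) :=
      ((hderiv k T hT0).continuousAt).continuousWithinAt
    refine ge_of_tendsto htend ?_
    filter_upwards [hev] with t ⟨h1, h2⟩
    exact (hbefore t h1.le h2 k).le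
  have hd : 0 < d i T := hkey i T hT0 hge hTi
  have hTeq : g i T = 0 := le_antisymm hTi (hge i)
  have hslope : Tendsto (slope (g i) T) (𝓝[<] T) (𝓝 (d i T)) := by
    refine (hasDerivAt_iff_tendsto_slope.mp (hderiv i T hT0)).mono_left ?_
    exact nhdsWithin_mono T (fun x hx => ne_of_lt hx)
  have hev2 : ∀ᶠ t in 𝓝[<] T, 0 < slope (g i) T t := hslope.eventually (eventually_gt_nhds hd)
  obtain ⟨t, ⟨⟨h1, h2⟩, h3⟩⟩ := (hev.and hev2).exists
  rw [slope_def_field, hTeq, sub_zero] at h3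
  have hneg : g i t < 0 := by
    have htT : t - T < 0 := by linarith
    by_contra hc
    push_neg at hc
    have : g i t / (t - T) ≤ 0 := div_nonpos_of_nonneg_of_nonpos hc htT.le
    linarith
  exact absurd (hbefore t h1.le h2 i) (not_lt.2 hneg.le)

lemma odgc_Fcalc {N : ℕ} (m θ ystar : Fin N → ℝ) {σ p : ℝ}
    (heq : ∀ i, ∑ k, m k * (ystar k - ystar i) + σ * (θ i - ystar i ^ p) * ystar i = 0)
    (v : Fin N → ℝ) (i : Fin N) (W : ℝ) (hW : 0 ≤ W) (hYi : 0 ≤ ystar i)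
    (hvi : v i = W * ystar i) :
    ∑ k, m k * (v k - v i) + σ * (θ i - v i ^ p) * v i
      = (∑ k, m k * (v k - W * ystar k))
        + σ * W * ystar i * (ystar i ^ p) * (1 - W ^ p) := by
  have hsum : ∑ k, m k * (v k - v i)
      = ∑ k, (m k * (v k - W * ystar k) + W * (m k * (ystar k - ystar i))) := by
    refine Finset.sum_congr rfl fun k _ => ?_
    rw [hvi]; ring
  rw [hsum, Finset.sum_add_distrib, ← Finset.mul_sum]
  have h2 : ∑ k, m k * (ystar k - ystar i) = -(σ * (θ i - ystar i ^ p) * ystar i) := by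
    linarith [heq i]
  rw [h2, hvi, Real.mul_rpow hW hYi]
  ring


/-- Global convergence of opinion dynamics: every positive solution of the opinion system
converges to the unique Nash equilibrium `y*`. -/
theorem opinion_dynamics_global_convergence
    {N : ℕ} (hN : 0 < N)
    (m θ : Fin N → ℝ) (hm : ∀ i, 0 < m i) (hθ : ∀ i, 0 < θ i)
    {σ p : ℝ} (hσ : 0 < σ) (hp : 0 < p)
    (ystar : Fin N → ℝ) (hpos : ∀ i, 0 < ystar i)
    (heq : ∀ i, ∑ k, m k * (ystar k - ystar i) + σ * (θ i - ystar i ^ p) * ystar i = 0)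
    (huniq : ∀ z : Fin N → ℝ, (∀ i, 0 < z i) →
      (∀ i, ∑ k, m k * (z k - z i) + σ * (θ i - z i ^ p) * z i = 0) → z = ystar)
    (y : ℝ → Fin N → ℝ)
    (hypos : ∀ i, ∀ t, 0 ≤ t → 0 < y t i)
    (hy : ∀ i, ∀ t, 0 ≤ t → HasDerivAt (fun s => y s i)
      (∑ k, m k * (y t k - y t i) + σ * (θ i - y t i ^ p) * y t i) t) :
    Tendsto y atTop (𝓝 ystar) := by
  haveI : Nonempty (Fin N) := ⟨⟨0, hN⟩⟩
  have hne : (Finset.univ : Finset (Fin N)).Nonempty := Finset.univ_nonempty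
  -- the constant c0 : lower bound on ystar i ^ p
  set c0 : ℝ := Finset.univ.inf' hne (fun i => ystar i ^ p) with hc0def
  have hc0pos : 0 < c0 := by
    rw [hc0def, Finset.lt_inf'_iff]
    exact fun i _ => Real.rpow_pos_of_pos (hpos i) p
  have hc0le : ∀ i, c0 ≤ ystar i ^ p := fun i => Finset.inf'_le _ (Finset.mem_univ i)
  -- initial scaling constants
  set ρ : ℝ := Finset.univ.inf' hne (fun i => y 0 i / ystar i) with hρdef
  have hρpos : 0 < ρ := by
    rw [hρdef, Finset.lt_inf'_iff]
    exact fun i _ => div_pos (hypos i 0 le_rfl) (hpos i)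
  set lam0 : ℝ := min (1/2) (ρ/2) with hlam0def
  have hlam0pos : 0 < lam0 := lt_min (by norm_num) (by linarith)
  have hlam0lt1 : lam0 < 1 := lt_of_le_of_lt (min_le_left _ _) (by norm_num)
  have hlam0y : ∀ i, lam0 * ystar i < y 0 i := by
    intro i
    have h1 : lam0 < y 0 i / ystar i := by
      have := Finset.inf'_le (fun i => y 0 i / ystar i) (Finset.mem_univ i)
      calc lam0 ≤ ρ/2 := min_le_right _ _
        _ < ρ := by linarith
        _ ≤ y 0 i / ystar i := this
    exact (lt_div_iff₀ (hpos i)).mp h1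
  set mu0 : ℝ := 2 * max 1 (Finset.univ.sup' hne (fun i => y 0 i / ystar i)) with hmu0def
  have hmu0gt1 : 1 < mu0 := by
    have : (1:ℝ) ≤ max 1 (Finset.univ.sup' hne (fun i => y 0 i / ystar i)) := le_max_left _ _
    rw [hmu0def]; linarith
  have hmu0y : ∀ i, y 0 i < mu0 * ystar i := by
    intro i
    have h1 : y 0 i / ystar i < mu0 := by
      have h2 := Finset.le_sup' (fun i => y 0 i / ystar i) (Finset.mem_univ i)
      have h3 : Finset.univ.sup' hne (fun i => y 0 i / ystar i)
          ≤ max 1 (Finset.univ.sup' hne (fun i => y 0 i / ystar i)) := le_max_right _ _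
      have h4 : (0:ℝ) < max 1 (Finset.univ.sup' hne (fun i => y 0 i / ystar i)) := by positivity
      rw [hmu0def]; linarith
    exact (div_lt_iff₀ (hpos i)).mp h1
  -- a, b
  set a : ℝ := 1 - lam0 ^ p with hadef
  have hlam0p_pos : 0 < lam0 ^ p := Real.rpow_pos_of_pos hlam0pos p
  have hlam0p_lt1 : lam0 ^ p < 1 := Real.rpow_lt_one hlam0pos.le hlam0lt1 hp
  have hapos : 0 < a := by rw [hadef]; linarith
  have halt1 : a < 1 := by rw [hadef]; linarith
  set b : ℝ := mu0 ^ p - 1 with hbdef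
  have hmu0p_gt1 : 1 < mu0 ^ p := Real.one_lt_rpow_iff (by linarith : (0:ℝ) ≤ mu0) |>.mpr
    (Or.inl ⟨hmu0gt1, hp⟩)
  have hbpos : 0 < b := by rw [hbdef]; linarith
  -- rates
  set kL : ℝ := p * σ * c0 * (1 - a) / 2 with hkLdef
  have hkLpos : 0 < kL := by
    rw [hkLdef]
    have : 0 < 1 - a := by linarith
    positivity
  set kU : ℝ := p * σ * c0 / 2 with hkUdef
  have hkUpos : 0 < kU := by rw [hkUdef]; positivity
  -- barrier functions
  set uL : ℝ → ℝ := fun t => 1 - a * Real.exp (-kL * t) with huLdef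
  set uU : ℝ → ℝ := fun t => 1 + b * Real.exp (-kU * t) with huUdef
  set Lam : ℝ → ℝ := fun t => uL t ^ p⁻¹ with hLamdef
  set Mu : ℝ → ℝ := fun t => uU t ^ p⁻¹ with hMudef
  have huLpos : ∀ t, 0 ≤ t → 0 < uL t := by
    intro t ht
    have h1 : Real.exp (-kL * t) ≤ 1 := Real.exp_le_one_iff.mpr (by nlinarith)
    have h2 : 0 < Real.exp (-kL * t) := Real.exp_pos _
    simp only [huLdef]
    nlinarith
  have huLge : ∀ t, 0 ≤ t → 1 - a ≤ uL t := by
    intro t ht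
    have h1 : Real.exp (-kL * t) ≤ 1 := Real.exp_le_one_iff.mpr (by nlinarith)
    simp only [huLdef]
    nlinarith
  have huUge : ∀ t, 1 ≤ uU t := by
    intro t
    have h2 : 0 < Real.exp (-kU * t) := Real.exp_pos _
    simp only [huUdef]
    nlinarith
  have huUpos : ∀ t, 0 < uU t := fun t => lt_of_lt_of_le one_pos (huUge t)
  -- derivatives of barriers
  have huLderiv : ∀ t, HasDerivAt uL (a * kL * Real.exp (-kL * t)) t := by
    intro t
    have h1 : HasDerivAt (fun s : ℝ => -kL * s) (-kL) t := by
      simpa using (hasDerivAt_id t).const_mul (-kL)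
    have h2 : HasDerivAt (fun s : ℝ => Real.exp (-kL * s)) (Real.exp (-kL * t) * (-kL)) t := h1.exp
    have h3 := (hasDerivAt_const t (1:ℝ)).sub (h2.const_mul a)
    exact h3.congr_deriv (by ring)
  have huUderiv : ∀ t, HasDerivAt uU (-(b * kU * Real.exp (-kU * t))) t := by
    intro t
    have h1 : HasDerivAt (fun s : ℝ => -kU * s) (-kU) t := by
      simpa using (hasDerivAt_id t).const_mul (-kU)
    have h2 : HasDerivAt (fun s : ℝ => Real.exp (-kU * s)) (Real.exp (-kU * t) * (-kU)) t := h1.exp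
    have h3 := (hasDerivAt_const t (1:ℝ)).add (h2.const_mul b)
    exact h3.congr_deriv (by ring)
  set lamd : ℝ → ℝ := fun t => a * kL * Real.exp (-kL * t) * p⁻¹ * uL t ^ (p⁻¹ - 1) with hlamddef
  set mud : ℝ → ℝ := fun t => -(b * kU * Real.exp (-kU * t)) * p⁻¹ * uU t ^ (p⁻¹ - 1) with hmuddef
  have hLamderiv : ∀ t, 0 ≤ t → HasDerivAt Lam (lamd t) t := by
    intro t ht
    exact (huLderiv t).rpow_const (Or.inl (ne_of_gt (huLpos t ht)))
  have hMuderiv : ∀ t, HasDerivAt Mu (mud t) t := by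
    intro t
    exact (huUderiv t).rpow_const (Or.inl (ne_of_gt (huUpos t)))
  have hLampos : ∀ t, 0 ≤ t → 0 < Lam t := fun t ht => Real.rpow_pos_of_pos (huLpos t ht) _
  have hMupos : ∀ t, 0 < Mu t := fun t => Real.rpow_pos_of_pos (huUpos t) _
  have hLamp : ∀ t, 0 ≤ t → Lam t ^ p = uL t := by
    intro t ht
    exact Real.rpow_inv_rpow (huLpos t ht).le (ne_of_gt hp)
  have hMup : ∀ t, Mu t ^ p = uU t := fun t =>
    Real.rpow_inv_rpow (huUpos t).le (ne_of_gt hp)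
  -- initial values
  have hLam0 : Lam 0 = lam0 := by
    have : uL 0 = lam0 ^ p := by
      simp only [huLdef, mul_zero, Real.exp_zero, hadef]
      ring
    rw [hLamdef]
    simp only [this]
    exact Real.rpow_rpow_inv hlam0pos.le (ne_of_gt hp)
  have hMu0 : Mu 0 = mu0 := by
    have : uU 0 = mu0 ^ p := by
      simp only [huUdef, mul_zero, Real.exp_zero, hbdef]
      ring
    rw [hMudef]
    simp only [this]
    exact Real.rpow_rpow_inv (by linarith) (ne_of_gt hp)
  -- lower comparison
  have hlow : ∀ t, 0 ≤ t → ∀ i, 0 < y t i - Lam t * ystar i := by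
    apply odgc_comparison (fun i t => y t i - Lam t * ystar i)
      (fun i t => (∑ k, m k * (y t k - y t i) + σ * (θ i - y t i ^ p) * y t i)
        - lamd t * ystar i)
    · intro i t ht
      exact (hy i t ht).sub ((hLamderiv t ht).mul_const (ystar i))
    · intro i
      rw [hLam0]
      linarith [hlam0y i]
    · intro i t ht hall hile
      have hyi : y t i = Lam t * ystar i := by linarith [hall i]
      rw [odgc_Fcalc m θ ystar heq (y t) i (Lam t) (hLampos t ht).le (hpos i).le hyi]
      have hS : 0 ≤ ∑ k, m k * (y t k - Lam t * ystar k) :=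
        Finset.sum_nonneg fun k _ => mul_nonneg (hm k).le (by linarith [hall k])
      rw [hLamp t ht]
      have h1uL : 1 - uL t = a * Real.exp (-kL * t) := by simp only [huLdef]; ring
      set E := Real.exp (-kL * t) with hEdef
      have hE : 0 < E := Real.exp_pos _
      set W := Lam t with hWdef
      set Y := ystar i with hYdef
      set Yp := ystar i ^ p with hYpdef
      have hYppos : 0 < Yp := Real.rpow_pos_of_pos (hpos i) p
      have hWpos : 0 < W := hLampos t ht
      have hU := huLpos t ht
      have hUge := huLge t ht
      have hexp : uL t ^ (p⁻¹ - 1) = W / uL t := by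
        rw [Real.rpow_sub hU, Real.rpow_one, hWdef, hLamdef]
      have hLeq : lamd t * Y = kL / (p * uL t) * (a * E * W * Y) := by
        rw [hlamddef]
        simp only [hexp, ← hEdef]
        field_simp
      have step1 : kL / (p * uL t) ≤ σ * c0 / 2 := by
        rw [div_le_iff₀ (by positivity)]
        rw [hkLdef]
        nlinarith
      have step2 : σ * c0 / 2 < σ * Yp := by nlinarith [hc0le i]
      have hfac : 0 < a * E * W * Y :=
        mul_pos (mul_pos (mul_pos hapos hE) hWpos) (hpos i)
      have main : lamd t * Y < σ * W * Y * Yp * (1 - uL t) := by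
        rw [hLeq, h1uL]
        calc kL / (p * uL t) * (a * E * W * Y) ≤ σ * c0 / 2 * (a * E * W * Y) :=
              mul_le_mul_of_nonneg_right step1 hfac.le
          _ < σ * Yp * (a * E * W * Y) := mul_lt_mul_of_pos_right step2 hfac
          _ = σ * W * Y * Yp * (a * E) := by ring
      linarith
  -- upper comparison
  have hup : ∀ t, 0 ≤ t → ∀ i, 0 < Mu t * ystar i - y t i := by
    apply odgc_comparison (fun i t => Mu t * ystar i - y t i)
      (fun i t => mud t * ystar i
        - (∑ k, m k * (y t k - y t i) + σ * (θ i - y t i ^ p) * y t i))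
    · intro i t ht
      exact ((hMuderiv t).mul_const (ystar i)).sub (hy i t ht)
    · intro i
      rw [hMu0]
      linarith [hmu0y i]
    · intro i t ht hall hile
      have hyi : y t i = Mu t * ystar i := by linarith [hall i]
      rw [odgc_Fcalc m θ ystar heq (y t) i (Mu t) (hMupos t).le (hpos i).le hyi]
      have hS : ∑ k, m k * (y t k - Mu t * ystar k) ≤ 0 :=
        Finset.sum_nonpos fun k _ => mul_nonpos_of_nonneg_of_nonpos (hm k).le (by linarith [hall k])
      rw [hMup t]
      have h1uU : 1 - uU t = -(b * Real.exp (-kU * t)) := by simp only [huUdef]; ring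
      set E := Real.exp (-kU * t) with hEdef
      have hE : 0 < E := Real.exp_pos _
      set W := Mu t with hWdef
      set Y := ystar i with hYdef
      set Yp := ystar i ^ p with hYpdef
      have hYppos : 0 < Yp := Real.rpow_pos_of_pos (hpos i) p
      have hWpos : 0 < W := hMupos t
      have hU := huUpos t
      have hUge := huUge t
      have hexp : uU t ^ (p⁻¹ - 1) = W / uU t := by
        rw [Real.rpow_sub hU, Real.rpow_one, hWdef, hMudef]
      have hMeq : mud t * Y = -(kU / (p * uU t) * (b * E * W * Y)) := by
        rw [hmuddef]
        simp only [hexp, ← hEdef]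
        field_simp
      have step1 : kU / (p * uU t) ≤ σ * c0 / 2 := by
        rw [div_le_iff₀ (by positivity)]
        rw [hkUdef]
        nlinarith
      have step2 : σ * c0 / 2 < σ * Yp := by nlinarith [hc0le i]
      have hfac : 0 < b * E * W * Y :=
        mul_pos (mul_pos (mul_pos hbpos hE) hWpos) (hpos i)
      have main : σ * W * Y * Yp * (1 - uU t) < mud t * Y := by
        rw [hMeq, h1uU]
        have : kU / (p * uU t) * (b * E * W * Y) < σ * Yp * (b * E * W * Y) :=
          lt_of_le_of_lt (mul_le_mul_of_nonneg_right step1 hfac.le)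
            (mul_lt_mul_of_pos_right step2 hfac)
        have heq2 : σ * W * Y * Yp * -(b * E) = -(σ * Yp * (b * E * W * Y)) := by ring
        rw [heq2]
        linarith
      linarith
  -- limits of barriers
  have hexpL : Tendsto (fun t : ℝ => Real.exp (-kL * t)) atTop (𝓝 0) :=
    Real.tendsto_exp_atBot.comp (tendsto_id.const_mul_atTop_of_neg (by linarith))
  have hexpU : Tendsto (fun t : ℝ => Real.exp (-kU * t)) atTop (𝓝 0) :=
    Real.tendsto_exp_atBot.comp (tendsto_id.const_mul_atTop_of_neg (by linarith))
  have huLlim : Tendsto uL atTop (𝓝 1) := by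
    have h1 := tendsto_const_nhds (α := ℝ) (x := (1:ℝ)) (f := atTop) |>.sub (hexpL.const_mul a)
    rw [huLdef]
    simpa using h1
  have huUlim : Tendsto uU atTop (𝓝 1) := by
    have h1 := tendsto_const_nhds (α := ℝ) (x := (1:ℝ)) (f := atTop) |>.add (hexpU.const_mul b)
    rw [huUdef]
    simpa using h1
  have hLamlim : Tendsto Lam atTop (𝓝 1) := by
    have := huLlim.rpow_const (p := p⁻¹) (Or.inl one_ne_zero)
    simpa [Real.one_rpow] using this
  have hMulim : Tendsto Mu atTop (𝓝 1) := by
    have := huUlim.rpow_const (p := p⁻¹) (Or.inl one_ne_zero)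
    simpa [Real.one_rpow] using this
  -- squeeze
  rw [tendsto_pi_nhds]
  intro i
  have hlower : Tendsto (fun t => Lam t * ystar i) atTop (𝓝 (ystar i)) := by
    have := hLamlim.mul_const (ystar i)
    simpa using this
  have hupper : Tendsto (fun t => Mu t * ystar i) atTop (𝓝 (ystar i)) := by
    have := hMulim.mul_const (ystar i)
    simpa using this
  refine tendsto_of_tendsto_of_tendsto_of_le_of_le' hlower hupper ?_ ?_
  · filter_upwards [eventually_ge_atTop (0:ℝ)] with t ht
    linarith [hlow t ht i]
  · filter_upwards [eventually_ge_atTop (0:ℝ)] with t ht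
    linarith [hup t ht i]
end

section
/- Every Nash equilibrium y lies between the extreme conviction values: min_{1≤k≤N} θ_k ≤ y_i^p ≤ max_{1≤k≤N} θ_k for every i = 1,…,N. Moreover, y_i^p ≥ θ_i − M/σ for every i. -/
open Filter Topology Finset Real

/-!
At an equilibrium `σ (θᵢ - yᵢ^p) yᵢ = -∑ₖ mₖ (yₖ - yᵢ)`. At an index where `y` is maximal the
right-hand side is nonnegative, so `yᵢ^p ≤ θᵢ ≤ max θ` there, and by monotonicity of `t ↦ t^p`
everywhere; the minimal index gives the lower bound symmetrically. Since `y > 0`, the right-hand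
side is also at most `M yᵢ`, which gives `θᵢ - yᵢ^p ≤ M / σ`.
-/

section Coupling

variable {ι : Type*} [Fintype ι] {m y : ι → ℝ} {i : ι}

lemma sum_mul_sub_nonpos_of_forall_le (hm : ∀ k, 0 ≤ m k) (hmax : ∀ k, y k ≤ y i) :
    ∑ k, m k * (y k - y i) ≤ 0 :=
  Finset.sum_nonpos fun k _ => mul_nonpos_of_nonneg_of_nonpos (hm k) (sub_nonpos.2 (hmax k))

lemma sum_mul_sub_nonneg_of_forall_ge (hm : ∀ k, 0 ≤ m k) (hmin : ∀ k, y i ≤ y k) :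
    0 ≤ ∑ k, m k * (y k - y i) :=
  Finset.sum_nonneg fun k _ => mul_nonneg (hm k) (sub_nonneg.2 (hmin k))

lemma neg_sum_mul_le_sum_mul_sub (hm : ∀ k, 0 ≤ m k) (hy : ∀ k, 0 ≤ y k) :
    -((∑ k, m k) * y i) ≤ ∑ k, m k * (y k - y i) := by
  rw [Finset.sum_mul, ← Finset.sum_neg_distrib]
  exact Finset.sum_le_sum fun k _ => by nlinarith [hm k, hy k]

end Coupling

section Equilibrium

variable {c σ θ x y : ℝ}

lemma le_of_add_mul_eq_zero_of_nonpos (hσ : 0 < σ) (hy : 0 < y)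
    (h : c + σ * (θ - x) * y = 0) (hc : c ≤ 0) : x ≤ θ := by
  have : 0 ≤ σ * y * (θ - x) := by linarith
  linarith [(mul_nonneg_iff_of_pos_left (mul_pos hσ hy)).1 this]

lemma le_of_add_mul_eq_zero_of_nonneg (hσ : 0 < σ) (hy : 0 < y)
    (h : c + σ * (θ - x) * y = 0) (hc : 0 ≤ c) : θ ≤ x := by
  have : 0 ≤ σ * y * (x - θ) := by linarith
  linarith [(mul_nonneg_iff_of_pos_left (mul_pos hσ hy)).1 this]

lemma sub_div_le_of_add_mul_eq_zero {M : ℝ} (hσ : 0 < σ) (hy : 0 < y)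
    (h : c + σ * (θ - x) * y = 0) (hc : -(M * y) ≤ c) : θ - M / σ ≤ x := by
  have : σ * (θ - x) ≤ M := le_of_mul_le_mul_right (by linarith) hy
  have : θ - x ≤ M / σ := (le_div_iff₀ hσ).2 (by linarith)
  linarith

end Equilibrium

theorem nash_equilibrium_apriori_bounds_general
    {N : ℕ}
    (m θ : Fin N → ℝ) (hm : ∀ i, 0 < m i)
    {σ p : ℝ} (hσ : 0 < σ) (hp : 0 < p)
    (y : Fin N → ℝ) (hpos : ∀ i, 0 < y i)
    (heq : ∀ i, ∑ k, m k * (y k - y i) + σ * (θ i - y i ^ p) * y i = 0) :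
    ∀ i, (⨅ k, θ k) ≤ y i ^ p ∧ y i ^ p ≤ (⨆ k, θ k) ∧
      θ i - (∑ k, m k) / σ ≤ y i ^ p := by
  intro i
  have hm₀ k : 0 ≤ m k := (hm k).le
  have : Nonempty (Fin N) := ⟨i⟩
  obtain ⟨jmax, hjmax⟩ := Finite.exists_max y
  obtain ⟨jmin, hjmin⟩ := Finite.exists_min y
  refine ⟨?_, ?_, ?_⟩
  · calc (⨅ k, θ k) ≤ θ jmin := ciInf_le (Finite.bddBelow_range θ) jmin
      _ ≤ y jmin ^ p := le_of_add_mul_eq_zero_of_nonneg hσ (hpos jmin) (heq jmin)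
          (sum_mul_sub_nonneg_of_forall_ge hm₀ hjmin)
      _ ≤ y i ^ p := rpow_le_rpow (hpos jmin).le (hjmin i) hp.le
  · calc y i ^ p ≤ y jmax ^ p := rpow_le_rpow (hpos i).le (hjmax i) hp.le
      _ ≤ θ jmax := le_of_add_mul_eq_zero_of_nonpos hσ (hpos jmax) (heq jmax)
          (sum_mul_sub_nonpos_of_forall_le hm₀ hjmax)
      _ ≤ ⨆ k, θ k := le_ciSup (Finite.bddAbove_range θ) jmax
  · exact sub_div_le_of_add_mul_eq_zero hσ (hpos i) (heq i)
      (neg_sum_mul_le_sum_mul_sub hm₀ fun k => (hpos k).le)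

/-- A priori bounds on Nash equilibria: every Nash equilibrium lies between the extreme
conviction values, `min_k θ_k ≤ y_i^p ≤ max_k θ_k`, and satisfies `y_i^p ≥ θ_i - M/σ`. -/
theorem nash_equilibrium_apriori_bounds
    {N : ℕ} (hN : 0 < N)
    (m θ : Fin N → ℝ) (hm : ∀ i, 0 < m i) (hθ : ∀ i, 0 < θ i)
    {σ p : ℝ} (hσ : 0 < σ) (hp : 0 < p)
    (y : Fin N → ℝ) (hpos : ∀ i, 0 < y i)
    (heq : ∀ i, ∑ k, m k * (y k - y i) + σ * (θ i - y i ^ p) * y i = 0) :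
    ∀ i, (⨅ k, θ k) ≤ y i ^ p ∧ y i ^ p ≤ (⨆ k, θ k) ∧
      θ i - (∑ k, m k) / σ ≤ y i ^ p :=
  nash_equilibrium_apriori_bounds_general m θ hm hσ hp y hpos heq
end

section
/- Assume the convictions are ordered, θ_1 ≤ θ_2 ≤ … ≤ θ_N, and let y be a Nash equilibrium. Then θ_1 ≤ y_1^p ≤ y_2^p ≤ … ≤ y_N^p ≤ θ_N; the lower bound y_i^p ≥ θ_i + (m_{≥i} − M)/σ holds for every i, where m_{≥i} = m_i + … + m_N; and for any pair i ≠ j one has θ_i = θ_j if and only if y_i = y_j. -/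
open Finset Real

/-!
Write `S = ∑ k, m k * y k` and `M = ∑ k, m k`. Dividing the `i`-th equilibrium equation by
`y i > 0` gives `θ i = y i ^ p + (M - S / y i) / σ`: every conviction is the value at `y i` of one
and the same function of the opinion, strictly increasing on `(0, ∞)` since `S ≥ 0`. Hence the
opinions are ordered exactly as the convictions, with equality in the same cases. The bounds come
from estimating `S / y i` in the same identity: `S ≥ (∑ k ≥ i, m k) * y i` when `y` is monotone,
and `S ≤ M * y i` when `y i` is the largest opinion.
-/

noncomputable def equilibriumConviction (S M σ p x : ℝ) : ℝ :=
  x ^ p + (M - S / x) / σ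

theorem equilibriumConviction_strictMonoOn {S M σ p : ℝ} (hS : 0 ≤ S) (hσ : 0 < σ) (hp : 0 < p) :
    StrictMonoOn (equilibriumConviction S M σ p) (Set.Ioi 0) := by
  intro x hx x' _ hxx'
  have hpow : x ^ p < x' ^ p := rpow_lt_rpow (le_of_lt hx) hxx' hp
  have hdiv : S / x' ≤ S / x := div_le_div_of_nonneg_left hS hx hxx'.le
  have hfrac : (M - S / x) / σ ≤ (M - S / x') / σ :=
    div_le_div_of_nonneg_right (by linarith) hσ.le
  unfold equilibriumConviction
  linarith

theorem sum_mul_sub_eq {ι : Type*} [Fintype ι] (m y : ι → ℝ) (i : ι) :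
    ∑ k, m k * (y k - y i) = ∑ k, m k * y k - (∑ k, m k) * y i := by
  simp only [mul_sub, sum_sub_distrib, sum_mul]

section Equilibrium

variable {ι : Type*} [Fintype ι] {m θ y : ι → ℝ} {σ p : ℝ}

def IsEquilibrium (m θ : ι → ℝ) (σ p : ℝ) (y : ι → ℝ) : Prop :=
  ∀ i, ∑ k, m k * (y k - y i) + σ * (θ i - y i ^ p) * y i = 0

theorem IsEquilibrium.eq_equilibriumConviction (h : IsEquilibrium m θ σ p y) (hσ : σ ≠ 0)
    {i : ι} (hy : y i ≠ 0) :
    θ i = equilibriumConviction (∑ k, m k * y k) (∑ k, m k) σ p (y i) := by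
  have hi := h i
  rw [sum_mul_sub_eq] at hi
  unfold equilibriumConviction
  field_simp
  linear_combination hi

theorem IsEquilibrium.le_iff_le (h : IsEquilibrium m θ σ p y) (hm : ∀ k, 0 ≤ m k)
    (hy : ∀ k, 0 < y k) (hσ : 0 < σ) (hp : 0 < p) (i j : ι) : y i ≤ y j ↔ θ i ≤ θ j := by
  have hS : 0 ≤ ∑ k, m k * y k := sum_nonneg fun k _ => mul_nonneg (hm k) (hy k).le
  rw [h.eq_equilibriumConviction hσ.ne' (hy i).ne', h.eq_equilibriumConviction hσ.ne' (hy j).ne']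
  exact ((equilibriumConviction_strictMonoOn hS hσ hp).le_iff_le (hy i) (hy j)).symm

theorem IsEquilibrium.eq_iff_eq (h : IsEquilibrium m θ σ p y) (hm : ∀ k, 0 ≤ m k)
    (hy : ∀ k, 0 < y k) (hσ : 0 < σ) (hp : 0 < p) (i j : ι) : y i = y j ↔ θ i = θ j := by
  simp only [le_antisymm_iff, h.le_iff_le hm hy hσ hp]

theorem IsEquilibrium.add_sum_sub_div_le (h : IsEquilibrium m θ σ p y) (hm : ∀ k, 0 ≤ m k)
    (hy : ∀ k, 0 < y k) (hσ : 0 < σ) {i : ι} (s : Finset ι) (hs : ∀ k ∈ s, y i ≤ y k) :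
    θ i + (∑ k ∈ s, m k - ∑ k, m k) / σ ≤ y i ^ p := by
  have hS : (∑ k ∈ s, m k) * y i ≤ ∑ k, m k * y k :=
    calc (∑ k ∈ s, m k) * y i = ∑ k ∈ s, m k * y i := sum_mul ..
      _ ≤ ∑ k ∈ s, m k * y k := sum_le_sum fun k hk => mul_le_mul_of_nonneg_left (hs k hk) (hm k)
      _ ≤ ∑ k, m k * y k := sum_le_sum_of_subset_of_nonneg (subset_univ s)
          fun k _ _ => mul_nonneg (hm k) (hy k).le
  have hdiv : ∑ k ∈ s, m k ≤ (∑ k, m k * y k) / y i := (le_div_iff₀ (hy i)).2 hS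
  have hfrac : (∑ k ∈ s, m k - ∑ k, m k) / σ ≤ -((∑ k, m k - (∑ k, m k * y k) / y i) / σ) := by
    rw [← neg_div]
    exact div_le_div_of_nonneg_right (by linarith) hσ.le
  rw [h.eq_equilibriumConviction hσ.ne' (hy i).ne', equilibriumConviction]
  linarith

theorem IsEquilibrium.rpow_le_of_forall_le (h : IsEquilibrium m θ σ p y) (hm : ∀ k, 0 ≤ m k)
    (hσ : 0 < σ) {i : ι} (hyi : 0 < y i) (hmax : ∀ k, y k ≤ y i) : y i ^ p ≤ θ i := by
  have hS : ∑ k, m k * y k ≤ (∑ k, m k) * y i :=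
    calc ∑ k, m k * y k ≤ ∑ k, m k * y i :=
          sum_le_sum fun k _ => mul_le_mul_of_nonneg_left (hmax k) (hm k)
      _ = (∑ k, m k) * y i := (sum_mul ..).symm
  have hdiv : (∑ k, m k * y k) / y i ≤ ∑ k, m k := (div_le_iff₀ hyi).2 hS
  have hfrac : 0 ≤ (∑ k, m k - (∑ k, m k * y k) / y i) / σ :=
    div_nonneg (by linarith) hσ.le
  rw [h.eq_equilibriumConviction hσ.ne' hyi.ne', equilibriumConviction]
  linarith

end Equilibrium

theorem nash_equilibrium_monotone_structure_general
    {N : ℕ} (hN : 0 < N)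
    (m θ : Fin N → ℝ) (hm : ∀ i, 0 < m i)
    (hmono : Monotone θ)
    {σ p : ℝ} (hσ : 0 < σ) (hp : 0 < p)
    (y : Fin N → ℝ) (hpos : ∀ i, 0 < y i)
    (heq : ∀ i, ∑ k, m k * (y k - y i) + σ * (θ i - y i ^ p) * y i = 0) :
    θ ⟨0, hN⟩ ≤ y ⟨0, hN⟩ ^ p ∧
    (∀ i j : Fin N, i ≤ j → y i ^ p ≤ y j ^ p) ∧
    y ⟨N - 1, Nat.sub_lt hN Nat.one_pos⟩ ^ p ≤ θ ⟨N - 1, Nat.sub_lt hN Nat.one_pos⟩ ∧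
    (∀ i, θ i + ((∑ k ∈ Finset.univ.filter (fun k => i ≤ k), m k) - ∑ k, m k) / σ
      ≤ y i ^ p) ∧
    (∀ i j : Fin N, i ≠ j → (θ i = θ j ↔ y i = y j)) := by
  have heq : IsEquilibrium m θ σ p y := heq
  have hm : ∀ k, 0 ≤ m k := fun k => (hm k).le
  have hy_mono : Monotone y := fun i j hij => (heq.le_iff_le hm hpos hσ hp i j).2 (hmono hij)
  refine ⟨?_, fun i j hij => rpow_le_rpow (hpos i).le (hy_mono hij) hp.le, ?_,
    fun i => heq.add_sum_sub_div_le hm hpos hσ _ fun k hk => hy_mono (mem_filter.1 hk).2,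
    fun i j _ => (heq.eq_iff_eq hm hpos hσ hp i j).symm⟩
  · simpa using heq.add_sum_sub_div_le hm hpos hσ univ fun k _ => hy_mono (Nat.zero_le k)
  · exact heq.rpow_le_of_forall_le hm hσ (hpos _) fun k => hy_mono (Nat.le_sub_one_of_lt k.isLt)

/-- Structure of the Nash equilibrium under ordered convictions `θ_1 ≤ … ≤ θ_N`:
`θ_1 ≤ y_1^p ≤ … ≤ y_N^p ≤ θ_N`, the lower bound `y_i^p ≥ θ_i + (m_{≥i} - M)/σ` holds for
all `i`, and `θ_i = θ_j ↔ y_i = y_j` for `i ≠ j`. -/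
theorem nash_equilibrium_monotone_structure
    {N : ℕ} (hN : 0 < N)
    (m θ : Fin N → ℝ) (hm : ∀ i, 0 < m i) (hθ : ∀ i, 0 < θ i)
    (hmono : Monotone θ)
    {σ p : ℝ} (hσ : 0 < σ) (hp : 0 < p)
    (y : Fin N → ℝ) (hpos : ∀ i, 0 < y i)
    (heq : ∀ i, ∑ k, m k * (y k - y i) + σ * (θ i - y i ^ p) * y i = 0) :
    θ ⟨0, hN⟩ ≤ y ⟨0, hN⟩ ^ p ∧
    (∀ i j : Fin N, i ≤ j → y i ^ p ≤ y j ^ p) ∧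
    y ⟨N - 1, Nat.sub_lt hN Nat.one_pos⟩ ^ p ≤ θ ⟨N - 1, Nat.sub_lt hN Nat.one_pos⟩ ∧
    (∀ i, θ i + ((∑ k ∈ Finset.univ.filter (fun k => i ≤ k), m k) - ∑ k, m k) / σ
      ≤ y i ^ p) ∧
    (∀ i j : Fin N, i ≠ j → (θ i = θ j ↔ y i = y j)) :=
  nash_equilibrium_monotone_structure_general hN m θ hm hmono hσ hp y hpos heq
end

section
/- Let y be a Nash equilibrium and set d_i = M + σ(p+1) y_i^p − σ θ_i for i = 1,…,N. Then d_i > 0 for every i, Σ_{k=1}^N m_k/d_k < 1, and the Jacobian of the map F(y)_i = M y_i − Σ_{k=1}^N m_k y_k − σ(θ_i − y_i^p) y_i at y, namely the N×N matrix diag(d_1,…,d_N) − J_m where every row of J_m equals (m_1,…,m_N), has determinant Π_{i=1}^N d_i · (1 − Σ_{k=1}^N m_k/d_k), which is strictly positive. -/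
open Filter Topology Finset Real Matrix

/-! At an equilibrium, dividing the `i`-th equation by `y i` shows
`d i = σ p y_i^p + S / y_i` with `S = Σ_k m_k y_k`, so `d i > S / y_i > 0`. Hence
`Σ_k m_k / d_k < Σ_k m_k y_k / S = 1`, and the matrix determinant lemma applied to the
rank-one perturbation `diag d - 𝟙 mᵀ` gives the determinant formula. -/

theorem det_diagonal_sub_replicateRow {ι K : Type*} [Fintype ι] [DecidableEq ι] [Field K]
    (d m : ι → K) (hd : ∀ i, d i ≠ 0) :
    (diagonal d - of fun _ j => m j).det = (∏ i, d i) * (1 - ∑ k, m k / d k) := by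
  have hfactor : diagonal d - of (fun _ j => m j)
      = diagonal d * (1 + replicateCol Unit (fun i => -(d i)⁻¹) * replicateRow Unit m) := by
    ext i j
    rw [← vecMulVec_eq, diagonal_mul]
    by_cases hij : i = j <;> simp [hij, one_apply, vecMulVec_apply, mul_add, hd, sub_eq_add_neg]
  rw [hfactor, det_mul, det_diagonal, det_one_add_replicateCol_mul_replicateRow]
  simp [dotProduct, div_eq_mul_inv, sub_eq_add_neg]

theorem sum_div_lt_one_of_div_lt {ι : Type*} [Fintype ι] (m y d : ι → ℝ) (hm : ∀ k, 0 < m k)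
    (hy : ∀ k, 0 < y k) (hd : ∀ k, (∑ j, m j * y j) / y k < d k) :
    ∑ k, m k / d k < 1 := by
  rcases isEmpty_or_nonempty ι with hι | hι
  · simp
  have hS : 0 < ∑ j, m j * y j := sum_pos (fun k _ => mul_pos (hm k) (hy k)) univ_nonempty
  calc ∑ k, m k / d k < ∑ k, m k / ((∑ j, m j * y j) / y k) :=
        sum_lt_sum_of_nonempty univ_nonempty fun k _ =>
          div_lt_div_of_pos_left (hm k) (div_pos hS (hy k)) (hd k)
    _ = 1 := by simp_rw [div_div_eq_mul_div, ← sum_div, div_self hS.ne']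

theorem diag_entry_eq_of_equilibrium {ι : Type*} [Fintype ι] (m θ y : ι → ℝ) {σ p : ℝ} {i : ι}
    (hy : y i ≠ 0) (heq : ∑ k, m k * (y k - y i) + σ * (θ i - y i ^ p) * y i = 0) :
    (∑ k, m k) + σ * (p + 1) * y i ^ p - σ * θ i
      = σ * p * y i ^ p + (∑ k, m k * y k) / y i := by
  simp only [mul_sub, sum_sub_distrib, ← sum_mul] at heq
  field_simp
  linear_combination -heq

theorem nash_equilibrium_jacobian_positive_general
    {N : ℕ}
    (m θ : Fin N → ℝ) (hm : ∀ i, 0 < m i)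
    {σ p : ℝ} (hσ : 0 < σ) (hp : 0 < p)
    (y : Fin N → ℝ) (hpos : ∀ i, 0 < y i)
    (heq : ∀ i, ∑ k, m k * (y k - y i) + σ * (θ i - y i ^ p) * y i = 0)
    (d : Fin N → ℝ)
    (hd : ∀ i, d i = (∑ k, m k) + σ * (p + 1) * y i ^ p - σ * θ i) :
    (∀ i, 0 < d i) ∧
    (∑ k, m k / d k) < 1 ∧
    (Matrix.diagonal d - Matrix.of fun _ j : Fin N => m j).det
      = (∏ i, d i) * (1 - ∑ k, m k / d k) ∧
    0 < (Matrix.diagonal d - Matrix.of fun _ j : Fin N => m j).det := by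
  have hd_gt : ∀ i, (∑ k, m k * y k) / y i < d i := fun i => by
    rw [hd i, diag_entry_eq_of_equilibrium m θ y (hpos i).ne' (heq i)]
    have := mul_pos (mul_pos hσ hp) (rpow_pos_of_pos (hpos i) p)
    linarith
  have hS : 0 ≤ ∑ k, m k * y k := sum_nonneg fun k _ => (mul_pos (hm k) (hpos k)).le
  have hd_pos : ∀ i, 0 < d i := fun i => (div_nonneg hS (hpos i).le).trans_lt (hd_gt i)
  have hsum := sum_div_lt_one_of_div_lt m y d hm hpos hd_gt
  have hdet := det_diagonal_sub_replicateRow d m fun i => (hd_pos i).ne'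
  exact ⟨hd_pos, hsum, hdet, hdet ▸ mul_pos (prod_pos fun i _ => hd_pos i) (sub_pos.2 hsum)⟩

/-- Non-degeneracy of the Jacobian at a Nash equilibrium: with
`d_i = M + σ(p+1) y_i^p - σ θ_i`, all `d_i > 0`, `Σ_k m_k/d_k < 1`, and the Jacobian
matrix `diag(d) - J_m` (each row of `J_m` is `(m_1,…,m_N)`) has determinant
`(Π_i d_i)(1 - Σ_k m_k/d_k) > 0`. -/
theorem nash_equilibrium_jacobian_positive
    {N : ℕ} (hN : 0 < N)
    (m θ : Fin N → ℝ) (hm : ∀ i, 0 < m i) (hθ : ∀ i, 0 < θ i)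
    {σ p : ℝ} (hσ : 0 < σ) (hp : 0 < p)
    (y : Fin N → ℝ) (hpos : ∀ i, 0 < y i)
    (heq : ∀ i, ∑ k, m k * (y k - y i) + σ * (θ i - y i ^ p) * y i = 0)
    (d : Fin N → ℝ)
    (hd : ∀ i, d i = (∑ k, m k) + σ * (p + 1) * y i ^ p - σ * θ i) :
    (∀ i, 0 < d i) ∧
    (∑ k, m k / d k) < 1 ∧
    (Matrix.diagonal d - Matrix.of fun _ j : Fin N => m j).det
      = (∏ i, d i) * (1 - ∑ k, m k / d k) ∧
    0 < (Matrix.diagonal d - Matrix.of fun _ j : Fin N => m j).det :=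
  nash_equilibrium_jacobian_positive_general m θ hm hσ hp y hpos heq d hd
end

section
/- Assume the convictions are ordered, θ_1 ≤ θ_2 ≤ … ≤ θ_N, let y be a Nash equilibrium and set ȳ = (1/M) Σ_{k=1}^N m_k y_k. Then there exists an index 1 ≤ i₀ ≤ N such that θ_i ≤ y_i^p and y_i ≤ ȳ for all i ≤ i₀, while y_i^p ≤ θ_i and ȳ ≤ y_i for all i > i₀. In other words, for each i one has y_i ≤ ȳ if and only if θ_i ≤ y_i^p, and ȳ ≤ y_i if and only if y_i^p ≤ θ_i. -/
open Finset Real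

/-! Since `∑ k, m k * (y k - y i) = M * (ȳ - y i)`, the equilibrium equation reads
`M * (ȳ - y i) = σ * y i * (y i ^ p - θ i)`, so `ȳ - y i` and `y i ^ p - θ i` have the same sign.
The indices with `θ i ≤ y i ^ p` form a down-set: for `j ≤ i` with `y i ≤ ȳ < y j` we get
`θ j ≤ θ i ≤ y i ^ p ≤ y j ^ p`. It is nonempty since some `y i` lies below the weighted mean `ȳ`,
so it is an initial segment `{i | i ≤ i₀}` of `Fin N`. -/

section WeightedMean

variable {ι : Type*} [Fintype ι] (m y : ι → ℝ)

lemma sum_mul_sub_eq_sum_mul_div_sub {c : ℝ} (hM : ∑ k, m k ≠ 0) :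
    ∑ k, m k * (y k - c) = (∑ k, m k) * ((∑ k, m k * y k) / (∑ k, m k) - c) := by
  rw [mul_sub, mul_div_cancel₀ _ hM, sum_mul, ← sum_sub_distrib]
  exact sum_congr rfl fun k _ => mul_sub _ _ _

lemma exists_le_sum_mul_div [Nonempty ι] (hm : ∀ i, 0 < m i) :
    ∃ i, y i ≤ (∑ k, m k * y k) / (∑ k, m k) := by
  have hM : 0 < ∑ k, m k := sum_pos (fun i _ => hm i) univ_nonempty
  have hsum : ∑ k, m k * y k ≤ ∑ k, m k * ((∑ k, m k * y k) / (∑ k, m k)) := by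
    rw [← sum_mul, mul_div_cancel₀ _ hM.ne']
  obtain ⟨i, -, hi⟩ := exists_le_of_sum_le univ_nonempty hsum
  exact ⟨i, le_of_mul_le_mul_left hi (hm i)⟩

end WeightedMean

lemma le_iff_le_of_mul_sub_eq_mul_sub {a b u v s t : ℝ} (ha : 0 < a) (hb : 0 < b)
    (h : a * (u - v) = b * (s - t)) : v ≤ u ↔ t ≤ s := by
  rw [← sub_nonneg, ← mul_nonneg_iff_of_pos_left ha, h, mul_nonneg_iff_of_pos_left hb,
    sub_nonneg]

lemma isLowerSet_setOf_le_of_le_iff_le {ι α β : Type*} [Preorder ι] [LinearOrder α] [Preorder β]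
    {θ : ι → β} (hθ : Monotone θ) {f : α → β} {S : Set α} (hf : MonotoneOn f S)
    {y : ι → α} (hy : ∀ i, y i ∈ S) {c : α} (h : ∀ i, y i ≤ c ↔ θ i ≤ f (y i)) :
    IsLowerSet {i | θ i ≤ f (y i)} := by
  intro i j hji hi
  rcases le_or_gt (y j) c with hjc | hcj
  · exact (h j).1 hjc
  · have hyij : y i ≤ y j := ((h i).2 hi).trans hcj.le
    exact (hθ hji).trans (hi.trans (hf (hy i) (hy j) hyij))

lemma IsLowerSet.exists_forall_mem_iff_le {α : Type*} [LinearOrder α] [Finite α] {s : Set α}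
    (hs : IsLowerSet s) (hne : s.Nonempty) : ∃ a, ∀ i, i ∈ s ↔ i ≤ a := by
  obtain ⟨a, ha⟩ := s.toFinite.exists_maximal hne
  exact ⟨a, fun i => ⟨fun hi => not_lt.1 fun hai => (ha.not_gt hi hai), fun hia => hs hia ha.prop⟩⟩

theorem nash_equilibrium_shift_structure_general
    {N : ℕ} (hN : 0 < N)
    (m θ : Fin N → ℝ) (hm : ∀ i, 0 < m i)
    (hmono : Monotone θ)
    {σ p : ℝ} (hσ : 0 < σ) (hp : 0 < p)
    (y : Fin N → ℝ) (hpos : ∀ i, 0 < y i)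
    (heq : ∀ i, ∑ k, m k * (y k - y i) + σ * (θ i - y i ^ p) * y i = 0) :
    (∃ i₀ : Fin N,
      (∀ i ≤ i₀, θ i ≤ y i ^ p ∧ y i ≤ (∑ k, m k * y k) / (∑ k, m k)) ∧
      (∀ i, i₀ < i → y i ^ p ≤ θ i ∧ (∑ k, m k * y k) / (∑ k, m k) ≤ y i)) ∧
    (∀ i, (y i ≤ (∑ k, m k * y k) / (∑ k, m k) ↔ θ i ≤ y i ^ p) ∧
      ((∑ k, m k * y k) / (∑ k, m k) ≤ y i ↔ y i ^ p ≤ θ i)) := by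
  have : Nonempty (Fin N) := Fin.pos_iff_nonempty.mp hN
  have hM : 0 < ∑ k, m k := sum_pos (fun i _ => hm i) univ_nonempty
  set ybar := (∑ k, m k * y k) / (∑ k, m k)
  have hbalance (i : Fin N) : (∑ k, m k) * (ybar - y i) = σ * y i * (y i ^ p - θ i) := by
    linear_combination heq i - sum_mul_sub_eq_sum_mul_div_sub m y (c := y i) hM.ne'
  have hsign (i : Fin N) : (y i ≤ ybar ↔ θ i ≤ y i ^ p) ∧ (ybar ≤ y i ↔ y i ^ p ≤ θ i) :=
    ⟨le_iff_le_of_mul_sub_eq_mul_sub hM (mul_pos hσ (hpos i)) (hbalance i),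
      le_iff_le_of_mul_sub_eq_mul_sub hM (mul_pos hσ (hpos i)) (by linear_combination -hbalance i)⟩
  have hlower : IsLowerSet {i | θ i ≤ y i ^ p} :=
    isLowerSet_setOf_le_of_le_iff_le hmono (monotoneOn_rpow_Ici_of_exponent_nonneg hp.le)
      (fun i => (hpos i).le) fun i => (hsign i).1
  obtain ⟨j, hj⟩ := exists_le_sum_mul_div m y hm
  obtain ⟨i₀, hi₀⟩ := hlower.exists_forall_mem_iff_le ⟨j, (hsign j).1.1 hj⟩
  refine ⟨⟨i₀, fun i hi => ?_, fun i hi => ?_⟩, hsign⟩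
  · have hθi : θ i ≤ y i ^ p := (hi₀ i).2 hi
    exact ⟨hθi, (hsign i).1.2 hθi⟩
  · have hθi : y i ^ p ≤ θ i := (not_le.1 fun h => hi.not_ge ((hi₀ i).1 h)).le
    exact ⟨hθi, (hsign i).2.2 hθi⟩

/-- Shift structure of the Nash equilibrium relative to the average opinion
`ȳ = (1/M) Σ_k m_k y_k`: there is a threshold index `i₀` such that for `i ≤ i₀` one has
`θ_i ≤ y_i^p` and `y_i ≤ ȳ`, while for `i > i₀` one has `y_i^p ≤ θ_i` and `ȳ ≤ y_i`;
moreover for each `i`, `y_i ≤ ȳ ↔ θ_i ≤ y_i^p` and `ȳ ≤ y_i ↔ y_i^p ≤ θ_i`. -/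
theorem nash_equilibrium_shift_structure
    {N : ℕ} (hN : 0 < N)
    (m θ : Fin N → ℝ) (hm : ∀ i, 0 < m i) (hθ : ∀ i, 0 < θ i)
    (hmono : Monotone θ)
    {σ p : ℝ} (hσ : 0 < σ) (hp : 0 < p)
    (y : Fin N → ℝ) (hpos : ∀ i, 0 < y i)
    (heq : ∀ i, ∑ k, m k * (y k - y i) + σ * (θ i - y i ^ p) * y i = 0) :
    (∃ i₀ : Fin N,
      (∀ i ≤ i₀, θ i ≤ y i ^ p ∧ y i ≤ (∑ k, m k * y k) / (∑ k, m k)) ∧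
      (∀ i, i₀ < i → y i ^ p ≤ θ i ∧ (∑ k, m k * y k) / (∑ k, m k) ≤ y i)) ∧
    (∀ i, (y i ≤ (∑ k, m k * y k) / (∑ k, m k) ↔ θ i ≤ y i ^ p) ∧
      ((∑ k, m k * y k) / (∑ k, m k) ≤ y i ↔ y i ^ p ≤ θ i)) :=
  nash_equilibrium_shift_structure_general hN m θ hm hmono hσ hp y hpos heq
end

section
/- Let y(σ) ∈ ℝᴺ₊ denote, for each σ > 0, a Nash equilibrium for the parameters (θ, m, σ). Then for every i = 1,…,N: y_i(σ) → θ_i^(1/p) as σ → ∞, and y_i(σ) → θ̄^(1/p) as σ → 0⁺, where θ̄ = (1/M) Σ_{k=1}^N m_k θ_k. -/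
/-!
A maximum principle gives uniform bounds: at a smallest (largest) opinion the consensus term
`∑ m_k (y_k - y_i)` is nonnegative (nonpositive), which forces `θ_i ≤ y_i^p` (`y_i^p ≤ θ_i`) there,
so every `y_i^p` lies between `min θ` and `max θ`.

As `σ → ∞` the consensus term stays bounded, hence `θ_i - y_i^p = O(1/σ)`.

As `σ → 0⁺` the consensus terms are `O(σ)`, so the opinions merge: `ρ = max y / min y → 1`.
Summing the equilibrium equations with weights `m_i` cancels the consensus terms and leaves
`∑ m_k θ_k y_k = ∑ m_k y_k^{p+1}`, which pinches every `y_i^p` between `θ̄ / ρ^{p+1}` and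
`θ̄ ρ^{p+1}`.
-/

open Filter Topology Finset Real

lemma tendsto_of_abs_sub_le {α : Type*} {l : Filter α} {f g : α → ℝ} {c : ℝ}
    (hfg : ∀ᶠ x in l, |f x - c| ≤ g x) (hg : Tendsto g l (𝓝 0)) : Tendsto f l (𝓝 c) :=
  tendsto_sub_nhds_zero_iff.1 (squeeze_zero_norm' hfg hg)

lemma Filter.Tendsto.of_rpow {α : Type*} {l : Filter α} {f : α → ℝ} {p L : ℝ} (hp : 0 < p)
    (hf : ∀ᶠ x in l, 0 ≤ f x) (h : Tendsto (fun x => f x ^ p) l (𝓝 L)) :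
    Tendsto f l (𝓝 (L ^ (1 / p))) :=
  (h.rpow_const (Or.inr (by positivity))).congr' <| hf.mono fun x hx => by
    rw [← rpow_mul hx, mul_one_div_cancel hp.ne', rpow_one]

lemma mem_Icc_rpow_one_div {p c C x : ℝ} (hp : 0 < p) (hc : 0 ≤ c) (hx : 0 ≤ x)
    (h : x ^ p ∈ Set.Icc c C) : x ∈ Set.Icc (c ^ (1 / p)) (C ^ (1 / p)) := by
  rw [one_div]
  exact ⟨(rpow_inv_le_iff_of_pos hc hx hp).2 h.1,
    (le_rpow_inv_iff_of_pos hx (hc.trans h.1 |>.trans h.2) hp).2 h.2⟩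

lemma exists_pos_forall_mem_Icc {ι : Type*} [Finite ι] [Nonempty ι] {θ : ι → ℝ}
    (hθ : ∀ k, 0 < θ k) : ∃ c C, 0 < c ∧ ∀ k, θ k ∈ Set.Icc c C := by
  obtain ⟨l, hl⟩ := Finite.exists_min θ
  obtain ⟨u, hu⟩ := Finite.exists_max θ
  exact ⟨θ l, θ u, hθ l, fun k => ⟨hl k, hu k⟩⟩

lemma rpow_mem_Icc_of_mul_le_mul {p T M U V x : ℝ} (hM : 0 < M) (hU : 0 < U) (hUx : U ≤ x)
    (hxV : x ≤ V) (hp : 0 ≤ p) (hlo : T * U ≤ M * (V ^ p * V)) (hhi : M * (U ^ p * U) ≤ T * V) :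
    x ^ p ∈ Set.Icc (T / M / (V / U) ^ (p + 1)) (T / M * (V / U) ^ (p + 1)) := by
  have hV : 0 < V := hU.trans_le (hUx.trans hxV)
  have hratio : (V / U) ^ (p + 1) = V ^ p * V / (U ^ p * U) := by
    rw [div_rpow hV.le hU.le, rpow_add_one hV.ne', rpow_add_one hU.ne']
  have hUp : 0 < U ^ p := rpow_pos_of_pos hU p
  have hVp : 0 < V ^ p := rpow_pos_of_pos hV p
  rw [hratio]
  constructor
  · calc T / M / (V ^ p * V / (U ^ p * U)) = T * U / M * U ^ p / (V ^ p * V) := by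
          field_simp
      _ ≤ U ^ p := by
          rw [div_le_iff₀ (by positivity), div_mul_eq_mul_div, div_le_iff₀ hM]
          nlinarith
      _ ≤ x ^ p := rpow_le_rpow hU.le hUx hp
  · calc x ^ p ≤ V ^ p := rpow_le_rpow (hU.le.trans hUx) hxV hp
      _ ≤ T * V / M * V ^ p / (U ^ p * U) := by
          rw [le_div_iff₀ (by positivity), div_mul_eq_mul_div, le_div_iff₀ hM]
          nlinarith
      _ = T / M * (V ^ p * V / (U ^ p * U)) := by ring

lemma abs_sum_mul_sub_le {ι : Type*} [Fintype ι] {m y : ι → ℝ} {a b : ℝ} (hm : ∀ k, 0 ≤ m k)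
    (hy : ∀ k, y k ∈ Set.Icc a b) (j : ι) : |∑ k, m k * (y k - y j)| ≤ (∑ k, m k) * (b - a) := by
  rw [sum_mul]
  refine (abs_sum_le_sum_abs _ _).trans (sum_le_sum fun k _ => ?_)
  rw [abs_mul, abs_of_nonneg (hm k)]
  exact mul_le_mul_of_nonneg_left
    (abs_sub_le_of_le_of_le (hy k).1 (hy k).2 (hy j).1 (hy j).2) (hm k)

lemma sup'_sub_inf'_le_of_abs_sum_le {ι : Type*} [Fintype ι] [Nonempty ι] {m y : ι → ℝ}
    {K : ℝ} (hM : 0 < ∑ k, m k) (hK : ∀ j, |∑ k, m k * (y k - y j)| ≤ K) :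
    univ.sup' univ_nonempty y - univ.inf' univ_nonempty y ≤ 2 * K / ∑ k, m k := by
  obtain ⟨u, -, hu⟩ := exists_mem_eq_sup' univ_nonempty y
  obtain ⟨l, -, hl⟩ := exists_mem_eq_inf' univ_nonempty y
  have hdiff : ∑ k, m k * (y k - y l) - ∑ k, m k * (y k - y u) = (∑ k, m k) * (y u - y l) := by
    rw [← sum_sub_distrib, sum_mul]
    exact sum_congr rfl fun k _ => by ring
  rw [hu, hl, le_div_iff₀ hM, mul_comm]
  linarith [abs_le.1 (hK l), abs_le.1 (hK u)]

noncomputable def maxDivMin {ι : Type*} [Fintype ι] [Nonempty ι] (y : ι → ℝ) : ℝ :=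
  univ.sup' univ_nonempty y / univ.inf' univ_nonempty y

lemma abs_maxDivMin_sub_one_le {ι : Type*} [Fintype ι] [Nonempty ι] {m y : ι → ℝ} {a K : ℝ}
    (hM : 0 < ∑ k, m k) (ha : 0 < a) (hay : ∀ k, a ≤ y k)
    (hK : ∀ j, |∑ k, m k * (y k - y j)| ≤ K) :
    |maxDivMin y - 1| ≤ 2 * K / (∑ k, m k) / a := by
  obtain ⟨j⟩ := ‹Nonempty ι›
  have hK0 : 0 ≤ K := (abs_nonneg _).trans (hK j)
  have haU : a ≤ univ.inf' univ_nonempty y := le_inf' _ _ fun k _ => hay k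
  have hUV : univ.inf' univ_nonempty y ≤ univ.sup' univ_nonempty y :=
    (inf'_le _ (mem_univ j)).trans (le_sup' _ (mem_univ j))
  rw [maxDivMin, div_sub_one (ha.trans_le haU).ne',
    abs_of_nonneg (div_nonneg (sub_nonneg.2 hUV) (ha.trans_le haU).le)]
  exact div_le_div₀ (by positivity) (sup'_sub_inf'_le_of_abs_sum_le hM hK) ha haU

def IsNashEquilibrium {ι : Type*} [Fintype ι] (m θ : ι → ℝ) (p s : ℝ) (y : ι → ℝ) : Prop :=
  (∀ i, 0 < y i) ∧ ∀ i, ∑ k, m k * (y k - y i) + s * (θ i - y i ^ p) * y i = 0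

namespace IsNashEquilibrium

variable {ι : Type*} [Fintype ι] {m θ y : ι → ℝ} {p s : ℝ}

lemma friction_eq (h : IsNashEquilibrium m θ p s y) (i : ι) :
    s * (θ i - y i ^ p) * y i = -∑ k, m k * (y k - y i) :=
  eq_neg_of_add_eq_zero_right (h.2 i)

lemma le_rpow_of_forall_le (h : IsNashEquilibrium m θ p s y) (hm : ∀ k, 0 ≤ m k) (hs : 0 < s)
    {l : ι} (hl : ∀ k, y l ≤ y k) : θ l ≤ y l ^ p := by
  have hsum : 0 ≤ ∑ k, m k * (y k - y l) :=
    sum_nonneg fun k _ => mul_nonneg (hm k) (sub_nonneg.2 (hl k))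
  by_contra! hlt
  have := mul_pos (mul_pos hs (sub_pos.2 hlt)) (h.1 l)
  linarith [h.friction_eq l]

lemma rpow_le_of_forall_ge (h : IsNashEquilibrium m θ p s y) (hm : ∀ k, 0 ≤ m k) (hs : 0 < s)
    {u : ι} (hu : ∀ k, y k ≤ y u) : y u ^ p ≤ θ u := by
  have hsum : ∑ k, m k * (y k - y u) ≤ 0 :=
    sum_nonpos fun k _ => mul_nonpos_of_nonneg_of_nonpos (hm k) (sub_nonpos.2 (hu k))
  by_contra! hlt
  have := mul_neg_of_neg_of_pos (mul_neg_of_pos_of_neg hs (sub_neg.2 hlt)) (h.1 u)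
  linarith [h.friction_eq u]

lemma rpow_mem_Icc (h : IsNashEquilibrium m θ p s y) (hm : ∀ k, 0 ≤ m k) (hs : 0 < s)
    (hp : 0 ≤ p) {c C : ℝ} (hθ : ∀ k, θ k ∈ Set.Icc c C) (j : ι) : y j ^ p ∈ Set.Icc c C := by
  have : Nonempty ι := ⟨j⟩
  obtain ⟨l, hl⟩ := Finite.exists_min y
  obtain ⟨u, hu⟩ := Finite.exists_max y
  exact ⟨(hθ l).1.trans <| (h.le_rpow_of_forall_le hm hs hl).trans <|
      rpow_le_rpow (h.1 l).le (hl j) hp,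
    (rpow_le_rpow (h.1 j).le (hu j) hp).trans <| (h.rpow_le_of_forall_ge hm hs hu).trans (hθ u).2⟩

lemma mem_Icc (h : IsNashEquilibrium m θ p s y) (hm : ∀ k, 0 ≤ m k) (hs : 0 < s) (hp : 0 < p)
    {c C : ℝ} (hc : 0 ≤ c) (hθ : ∀ k, θ k ∈ Set.Icc c C) (j : ι) :
    y j ∈ Set.Icc (c ^ (1 / p)) (C ^ (1 / p)) :=
  mem_Icc_rpow_one_div hp hc (h.1 j).le (h.rpow_mem_Icc hm hs hp.le hθ j)

lemma sum_mul_mul_eq (h : IsNashEquilibrium m θ p s y) (hs : s ≠ 0) :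
    ∑ k, m k * (θ k * y k) = ∑ k, m k * (y k ^ p * y k) := by
  -- the weighted consensus terms cancel by antisymmetry in `(i, k)`
  have hcancel : ∑ i, m i * ∑ k, m k * (y k - y i) = 0 := by
    simp only [mul_sub, sum_sub_distrib, mul_sum]
    rw [sum_comm]
    simp only [mul_left_comm, sub_self]
  have hzero : s * ∑ k, m k * ((θ k - y k ^ p) * y k) = 0 := by
    calc s * ∑ k, m k * ((θ k - y k ^ p) * y k)
        = ∑ k, m k * (s * (θ k - y k ^ p) * y k) := by
          rw [mul_sum]; exact sum_congr rfl fun k _ => by ring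
      _ = 0 := by simp only [h.friction_eq, mul_neg, sum_neg_distrib, hcancel, neg_zero]
  rw [← sub_eq_zero, ← sum_sub_distrib]
  simpa only [mul_sub, sub_mul] using (mul_eq_zero.1 hzero).resolve_left hs

lemma weighted_bounds (h : IsNashEquilibrium m θ p s y) (hs : s ≠ 0) (hm : ∀ k, 0 ≤ m k)
    (hθ : ∀ k, 0 ≤ θ k) (hp : 0 ≤ p) {U V : ℝ} (hU : 0 ≤ U) (hUy : ∀ k, U ≤ y k)
    (hyV : ∀ k, y k ≤ V) :
    (∑ k, m k * θ k) * U ≤ (∑ k, m k) * (V ^ p * V) ∧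
      (∑ k, m k) * (U ^ p * U) ≤ (∑ k, m k * θ k) * V := by
  have hid := h.sum_mul_mul_eq hs
  simp only [sum_mul, mul_assoc]
  constructor
  · calc ∑ k, m k * (θ k * U) ≤ ∑ k, m k * (θ k * y k) :=
          sum_le_sum fun k _ => by gcongr; exacts [hm k, hθ k, hUy k]
      _ = ∑ k, m k * (y k ^ p * y k) := hid
      _ ≤ ∑ k, m k * (V ^ p * V) :=
          sum_le_sum fun k _ => by
            have := (h.1 k).le
            have := (h.1 k).le.trans (hyV k)
            gcongr; exacts [hm k, hyV k, hyV k]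
  · calc ∑ k, m k * (U ^ p * U) ≤ ∑ k, m k * (y k ^ p * y k) :=
          sum_le_sum fun k _ => by
            have := hU.trans (hUy k)
            gcongr; exacts [hm k, hUy k, hUy k]
      _ = ∑ k, m k * (θ k * y k) := hid.symm
      _ ≤ ∑ k, m k * (θ k * V) :=
          sum_le_sum fun k _ => by gcongr; exacts [hm k, hθ k, hyV k]

lemma abs_rpow_sub_le (h : IsNashEquilibrium m θ p s y) (hm : ∀ k, 0 ≤ m k) (hs : 0 < s)
    {a b : ℝ} (ha : 0 < a) (hy : ∀ k, y k ∈ Set.Icc a b) (i : ι) :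
    |y i ^ p - θ i| ≤ (∑ k, m k) * (b - a) / a / s := by
  rw [div_div, le_div_iff₀ (by positivity), abs_sub_comm]
  calc |θ i - y i ^ p| * (a * s) ≤ |θ i - y i ^ p| * (y i * s) := by gcongr; exact (hy i).1
    _ = |s * (θ i - y i ^ p) * y i| := by
        rw [abs_mul, abs_mul, abs_of_pos hs, abs_of_pos (h.1 i)]
        ring
    _ = |∑ k, m k * (y k - y i)| := by rw [h.friction_eq, abs_neg]
    _ ≤ (∑ k, m k) * (b - a) := abs_sum_mul_sub_le hm hy i

lemma abs_sum_le (h : IsNashEquilibrium m θ p s y) (hs : 0 ≤ s) {c C b : ℝ}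
    (hθ : ∀ k, θ k ∈ Set.Icc c C) (hyp : ∀ k, y k ^ p ∈ Set.Icc c C) (hyb : ∀ k, y k ≤ b) (j : ι) :
    |∑ k, m k * (y k - y j)| ≤ s * ((C - c) * b) := by
  have hθy : |θ j - y j ^ p| ≤ C - c :=
    abs_sub_le_of_le_of_le (hθ j).1 (hθ j).2 (hyp j).1 (hyp j).2
  rw [← abs_neg, ← h.friction_eq, abs_mul, abs_mul, abs_of_nonneg hs, abs_of_pos (h.1 j), mul_assoc]
  exact mul_le_mul_of_nonneg_left
    (mul_le_mul hθy (hyb j) (h.1 j).le ((abs_nonneg _).trans hθy)) hs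

lemma rpow_mem_Icc_maxDivMin [Nonempty ι] (h : IsNashEquilibrium m θ p s y) (hs : s ≠ 0)
    (hm : ∀ k, 0 ≤ m k) (hθ : ∀ k, 0 ≤ θ k) (hp : 0 ≤ p) (hM : 0 < ∑ k, m k) (i : ι) :
    y i ^ p ∈ Set.Icc ((∑ k, m k * θ k) / (∑ k, m k) / maxDivMin y ^ (p + 1))
      ((∑ k, m k * θ k) / (∑ k, m k) * maxDivMin y ^ (p + 1)) := by
  have hU : 0 < univ.inf' univ_nonempty y := (lt_inf'_iff _).2 fun k _ => h.1 k
  have hUy k : univ.inf' univ_nonempty y ≤ y k := inf'_le _ (mem_univ k)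
  have hyV k : y k ≤ univ.sup' univ_nonempty y := le_sup' _ (mem_univ k)
  obtain ⟨hlo, hhi⟩ := h.weighted_bounds hs hm hθ hp hU.le hUy hyV
  exact rpow_mem_Icc_of_mul_le_mul hM hU (hUy i) (hyV i) hp hlo hhi

end IsNashEquilibrium

theorem tendsto_atTop_of_isNashEquilibrium {ι : Type*} [Fintype ι] {m θ : ι → ℝ} {p : ℝ}
    (hm : ∀ k, 0 < m k) (hθ : ∀ k, 0 < θ k) (hp : 0 < p) {y : ℝ → ι → ℝ}
    (hy : ∀ᶠ s in atTop, IsNashEquilibrium m θ p s (y s)) (i : ι) :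
    Tendsto (fun s => y s i) atTop (𝓝 (θ i ^ (1 / p))) := by
  have : Nonempty ι := ⟨i⟩
  obtain ⟨c, C, hc, hθc⟩ := exists_pos_forall_mem_Icc hθ
  have hm' k := (hm k).le
  refine Tendsto.of_rpow hp (hy.mono fun s hs => (hs.1 i).le) <| tendsto_of_abs_sub_le
    (g := fun s => (∑ k, m k) * (C ^ (1 / p) - c ^ (1 / p)) / c ^ (1 / p) / s) ?_ <|
    tendsto_const_nhds.div_atTop tendsto_id
  filter_upwards [hy, eventually_gt_atTop 0] with s hs hs0
  exact hs.abs_rpow_sub_le hm' hs0 (by positivity) (hs.mem_Icc hm' hs0 hp hc.le hθc) i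

theorem tendsto_nhdsGT_zero_of_isNashEquilibrium {ι : Type*} [Fintype ι] {m θ : ι → ℝ} {p : ℝ}
    (hm : ∀ k, 0 < m k) (hθ : ∀ k, 0 < θ k) (hp : 0 < p) {y : ℝ → ι → ℝ}
    (hy : ∀ᶠ s in 𝓝[>] 0, IsNashEquilibrium m θ p s (y s)) (i : ι) :
    Tendsto (fun s => y s i) (𝓝[>] 0) (𝓝 (((∑ k, m k * θ k) / ∑ k, m k) ^ (1 / p))) := by
  have : Nonempty ι := ⟨i⟩
  obtain ⟨c, C, hc, hθc⟩ := exists_pos_forall_mem_Icc hθ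
  have hm' k := (hm k).le
  have hM : 0 < ∑ k, m k := sum_pos (fun k _ => hm k) univ_nonempty
  have hy' : ∀ᶠ s in 𝓝[>] 0, 0 < s ∧ IsNashEquilibrium m θ p s (y s) :=
    eventually_mem_nhdsWithin.and hy
  have hratio : Tendsto (fun s => maxDivMin (y s)) (𝓝[>] 0) (𝓝 1) := by
    refine tendsto_of_abs_sub_le
      (g := fun s => 2 * (s * ((C - c) * C ^ (1 / p))) / (∑ k, m k) / c ^ (1 / p)) ?_ ?_
    · filter_upwards [hy'] with s ⟨hs0, hs⟩
      have hyab := hs.mem_Icc hm' hs0 hp hc.le hθc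
      exact abs_maxDivMin_sub_one_le hM (by positivity) (fun k => (hyab k).1)
        (hs.abs_sum_le hs0.le hθc (hs.rpow_mem_Icc hm' hs0 hp.le hθc) fun k => (hyab k).2)
    · exact tendsto_nhdsWithin_of_tendsto_nhds (Continuous.tendsto' (by fun_prop) 0 0 (by simp))
  have hpow : Tendsto (fun s => maxDivMin (y s) ^ (p + 1)) (𝓝[>] 0) (𝓝 1) := by
    simpa using hratio.rpow_const (Or.inl one_ne_zero)
  have hpinch := hy'.mono fun s ⟨hs0, hs⟩ =>
    hs.rpow_mem_Icc_maxDivMin hs0.ne' hm' (fun k => (hθ k).le) hp.le hM i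
  exact Tendsto.of_rpow hp (hy.mono fun s hs => (hs.1 i).le) <|
    tendsto_of_tendsto_of_tendsto_of_le_of_le'
      (by simpa [div_eq_mul_inv] using tendsto_const_nhds.mul (hpow.inv₀ one_ne_zero))
      (by simpa using tendsto_const_nhds.mul hpow) (hpinch.mono fun _ h => h.1)
      (hpinch.mono fun _ h => h.2)

theorem nash_equilibrium_friction_asymptotics_general
    {N : ℕ}
    (m θ : Fin N → ℝ) (hm : ∀ i, 0 < m i) (hθ : ∀ i, 0 < θ i)
    {p : ℝ} (hp : 0 < p)
    (y : ℝ → Fin N → ℝ)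
    (hy : ∀ s : ℝ, 0 < s → (∀ i, 0 < y s i) ∧
      (∀ i, ∑ k, m k * (y s k - y s i) + s * (θ i - y s i ^ p) * y s i = 0)) :
    ∀ i, Tendsto (fun s => y s i) atTop (𝓝 (θ i ^ (1 / p))) ∧
      Tendsto (fun s => y s i) (𝓝[>] 0)
        (𝓝 (((∑ k, m k * θ k) / (∑ k, m k)) ^ (1 / p))) := fun i =>
  ⟨tendsto_atTop_of_isNashEquilibrium hm hθ hp ((eventually_gt_atTop 0).mono hy) i,
    tendsto_nhdsGT_zero_of_isNashEquilibrium hm hθ hp (eventually_mem_nhdsWithin.mono hy) i⟩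

/-- Asymptotics of the Nash equilibrium in the friction strength: if `y(σ)` is a Nash
equilibrium for the parameters `(θ, m, σ)` for each `σ > 0`, then `y_i(σ) → θ_i^(1/p)` as
`σ → ∞` and `y_i(σ) → θ̄^(1/p)` as `σ → 0⁺`, where `θ̄ = (1/M) Σ_k m_k θ_k`. -/
theorem nash_equilibrium_friction_asymptotics
    {N : ℕ} (hN : 0 < N)
    (m θ : Fin N → ℝ) (hm : ∀ i, 0 < m i) (hθ : ∀ i, 0 < θ i)
    {p : ℝ} (hp : 0 < p)
    (y : ℝ → Fin N → ℝ)
    (hy : ∀ s : ℝ, 0 < s → (∀ i, 0 < y s i) ∧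
      (∀ i, ∑ k, m k * (y s k - y s i) + s * (θ i - y s i ^ p) * y s i = 0)) :
    ∀ i, Tendsto (fun s => y s i) atTop (𝓝 (θ i ^ (1 / p))) ∧
      Tendsto (fun s => y s i) (𝓝[>] 0)
        (𝓝 (((∑ k, m k * θ k) / (∑ k, m k)) ^ (1 / p))) :=
  nash_equilibrium_friction_asymptotics_general m θ hm hθ hp y hy
end
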